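/- arXiv:2312.01223 — 6 statements merged into one kernel-verified Lean document; each statement's English description precedes it below -/
import Mathlib

section
/- For every ℓ ≥ 3, any (3, ℓ)-cup-cap-saturated planar point set has exactly ℓ-1 points; i.e., sat_c(3, ℓ) = ℓ - 1 = ram_c(3, ℓ). -/
/-- The slope of the line through two planar points. -/
noncomputable def ptSlope (p q : ℝ × ℝ) : ℝ := (q.2 - p.2) / (q.1 - p.1)

/-- `f` lists the points of a cup: `x`-coordinates strictly increasing and slopes increasing. -/
def IsCupSeq {m : ℕ} (f : Fin m → ℝ × ℝ) : Prop :=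
  StrictMono (fun i => (f i).1) ∧
  ∀ i j k : Fin m, i < j → j < k → ptSlope (f i) (f j) < ptSlope (f j) (f k)

/-- `f` lists the points of a cap: `x`-coordinates strictly increasing and slopes decreasing. -/
def IsCapSeq {m : ℕ} (f : Fin m → ℝ × ℝ) : Prop :=
  StrictMono (fun i => (f i).1) ∧
  ∀ i j k : Fin m, i < j → j < k → ptSlope (f j) (f k) < ptSlope (f i) (f j)

/-- `P` contains a `k`-cup. -/
def HasCup (P : Finset (ℝ × ℝ)) (k : ℕ) : Prop :=
  ∃ f : Fin k → ℝ × ℝ, (∀ i, f i ∈ P) ∧ IsCupSeq f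

/-- `P` contains an `l`-cap. -/
def HasCap (P : Finset (ℝ × ℝ)) (l : ℕ) : Prop :=
  ∃ f : Fin l → ℝ × ℝ, (∀ i, f i ∈ P) ∧ IsCapSeq f

/-- `P` is in general position: no three distinct points are collinear. -/
def GenPos (P : Finset (ℝ × ℝ)) : Prop :=
  ∀ p ∈ P, ∀ q ∈ P, ∀ r ∈ P, p ≠ q → p ≠ r → q ≠ r →
    ¬ Collinear ℝ ({p, q, r} : Set (ℝ × ℝ))

/-- `P` is generic: in general position and all `x`-coordinates are distinct. -/
def Generic (P : Finset (ℝ × ℝ)) : Prop :=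
  GenPos P ∧ Set.InjOn (fun p : ℝ × ℝ => p.1) ↑P

/-- `P` contains no `k`-cup and no `l`-cap. -/
def CupCapFree (P : Finset (ℝ × ℝ)) (k l : ℕ) : Prop := ¬ HasCup P k ∧ ¬ HasCap P l

/-- `P` is `(k,l)`-cup-cap-saturated. -/
def CupCapSat (P : Finset (ℝ × ℝ)) (k l : ℕ) : Prop :=
  Generic P ∧ CupCapFree P k l ∧
  ∀ q : ℝ × ℝ, q ∉ P → Generic (insert q P) →
    HasCup (insert q P) k ∨ HasCap (insert q P) l

lemma det_of_collinear (a b c : ℝ × ℝ) (h : Collinear ℝ ({a, b, c} : Set (ℝ × ℝ))) :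
    (b.2 - a.2) * (c.1 - a.1) = (c.2 - a.2) * (b.1 - a.1) := by
  rw [collinear_iff_of_mem (Set.mem_insert a _)] at h
  obtain ⟨v, hv⟩ := h
  obtain ⟨r, hr⟩ := hv b (by simp)
  obtain ⟨s, hs⟩ := hv c (by simp)
  have hb1 : b.1 = r * v.1 + a.1 := by rw [hr]; rfl
  have hb2 : b.2 = r * v.2 + a.2 := by rw [hr]; rfl
  have hc1 : c.1 = s * v.1 + a.1 := by rw [hs]; rfl
  have hc2 : c.2 = s * v.2 + a.2 := by rw [hs]; rfl
  rw [hb1, hb2, hc1, hc2]; ring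

lemma collinear_of_slope_eq (p q r : ℝ × ℝ) (h1 : p.1 ≠ q.1) (h2 : q.1 ≠ r.1)
    (h : ptSlope p q = ptSlope q r) : Collinear ℝ ({p, q, r} : Set (ℝ × ℝ)) := by
  rw [collinear_iff_of_mem (Set.mem_insert p _)]
  refine ⟨q - p, ?_⟩
  intro x hx
  have key : r.2 * (q.1 - p.1) = (r.1 - p.1) * (q.2 - p.2) + p.2 * (q.1 - p.1) := by
    unfold ptSlope at h
    have h1' : q.1 - p.1 ≠ 0 := sub_ne_zero.mpr (Ne.symm h1)
    have h2' : r.1 - q.1 ≠ 0 := sub_ne_zero.mpr (Ne.symm h2)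
    field_simp at h
    linarith [h]
  rcases hx with hx | hx | hx
  · exact ⟨0, by simp [hx]⟩
  · exact ⟨1, by simp [hx]⟩
  · refine ⟨(r.1 - p.1) / (q.1 - p.1), ?_⟩
    have h1' : q.1 - p.1 ≠ 0 := sub_ne_zero.mpr (Ne.symm h1)
    simp only [Set.mem_singleton_iff] at hx
    subst hx
    apply Prod.ext
    · show x.1 = (x.1 - p.1) / (q.1 - p.1) * (q.1 - p.1) + p.1
      field_simp
      ring
    · show x.2 = (x.1 - p.1) / (q.1 - p.1) * (q.2 - p.2) + p.2
      rw [div_mul_eq_mul_div]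
      rw [eq_comm, div_add' _ _ _ h1', div_eq_iff h1', eq_comm]
      linarith [key]

def CapSet (P : Finset (ℝ × ℝ)) : Prop :=
  ∀ p ∈ P, ∀ q ∈ P, ∀ r ∈ P, p.1 < q.1 → q.1 < r.1 → ptSlope q r < ptSlope p q

lemma capset_of_noCup (P : Finset (ℝ × ℝ)) (hgen : Generic P) (h : ¬ HasCup P 3) :
    CapSet P := by
  intro p hp q hq r hr h1 h2
  have hpq : p ≠ q := fun e => absurd (congrArg Prod.fst e) (ne_of_lt h1)
  have hqr : q ≠ r := fun e => absurd (congrArg Prod.fst e) (ne_of_lt h2)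
  have hpr : p ≠ r := fun e => absurd (congrArg Prod.fst e) (ne_of_lt (h1.trans h2))
  have hncol := hgen.1 p hp q hq r hr hpq hpr hqr
  have hne : ptSlope p q ≠ ptSlope q r := by
    intro he
    exact hncol (collinear_of_slope_eq p q r (ne_of_lt h1) (ne_of_lt h2) he)
  rcases lt_or_gt_of_ne hne with hlt | hgt
  · exfalso
    apply h
    refine ⟨![p, q, r], ?_, ?_, ?_⟩
    · intro i; fin_cases i <;> simpa
    · intro i j hij
      fin_cases i <;> fin_cases j <;>
        first
          | (exfalso; revert hij; decide)
          | simpa using h1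
          | simpa using h2
          | simpa using h1.trans h2
    · intro i j k hij hjk
      fin_cases i <;> fin_cases j <;> fin_cases k <;>
        first
          | simpa using hlt
          | (exfalso; revert hij hjk; decide)
  · exact hgt

lemma noCup_of_capset (P : Finset (ℝ × ℝ)) (h : CapSet P) : ¬ HasCup P 3 := by
  rintro ⟨f, hmem, hmono, hsl⟩
  have h01 : (0 : Fin 3) < 1 := by decide
  have h12 : (1 : Fin 3) < 2 := by decide
  have := h (f 0) (hmem 0) (f 1) (hmem 1) (f 2) (hmem 2) (hmono h01) (hmono h12)
  have := hsl 0 1 2 h01 h12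
  linarith

lemma exists_capseq (P : Finset (ℝ × ℝ)) (hx : Set.InjOn (fun p : ℝ × ℝ => p.1) ↑P)
    (hcap : CapSet P) :
    ∃ f : Fin P.card → ℝ × ℝ, (∀ i, f i ∈ P) ∧ IsCapSeq f := by
  classical
  set Q : Finset ℝ := P.image (fun p => p.1) with hQ
  have hcard : Q.card = P.card := Finset.card_image_of_injOn hx
  let e := Q.orderIsoOfFin hcard
  have hex : ∀ i : Fin P.card, ∃ p, p ∈ P ∧ p.1 = (e i : ℝ) := by
    intro i
    have : (e i : ℝ) ∈ Q := (e i).2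
    simpa [hQ, eq_comm] using Finset.mem_image.mp this
  choose f hfP hfx using hex
  have hxmono : StrictMono fun i => (f i).1 := by
    intro i j hij
    have : (e i : ℝ) < (e j : ℝ) := e.strictMono hij
    show (f i).1 < (f j).1
    rw [hfx i, hfx j]; exact this
  exact ⟨f, hfP, hxmono, fun i j k hij hjk =>
    hcap (f i) (hfP i) (f j) (hfP j) (f k) (hfP k) (hxmono hij) (hxmono hjk)⟩

lemma exists_lt_finset (T : Finset ℝ) : ∃ y : ℝ, ∀ t ∈ T, y < t := by
  rcases T.eq_empty_or_nonempty with h | h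
  · exact ⟨0, by simp [h]⟩
  · exact ⟨T.min' h - 1, fun t ht => lt_of_lt_of_le (by linarith) (T.min'_le t ht)⟩

lemma exists_gt_finset (T : Finset ℝ) : ∃ y : ℝ, ∀ t ∈ T, t < y := by
  rcases T.eq_empty_or_nonempty with h | h
  · exact ⟨0, by simp [h]⟩
  · exact ⟨T.max' h + 1, fun t ht => lt_of_le_of_lt (T.le_max' t ht) (by linarith)⟩

lemma card_le_of_noCap (P : Finset (ℝ × ℝ)) {l : ℕ} (hf : ¬ HasCap P l)
    (hx : Set.InjOn (fun p : ℝ × ℝ => p.1) ↑P) (hcap : CapSet P) : P.card < l := by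
  by_contra hn
  push_neg at hn
  obtain ⟨f, hfP, hmono, hsl⟩ := exists_capseq P hx hcap
  apply hf
  refine ⟨f ∘ Fin.castLE hn, fun i => hfP _, ?_, ?_⟩
  · intro i j hij
    exact hmono hij
  · intro i j k hij hjk
    exact hsl _ _ _ hij hjk

lemma cap_card_le (P : Finset (ℝ × ℝ)) {l : ℕ} (f : Fin l → ℝ × ℝ)
    (hmem : ∀ i, f i ∈ P) (hcap : IsCapSeq f) : l ≤ P.card := by
  have hinj : Function.Injective f := by
    intro i j hij
    by_contra hne
    rcases lt_or_gt_of_ne hne with h | h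
    · exact absurd (congrArg Prod.fst hij) (ne_of_lt (hcap.1 h))
    · exact absurd (congrArg Prod.fst hij) (ne_of_gt (hcap.1 h))
  calc l = (Finset.univ : Finset (Fin l)).card := by simp
    _ ≤ P.card := Finset.card_le_card_of_injOn f (fun i _ => hmem i) (hinj.injOn)

theorem sat_three_ell (l : ℕ) (hl : 3 ≤ l) (P : Finset (ℝ × ℝ))
    (hP : CupCapSat P 3 l) : P.card = l - 1 := by
  classical
  obtain ⟨hgen, ⟨hnocup, hnocap⟩, hsat⟩ := hP
  have hcapset : CapSet P := capset_of_noCup P hgen hnocup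
  have hub : P.card < l := card_le_of_noCap P hnocap hgen.2 hcapset
  by_contra hne
  have hsmall : P.card + 1 ≤ l - 1 := by omega
  -- choose X bigger than all x-coordinates
  obtain ⟨X, hX⟩ := exists_gt_finset (P.image (fun p => p.1))
  have hXgt : ∀ p ∈ P, p.1 < X := fun p hp => hX _ (Finset.mem_image_of_mem _ hp)
  -- bad Y values (collinearity) and bound Y values (cap condition)
  set T : Finset ℝ :=
    ((P ×ˢ P).image (fun pr =>
        (pr.1.2 * (pr.2.1 - X) - pr.2.2 * (pr.1.1 - X)) / (pr.2.1 - pr.1.1))) ∪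
    ((P ×ˢ P).image (fun pr => pr.2.2 + ptSlope pr.1 pr.2 * (X - pr.2.1))) with hT
  obtain ⟨Y, hY⟩ := exists_lt_finset T
  set q : ℝ × ℝ := (X, Y) with hq
  have hqP : q ∉ P := fun h => absurd rfl (ne_of_lt (hXgt q h))
  have hYbad : ∀ a ∈ P, ∀ b ∈ P,
      Y < (a.2 * (b.1 - X) - b.2 * (a.1 - X)) / (b.1 - a.1) := by
    intro a ha b hb
    apply hY
    rw [hT]
    exact Finset.mem_union_left _
      (Finset.mem_image.mpr ⟨(a, b), Finset.mem_product.mpr ⟨ha, hb⟩, rfl⟩)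
  have hYbound : ∀ a ∈ P, ∀ b ∈ P, Y < b.2 + ptSlope a b * (X - b.1) := by
    intro a ha b hb
    apply hY
    rw [hT]
    exact Finset.mem_union_right _
      (Finset.mem_image.mpr ⟨(a, b), Finset.mem_product.mpr ⟨ha, hb⟩, rfl⟩)
  -- no collinearity with q
  have hnc : ∀ a ∈ P, ∀ b ∈ P, a ≠ b → ¬ Collinear ℝ ({q, a, b} : Set (ℝ × ℝ)) := by
    intro a ha b hb hab hcol
    have hx : a.1 ≠ b.1 := fun e => hab (hgen.2 (by exact_mod_cast ha) (by exact_mod_cast hb) e)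
    have hdet := det_of_collinear q a b hcol
    -- (a.2 - Y) * (b.1 - X) = (b.2 - Y) * (a.1 - X)
    have hveq : Y = (a.2 * (b.1 - X) - b.2 * (a.1 - X)) / (b.1 - a.1) := by
      rw [eq_div_iff (sub_ne_zero.mpr (Ne.symm hx))]
      have hq1 : q.1 = X := rfl
      have hq2 : q.2 = Y := rfl
      rw [hq1, hq2] at hdet
      linear_combination -hdet
    exact absurd hveq (ne_of_lt (hYbad a ha b hb))
  -- insert q P is generic
  have hq1 : q.1 = X := rfl
  have hq2 : q.2 = Y := rfl
  have hgen' : Generic (insert q P) := by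
    constructor
    · intro a ha b hb c hc hab hac hbc
      simp only [Finset.mem_insert] at ha hb hc
      rcases ha with ha | ha
      · have hb' : b ∈ P := hb.resolve_left (fun e => hab (ha.trans e.symm))
        have hc' : c ∈ P := hc.resolve_left (fun e => hac (ha.trans e.symm))
        rw [ha]
        exact hnc b hb' c hc' hbc
      · rcases hb with hb | hb
        · have hc' : c ∈ P := hc.resolve_left (fun e => hbc (hb.trans e.symm))
          rw [hb, Set.insert_comm]
          exact hnc a ha c hc' hac
        · rcases hc with hc | hc
          · rw [hc, Set.pair_comm b q, Set.insert_comm]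
            exact hnc a ha b hb hab
          · exact hgen.1 a ha b hb c hc hab hac hbc
    · intro u hu v hv huv
      simp only [Finset.coe_insert, Set.mem_insert_iff] at hu hv
      simp only at huv
      rcases hu with hu | hu <;> rcases hv with hv | hv
      · rw [hu, hv]
      · exfalso
        rw [hu] at huv
        have : X = v.1 := huv
        linarith [hXgt v hv]
      · exfalso
        rw [hv] at huv
        have : u.1 = X := huv
        linarith [hXgt u hu]
      · exact hgen.2 hu hv huv
  -- insert q P is still a cap set
  have hcap' : CapSet (insert q P) := by
    intro a ha b hb c hc h1 h2
    simp only [Finset.mem_insert] at ha hb hc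
    have ha' : a ∈ P := by
      rcases ha with ha | ha
      · exfalso
        rcases hb with hb | hb
        · rw [ha, hb] at h1; exact lt_irrefl _ h1
        · rw [ha] at h1; rw [hq1] at h1; linarith [hXgt b hb]
      · exact ha
    have hb' : b ∈ P := by
      rcases hb with hb | hb
      · exfalso
        rcases hc with hc | hc
        · rw [hb, hc] at h2; exact lt_irrefl _ h2
        · rw [hb] at h2; rw [hq1] at h2; linarith [hXgt c hc]
      · exact hb
    rcases hc with hc | hc
    · rw [hc]
      have hpos : 0 < X - b.1 := sub_pos.mpr (hXgt b hb')
      have hbnd := hYbound a ha' b hb'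
      show (q.2 - b.2) / (q.1 - b.1) < ptSlope a b
      rw [hq1, hq2, div_lt_iff₀ hpos]
      linarith
    · exact hcapset a ha' b hb' c hc h1 h2
  have hcard' : (insert q P).card = P.card + 1 := Finset.card_insert_of_notMem hqP
  rcases hsat q hqP hgen' with hcup | hcap
  · exact noCup_of_capset _ hcap' hcup
  · obtain ⟨f, hf, hseq⟩ := hcap
    have hle := cap_card_le _ f hf hseq
    rw [hcard'] at hle
    omega
end

section
/- Every (4,4)-cup-cap-saturated planar point set has at least 6 points, i.e., sat_c(4,4) = 6. -/
lemma slope_lt_left {a b c : ℝ × ℝ} (h1 : a.1 < b.1) (h2 : b.1 < c.1)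
    (h : ptSlope a b < ptSlope b c) : ptSlope a b < ptSlope a c := by
  unfold ptSlope at *
  rw [div_lt_div_iff₀ (by linarith) (by linarith)] at h ⊢
  nlinarith [h]

lemma slope_lt_right {a b c : ℝ × ℝ} (h1 : a.1 < b.1) (h2 : b.1 < c.1)
    (h : ptSlope a b < ptSlope b c) : ptSlope a c < ptSlope b c := by
  unfold ptSlope at *
  rw [div_lt_div_iff₀ (by linarith) (by linarith)] at h ⊢
  nlinarith [h]

lemma slope_lt_left' {a b c : ℝ × ℝ} (h1 : a.1 < b.1) (h2 : b.1 < c.1)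
    (h : ptSlope b c < ptSlope a b) : ptSlope a c < ptSlope a b := by
  unfold ptSlope at *
  rw [div_lt_div_iff₀ (by linarith) (by linarith)] at h ⊢
  nlinarith [h]

lemma slope_lt_right' {a b c : ℝ × ℝ} (h1 : a.1 < b.1) (h2 : b.1 < c.1)
    (h : ptSlope b c < ptSlope a b) : ptSlope b c < ptSlope a c := by
  unfold ptSlope at *
  rw [div_lt_div_iff₀ (by linarith) (by linarith)] at h ⊢
  nlinarith [h]

lemma det_of_collinear_s9 {s : Set (ℝ × ℝ)} {p q r : ℝ × ℝ} (hp : p ∈ s) (hq : q ∈ s) (hr : r ∈ s)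
    (h : Collinear ℝ s) :
    (q.2 - p.2) * (r.1 - p.1) = (r.2 - p.2) * (q.1 - p.1) := by
  obtain ⟨v, hv⟩ := (collinear_iff_of_mem hp).mp h
  obtain ⟨tq, hq'⟩ := hv q hq
  obtain ⟨tr, hr'⟩ := hv r hr
  have e1 : q.1 = tq * v.1 + p.1 := by rw [hq']; rfl
  have e2 : q.2 = tq * v.2 + p.2 := by rw [hq']; rfl
  have e3 : r.1 = tr * v.1 + p.1 := by rw [hr']; rfl
  have e4 : r.2 = tr * v.2 + p.2 := by rw [hr']; rfl
  rw [e1, e2, e3, e4]; ring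

lemma collinear_of_det {p q r : ℝ × ℝ} (hpq : p.1 ≠ q.1)
    (h : (q.2 - p.2) * (r.1 - p.1) = (r.2 - p.2) * (q.1 - p.1)) :
    Collinear ℝ ({p, q, r} : Set (ℝ × ℝ)) := by
  have hne : q.1 - p.1 ≠ 0 := fun hh => hpq (by linarith [sub_eq_zero.mp hh])
  rw [collinear_iff_of_mem (Set.mem_insert p {q, r})]
  refine ⟨q - p, ?_⟩
  rintro x (rfl | rfl | rfl)
  · exact ⟨0, by simp⟩
  · exact ⟨1, by simp⟩
  · refine ⟨(x.1 - p.1) / (q.1 - p.1), ?_⟩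
    have e1 : ((x.1 - p.1) / (q.1 - p.1)) • (q - p) +ᵥ p
        = (((x.1 - p.1) / (q.1 - p.1)) * (q.1 - p.1) + p.1,
           ((x.1 - p.1) / (q.1 - p.1)) * (q.2 - p.2) + p.2) := rfl
    rw [e1]
    have : ((x.1 - p.1) / (q.1 - p.1)) * (q.2 - p.2) + p.2 = x.2 := by
      field_simp
      nlinarith [h]
    rw [this]
    have : ((x.1 - p.1) / (q.1 - p.1)) * (q.1 - p.1) + p.1 = x.1 := by field_simp; ring
    rw [this]

lemma generic_mono {S T : Finset (ℝ × ℝ)} (hTS : T ⊆ S) (h : Generic S) : Generic T :=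
  ⟨fun p hp q hq r hr h1 h2 h3 => h.1 p (hTS hp) q (hTS hq) r (hTS hr) h1 h2 h3,
   h.2.mono (by exact_mod_cast hTS)⟩

lemma hasCup_mono {S T : Finset (ℝ × ℝ)} {k : ℕ} (hTS : T ⊆ S) (h : HasCup T k) : HasCup S k :=
  let ⟨f, hf, hc⟩ := h; ⟨f, fun i => hTS (hf i), hc⟩

lemma hasCap_mono {S T : Finset (ℝ × ℝ)} {k : ℕ} (hTS : T ⊆ S) (h : HasCap T k) : HasCap S k :=
  let ⟨f, hf, hc⟩ := h; ⟨f, fun i => hTS (hf i), hc⟩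

lemma generic_slope_ne {S : Finset (ℝ × ℝ)} (hS : Generic S) {a b c : ℝ × ℝ}
    (ha : a ∈ S) (hb : b ∈ S) (hc : c ∈ S) (h1 : a.1 < b.1) (h2 : b.1 < c.1) :
    ptSlope a b ≠ ptSlope b c := by
  intro heq
  have hd1 : b.1 - a.1 ≠ 0 := by intro hh; simp [sub_eq_zero] at hh; linarith
  have hd2 : c.1 - b.1 ≠ 0 := by intro hh; simp [sub_eq_zero] at hh; linarith
  unfold ptSlope at heq
  have hcr : (b.2 - a.2) * (c.1 - b.1) = (c.2 - b.2) * (b.1 - a.1) := by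
    field_simp at heq; linarith [heq]
  have hdet : (b.2 - a.2) * (c.1 - a.1) = (c.2 - a.2) * (b.1 - a.1) := by nlinarith [hcr]
  exact hS.1 a ha b hb c hc (fun h => by rw [h] at h1; exact lt_irrefl _ h1)
    (fun h => by rw [h] at h1; linarith) (fun h => by rw [h] at h2; exact lt_irrefl _ h2)
    (collinear_of_det (by linarith : a.1 ≠ b.1) hdet)

lemma isCupSeq3 {a b c : ℝ × ℝ} (h1 : a.1 < b.1) (h2 : b.1 < c.1)
    (hs : ptSlope a b < ptSlope b c) : IsCupSeq ![a, b, c] := by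
  constructor
  · intro i j hij
    fin_cases i <;> fin_cases j <;>
      first
        | exact absurd hij (by decide)
        | simpa using h1
        | simpa using h2
        | (simp; linarith)
  · intro i j k hij hjk
    fin_cases i <;> fin_cases j <;> fin_cases k <;>
      first
        | exact absurd hij (by decide)
        | exact absurd hjk (by decide)
        | simpa using hs

lemma isCapSeq3 {a b c : ℝ × ℝ} (h1 : a.1 < b.1) (h2 : b.1 < c.1)
    (hs : ptSlope b c < ptSlope a b) : IsCapSeq ![a, b, c] := by
  constructor
  · intro i j hij
    fin_cases i <;> fin_cases j <;>
      first
        | exact absurd hij (by decide)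
        | simpa using h1
        | simpa using h2
        | (simp; linarith)
  · intro i j k hij hjk
    fin_cases i <;> fin_cases j <;> fin_cases k <;>
      first
        | exact absurd hij (by decide)
        | exact absurd hjk (by decide)
        | simpa using hs

lemma isCupSeq4 {a b c d : ℝ × ℝ} (h1 : a.1 < b.1) (h2 : b.1 < c.1) (h3 : c.1 < d.1)
    (hs1 : ptSlope a b < ptSlope b c) (hs2 : ptSlope b c < ptSlope c d) :
    IsCupSeq ![a, b, c, d] := by
  have h02 : ptSlope a c < ptSlope b c := slope_lt_right h1 h2 hs1
  have h02' : ptSlope a b < ptSlope a c := slope_lt_left h1 h2 hs1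
  have h13 : ptSlope b c < ptSlope b d := slope_lt_left h2 h3 hs2
  have h13' : ptSlope b d < ptSlope c d := slope_lt_right h2 h3 hs2
  constructor
  · intro i j hij
    fin_cases i <;> fin_cases j <;>
      first
        | exact absurd hij (by decide)
        | (simp; linarith)
  · intro i j k hij hjk
    fin_cases i <;> fin_cases j <;> fin_cases k <;>
      first
        | exact absurd hij (by decide)
        | exact absurd hjk (by decide)
        | (simp; linarith)

lemma isCapSeq4 {a b c d : ℝ × ℝ} (h1 : a.1 < b.1) (h2 : b.1 < c.1) (h3 : c.1 < d.1)
    (hs1 : ptSlope b c < ptSlope a b) (hs2 : ptSlope c d < ptSlope b c) :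
    IsCapSeq ![a, b, c, d] := by
  have h02 : ptSlope b c < ptSlope a c := slope_lt_right' h1 h2 hs1
  have h02' : ptSlope a c < ptSlope a b := slope_lt_left' h1 h2 hs1
  have h13 : ptSlope b d < ptSlope b c := slope_lt_left' h2 h3 hs2
  have h13' : ptSlope c d < ptSlope b d := slope_lt_right' h2 h3 hs2
  constructor
  · intro i j hij
    fin_cases i <;> fin_cases j <;>
      first
        | exact absurd hij (by decide)
        | (simp; linarith)
  · intro i j k hij hjk
    fin_cases i <;> fin_cases j <;> fin_cases k <;>
      first
        | exact absurd hij (by decide)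
        | exact absurd hjk (by decide)
        | (simp; linarith)

lemma hasCup_of3 {S : Finset (ℝ × ℝ)} {a b c : ℝ × ℝ} (ha : a ∈ S) (hb : b ∈ S) (hc : c ∈ S)
    (h1 : a.1 < b.1) (h2 : b.1 < c.1) (hs : ptSlope a b < ptSlope b c) : HasCup S 3 :=
  ⟨![a, b, c], by intro i; fin_cases i <;> simpa, isCupSeq3 h1 h2 hs⟩

lemma hasCap_of3 {S : Finset (ℝ × ℝ)} {a b c : ℝ × ℝ} (ha : a ∈ S) (hb : b ∈ S) (hc : c ∈ S)
    (h1 : a.1 < b.1) (h2 : b.1 < c.1) (hs : ptSlope b c < ptSlope a b) : HasCap S 3 :=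
  ⟨![a, b, c], by intro i; fin_cases i <;> simpa, isCapSeq3 h1 h2 hs⟩

lemma hasCup_of4 {S : Finset (ℝ × ℝ)} {a b c d : ℝ × ℝ} (ha : a ∈ S) (hb : b ∈ S) (hc : c ∈ S)
    (hd : d ∈ S) (h1 : a.1 < b.1) (h2 : b.1 < c.1) (h3 : c.1 < d.1)
    (hs1 : ptSlope a b < ptSlope b c) (hs2 : ptSlope b c < ptSlope c d) : HasCup S 4 :=
  ⟨![a, b, c, d], by intro i; fin_cases i <;> simpa, isCupSeq4 h1 h2 h3 hs1 hs2⟩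

lemma hasCap_of4 {S : Finset (ℝ × ℝ)} {a b c d : ℝ × ℝ} (ha : a ∈ S) (hb : b ∈ S) (hc : c ∈ S)
    (hd : d ∈ S) (h1 : a.1 < b.1) (h2 : b.1 < c.1) (h3 : c.1 < d.1)
    (hs1 : ptSlope b c < ptSlope a b) (hs2 : ptSlope c d < ptSlope b c) : HasCap S 4 :=
  ⟨![a, b, c, d], by intro i; fin_cases i <;> simpa, isCapSeq4 h1 h2 h3 hs1 hs2⟩

lemma exists_sorted_enum (S : Finset (ℝ × ℝ)) (hinj : Set.InjOn (fun p : ℝ × ℝ => p.1) ↑S) :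
    ∃ g : Fin S.card → ℝ × ℝ, (∀ i, g i ∈ S) ∧ StrictMono (fun i => (g i).1) ∧
      ∀ p ∈ S, ∃ i, g i = p := by
  classical
  set X := S.image (fun p : ℝ × ℝ => p.1) with hXdef
  have hX : X.card = S.card := Finset.card_image_of_injOn hinj
  let e := X.orderIsoOfFin hX
  have hpre : ∀ i : Fin S.card, ∃ p, p ∈ S ∧ (e i : ℝ) = p.1 := by
    intro i
    have : ((e i : X) : ℝ) ∈ X := (e i).2
    obtain ⟨p, hp, hp'⟩ := Finset.mem_image.mp this
    exact ⟨p, hp, hp'.symm⟩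
  choose g hg1 hg2 using hpre
  refine ⟨g, hg1, ?_, ?_⟩
  · intro i j hij
    show (g i).1 < (g j).1
    rw [← hg2 i, ← hg2 j]
    exact_mod_cast e.strictMono hij
  · intro p hp
    have hpX : p.1 ∈ X := Finset.mem_image_of_mem _ hp
    obtain ⟨i, hi⟩ := e.surjective ⟨p.1, hpX⟩
    refine ⟨i, hinj (hg1 i) hp ?_⟩
    show (g i).1 = p.1
    rw [← hg2 i, hi]

lemma exists_sorted_points {S : Finset (ℝ × ℝ)} (hinj : Set.InjOn (fun p : ℝ × ℝ => p.1) ↑S)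
    {m : ℕ} (hm : m ≤ S.card) :
    ∃ g : Fin m → ℝ × ℝ, (∀ i, g i ∈ S) ∧ StrictMono (fun i => (g i).1) := by
  obtain ⟨T, hTS, hT⟩ := Finset.exists_subset_card_eq hm
  obtain ⟨g, hg1, hg2, -⟩ := exists_sorted_enum T (hinj.mono (by exact_mod_cast hTS))
  refine ⟨g ∘ (Fin.cast hT.symm), fun i => hTS (hg1 _), ?_⟩
  intro i j hij
  exact hg2 (by simpa using hij)

/-- Any generic set of at least 4 points contains a 3-cup or a 4-cap. -/
lemma f34 {S : Finset (ℝ × ℝ)} (hS : Generic S) (hcard : 4 ≤ S.card) :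
    HasCup S 3 ∨ HasCap S 4 := by
  obtain ⟨g, hg1, hg2⟩ := exists_sorted_points hS.2 hcard
  by_cases hc : ∃ i j k : Fin 4, i < j ∧ j < k ∧ ptSlope (g i) (g j) < ptSlope (g j) (g k)
  · obtain ⟨i, j, k, hij, hjk, hs⟩ := hc
    exact Or.inl (hasCup_of3 (hg1 i) (hg1 j) (hg1 k) (hg2 hij) (hg2 hjk) hs)
  · push_neg at hc
    refine Or.inr ⟨g, hg1, hg2, fun i j k hij hjk => ?_⟩
    have hne := generic_slope_ne hS (hg1 i) (hg1 j) (hg1 k) (hg2 hij) (hg2 hjk)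
    exact lt_of_le_of_ne (hc i j k hij hjk) hne.symm

/-- Any generic set of at least 4 points contains a 4-cup or a 3-cap. -/
lemma f43 {S : Finset (ℝ × ℝ)} (hS : Generic S) (hcard : 4 ≤ S.card) :
    HasCup S 4 ∨ HasCap S 3 := by
  obtain ⟨g, hg1, hg2⟩ := exists_sorted_points hS.2 hcard
  by_cases hc : ∃ i j k : Fin 4, i < j ∧ j < k ∧ ptSlope (g j) (g k) < ptSlope (g i) (g j)
  · obtain ⟨i, j, k, hij, hjk, hs⟩ := hc
    exact Or.inr (hasCap_of3 (hg1 i) (hg1 j) (hg1 k) (hg2 hij) (hg2 hjk) hs)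
  · push_neg at hc
    refine Or.inl ⟨g, hg1, hg2, fun i j k hij hjk => ?_⟩
    have hne := generic_slope_ne hS (hg1 i) (hg1 j) (hg1 k) (hg2 hij) (hg2 hjk)
    exact lt_of_le_of_ne (hc i j k hij hjk) hne

/-- Erdős–Szekeres: any generic set of at least 7 points contains a 4-cup or a 4-cap. -/
lemma es7 {S : Finset (ℝ × ℝ)} (hS : Generic S) (hcard : 7 ≤ S.card) :
    HasCup S 4 ∨ HasCap S 4 := by
  classical
  by_contra hcon
  push_neg at hcon
  obtain ⟨hnocup, hnocap⟩ := hcon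
  set pred := fun p : ℝ × ℝ => ∃ a b : ℝ × ℝ, a ∈ S ∧ b ∈ S ∧ a.1 < b.1 ∧ b.1 < p.1 ∧
    ptSlope a b < ptSlope b p with hpred
  set T := S.filter pred with hT
  set U := S.filter (fun p => ¬ pred p) with hU
  have hTS : T ⊆ S := Finset.filter_subset _ _
  have hUS : U ⊆ S := Finset.filter_subset _ _
  -- U has no 3-cup
  have hU3 : ¬ HasCup U 3 := by
    rintro ⟨f, hf, hmono, hslope⟩
    have h01 : (f 0).1 < (f 1).1 := hmono (by decide)
    have h12 : (f 1).1 < (f 2).1 := hmono (by decide)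
    have hs := hslope 0 1 2 (by decide) (by decide)
    have : pred (f 2) := ⟨f 0, f 1, hUS (hf 0), hUS (hf 1), h01, h12, hs⟩
    have := (Finset.mem_filter.mp (hf 2)).2
    contradiction
  -- so U is small
  have hUcard : U.card ≤ 3 := by
    by_contra hbig
    push_neg at hbig
    rcases f34 (generic_mono hUS hS) hbig with h | h
    · exact hU3 h
    · exact hnocap (hasCap_mono hUS h)
  have hTcard : 4 ≤ T.card := by
    have heq : T.card + U.card = S.card := by
      rw [hT, hU]
      exact Finset.card_filter_add_card_filter_not (s := S) (p := pred)
    omega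
  rcases f43 (generic_mono hTS hS) hTcard with h | h
  · exact hnocup (hasCup_mono hTS h)
  · obtain ⟨f, hf, hmono, hslope⟩ := h
    have h01 : (f 0).1 < (f 1).1 := hmono (by decide)
    have h12 : (f 1).1 < (f 2).1 := hmono (by decide)
    have hcap := hslope 0 1 2 (by decide) (by decide)
    obtain ⟨u, v, hu, hv, huv, hva, hcup⟩ := (Finset.mem_filter.mp (hf 0)).2
    have hf0 : f 0 ∈ S := hTS (hf 0)
    have hf1 : f 1 ∈ S := hTS (hf 1)
    have hf2 : f 2 ∈ S := hTS (hf 2)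
    rcases lt_trichotomy (ptSlope v (f 0)) (ptSlope (f 0) (f 1)) with hlt | heq | hgt
    · exact hnocup (hasCup_of4 hu hv hf0 hf1 huv hva h01 hcup hlt)
    · exact generic_slope_ne hS hv hf0 hf1 hva h01 heq
    · exact hnocap (hasCap_of4 hv hf0 hf1 hf2 hva h01 h12 hgt hcap)

noncomputable def Pex : Finset (ℝ × ℝ) :=
  {((0:ℝ), (10:ℝ)), (1, 20), (2, 29), (10, 10000), (11, 10010), (12, 10021)}

lemma Pex_card : Pex.card = 6 := by
  rw [Pex]
  rw [Finset.card_insert_of_notMem (by norm_num [Prod.ext_iff]),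
      Finset.card_insert_of_notMem (by norm_num [Prod.ext_iff]),
      Finset.card_insert_of_notMem (by norm_num [Prod.ext_iff]),
      Finset.card_insert_of_notMem (by norm_num [Prod.ext_iff]),
      Finset.card_insert_of_notMem (by norm_num [Prod.ext_iff])]
  rfl

lemma Pex_mem {p : ℝ × ℝ} (hp : p ∈ Pex) :
    p = ((0:ℝ), (10:ℝ)) ∨ p = (1, 20) ∨ p = (2, 29) ∨ p = (10, 10000) ∨ p = (11, 10010) ∨
      p = (12, 10021) := by
  simpa [Pex] using hp

lemma Pex_generic : Generic Pex := by
  constructor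
  · intro p hp q hq r hr hpq hpr hqr hcol
    have hdet := det_of_collinear_s9 (Set.mem_insert p {q, r})
      (Set.mem_insert_of_mem p (Set.mem_insert q {r}))
      (Set.mem_insert_of_mem p (Set.mem_insert_of_mem q rfl)) hcol
    rcases Pex_mem hp with h1|h1|h1|h1|h1|h1 <;> rcases Pex_mem hq with h2|h2|h2|h2|h2|h2 <;>
      first
        | exact hpq (h1.trans h2.symm)
        | (rcases Pex_mem hr with h3|h3|h3|h3|h3|h3 <;>
            first
              | exact hpr (h1.trans h3.symm)
              | exact hqr (h2.trans h3.symm)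
              | (rw [h1, h2, h3] at hdet; norm_num at hdet; done))
  · intro p hp q hq h
    simp only [Finset.coe_insert, Set.mem_insert_iff, Finset.coe_singleton,
      Set.mem_singleton_iff, Pex] at hp hq
    simp only [] at h
    rcases hp with h1|h1|h1|h1|h1|h1 <;> rcases hq with h2|h2|h2|h2|h2|h2 <;>
      first
        | exact h1.trans h2.symm
        | (rw [h1, h2] at h; norm_num at h; done)

lemma Pex_free : CupCapFree Pex 4 4 := by
  constructor
  · rintro ⟨f, hf, hmono, hslope⟩
    have h01 : (f 0).1 < (f 1).1 := hmono (by decide)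
    have h12 : (f 1).1 < (f 2).1 := hmono (by decide)
    have h23 : (f 2).1 < (f 3).1 := hmono (by decide)
    have A := hslope 0 1 2 (by decide) (by decide)
    have B := hslope 1 2 3 (by decide) (by decide)
    have m0 := Pex_mem (hf 0)
    have m1 := Pex_mem (hf 1)
    have m2 := Pex_mem (hf 2)
    have m3 := Pex_mem (hf 3)
    rcases m0 with h0|h0|h0|h0|h0|h0 <;> rcases m1 with h1|h1|h1|h1|h1|h1 <;>
      first
        | (rw [h0, h1] at h01; norm_num at h01; done)
        | (rcases m2 with h2|h2|h2|h2|h2|h2 <;>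
            first
              | (rw [h1, h2] at h12; norm_num at h12; done)
              | (rcases m3 with h3|h3|h3|h3|h3|h3 <;>
                  first
                    | (rw [h2, h3] at h23; norm_num at h23; done)
                    | (rw [h0, h1, h2] at A; norm_num [ptSlope] at A; done)
                    | (rw [h1, h2, h3] at B; norm_num [ptSlope] at B; done)))
  · rintro ⟨f, hf, hmono, hslope⟩
    have h01 : (f 0).1 < (f 1).1 := hmono (by decide)
    have h12 : (f 1).1 < (f 2).1 := hmono (by decide)
    have h23 : (f 2).1 < (f 3).1 := hmono (by decide)
    have A := hslope 0 1 2 (by decide) (by decide)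
    have B := hslope 1 2 3 (by decide) (by decide)
    have m0 := Pex_mem (hf 0)
    have m1 := Pex_mem (hf 1)
    have m2 := Pex_mem (hf 2)
    have m3 := Pex_mem (hf 3)
    rcases m0 with h0|h0|h0|h0|h0|h0 <;> rcases m1 with h1|h1|h1|h1|h1|h1 <;>
      first
        | (rw [h0, h1] at h01; norm_num at h01; done)
        | (rcases m2 with h2|h2|h2|h2|h2|h2 <;>
            first
              | (rw [h1, h2] at h12; norm_num at h12; done)
              | (rcases m3 with h3|h3|h3|h3|h3|h3 <;>
                  first
                    | (rw [h2, h3] at h23; norm_num at h23; done)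
                    | (rw [h0, h1, h2] at A; norm_num [ptSlope] at A; done)
                    | (rw [h1, h2, h3] at B; norm_num [ptSlope] at B; done)))

/-- If no triple of `P` entirely to the left of `x0` is a cup and no triple entirely to the
right is a cup, then a suitably high point above `x0` can be added keeping `P` free. -/
lemma insert_high {P : Finset (ℝ × ℝ)} (hgen : Generic P) (hfree : CupCapFree P 4 4)
    (x0 : ℝ) (hx0 : ∀ p ∈ P, p.1 ≠ x0)
    (hL : ∀ a b c : ℝ × ℝ, a ∈ P → b ∈ P → c ∈ P → a.1 < b.1 → b.1 < c.1 → c.1 < x0 →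
      ¬ ptSlope a b < ptSlope b c)
    (hR : ∀ a b c : ℝ × ℝ, a ∈ P → b ∈ P → c ∈ P → x0 < a.1 → a.1 < b.1 → b.1 < c.1 →
      ¬ ptSlope a b < ptSlope b c) :
    ∃ q ∉ P, Generic (insert q P) ∧ CupCapFree (insert q P) 4 4 := by
  classical
  obtain ⟨M0, hM0⟩ := Finset.exists_le
    ((P ×ˢ P ×ˢ P).image (fun t : (ℝ × ℝ) × (ℝ × ℝ) × (ℝ × ℝ) =>
      t.1.2 + ptSlope t.2.1 t.2.2 * (x0 - t.1.1)))
  set M := M0 + 1 with hMdef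
  have hM : ∀ p ∈ P, ∀ a ∈ P, ∀ b ∈ P, p.2 + ptSlope a b * (x0 - p.1) < M := by
    intro p hp a ha b hb
    have : p.2 + ptSlope a b * (x0 - p.1) ≤ M0 := by
      apply hM0
      exact Finset.mem_image.mpr ⟨(p, a, b), by simp [Finset.mem_product, hp, ha, hb], rfl⟩
    linarith
  have hMp : ∀ p ∈ P, p.2 < M := by
    intro p hp
    have := hM p hp p hp p hp
    simp [ptSlope] at this
    linarith
  set q : ℝ × ℝ := (x0, M) with hq
  have hqP : q ∉ P := fun h => hx0 q h rfl
  have hinj' : Set.InjOn (fun p : ℝ × ℝ => p.1) ↑(insert q P) := by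
    intro u hu v hv huv
    simp only [Finset.coe_insert, Set.mem_insert_iff] at hu hv
    rcases hu with rfl | hu <;> rcases hv with rfl | hv
    · rfl
    · exact absurd ((show v.1 = x0 from by simpa using huv.symm)) (hx0 v hv)
    · exact absurd ((show u.1 = x0 from by simpa using huv)) (hx0 u hu)
    · exact hgen.2 hu hv huv
  -- no point of P is collinear with q and another point of P
  have hnc : ∀ (s : Set (ℝ × ℝ)), ∀ a ∈ P, ∀ r ∈ P, a ≠ r →
      q ∈ s → a ∈ s → r ∈ s → ¬ Collinear ℝ s := by
    intro s a ha r hr har hqs has hrs hcol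
    have hdet := det_of_collinear_s9 has hqs hrs hcol
    have hra : r.1 - a.1 ≠ 0 := by
      intro hh
      exact har (hgen.2 ha hr (by simp; linarith [sub_eq_zero.mp hh]))
    have hkey : ptSlope a r * (x0 - a.1) = M - a.2 := by
      rw [ptSlope, div_mul_eq_mul_div, div_eq_iff hra]
      have e1 : q.2 = M := rfl
      have e2 : q.1 = x0 := rfl
      rw [e1, e2] at hdet
      linarith [hdet]
    have := hM a ha a ha r hr
    have := hM a ha a ha a ha
    have h2 := hM a ha r hr r hr
    have h3 := hM a ha a ha r hr
    linarith [hkey, h3]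
  have hgen' : Generic (insert q P) := by
    refine ⟨?_, hinj'⟩
    intro p hp r hr s hs h1 h2 h3 hcol
    rcases Finset.mem_insert.mp hp with rfl | hp' <;>
      rcases Finset.mem_insert.mp hr with rfl | hr' <;>
      rcases Finset.mem_insert.mp hs with rfl | hs'
    · exact h1 rfl
    · exact h1 rfl
    · exact h2 rfl
    · exact hnc _ r hr' s hs' h3 (by simp) (by simp) (by simp) hcol
    · exact h3 rfl
    · exact hnc _ p hp' s hs' h2 (by simp) (by simp) (by simp) hcol
    · exact hnc _ p hp' r hr' h1 (by simp) (by simp) (by simp) hcol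
    · exact hgen.1 p hp' r hr' s hs' h1 h2 h3 hcol
  refine ⟨q, hqP, hgen', ?_, ?_⟩
  · -- no 4-cup
    rintro ⟨f, hf, hmono, hslope⟩
    by_cases hex : ∃ i0, f i0 = q
    case neg =>
      refine hfree.1 ⟨f, fun i => ?_, hmono, hslope⟩
      rcases Finset.mem_insert.mp (hf i) with h | h
      · exact absurd ⟨i, h⟩ hex
      · exact h
    obtain ⟨i0, hi0⟩ := hex
    have hPmem : ∀ i, i ≠ i0 → f i ∈ P := by
      intro i hne
      rcases Finset.mem_insert.mp (hf i) with h | h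
      · exact absurd (hmono.injective (show (fun i => (f i).1) i = (fun i => (f i).1) i0 from
          by simp only []; rw [h, hi0])) hne
      · exact h
    have hx : ∀ i, i < i0 → (f i).1 < x0 := fun i hi => by
      simpa [hi0, hq] using hmono hi
    have hx' : ∀ i, i0 < i → x0 < (f i).1 := fun i hi => by
      simpa [hi0, hq] using hmono hi
    fin_cases i0
    · exact hR (f 1) (f 2) (f 3) (hPmem 1 (by decide)) (hPmem 2 (by decide))
        (hPmem 3 (by decide)) (hx' 1 (by decide)) (hmono (by decide)) (hmono (by decide))
        (hslope 1 2 3 (by decide) (by decide))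
    · -- f 1 = q : slope (f 0) q is ≥ 0, slope q (f 2) is < 0
      have hs := hslope 0 1 2 (by decide) (by decide)
      have hqi : f 1 = q := hi0
      rw [hqi] at hs
      have hl : (0:ℝ) < ptSlope (f 0) q := by
        rw [show ptSlope (f 0) q = (M - (f 0).2) / (x0 - (f 0).1) from rfl]
        have h0 : f 0 ∈ P := hPmem 0 (by decide)
        exact div_pos (by linarith [hMp (f 0) h0]) (by linarith [hx 0 (by decide)])
      have hr : ptSlope q (f 2) < 0 := by
        rw [show ptSlope q (f 2) = ((f 2).2 - M) / ((f 2).1 - x0) from rfl]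
        have h2 : f 2 ∈ P := hPmem 2 (by decide)
        exact div_neg_of_neg_of_pos (by linarith [hMp (f 2) h2]) (by linarith [hx' 2 (by decide)])
      linarith
    · have hs := hslope 1 2 3 (by decide) (by decide)
      have hqi : f 2 = q := hi0
      rw [hqi] at hs
      have hl : (0:ℝ) < ptSlope (f 1) q := by
        rw [show ptSlope (f 1) q = (M - (f 1).2) / (x0 - (f 1).1) from rfl]
        have h1 : f 1 ∈ P := hPmem 1 (by decide)
        exact div_pos (by linarith [hMp (f 1) h1]) (by linarith [hx 1 (by decide)])
      have hr : ptSlope q (f 3) < 0 := by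
        rw [show ptSlope q (f 3) = ((f 3).2 - M) / ((f 3).1 - x0) from rfl]
        have h3 : f 3 ∈ P := hPmem 3 (by decide)
        exact div_neg_of_neg_of_pos (by linarith [hMp (f 3) h3]) (by linarith [hx' 3 (by decide)])
      linarith
    · exact hL (f 0) (f 1) (f 2) (hPmem 0 (by decide)) (hPmem 1 (by decide))
        (hPmem 2 (by decide)) (hmono (by decide)) (hmono (by decide)) (hx 2 (by decide))
        (hslope 0 1 2 (by decide) (by decide))
  · -- no 4-cap
    rintro ⟨f, hf, hmono, hslope⟩
    by_cases hex : ∃ i0, f i0 = q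
    case neg =>
      refine hfree.2 ⟨f, fun i => ?_, hmono, hslope⟩
      rcases Finset.mem_insert.mp (hf i) with h | h
      · exact absurd ⟨i, h⟩ hex
      · exact h
    obtain ⟨i0, hi0⟩ := hex
    have hPmem : ∀ i, i ≠ i0 → f i ∈ P := by
      intro i hne
      rcases Finset.mem_insert.mp (hf i) with h | h
      · exact absurd (hmono.injective (show (fun i => (f i).1) i = (fun i => (f i).1) i0 from
          by simp only []; rw [h, hi0])) hne
      · exact h
    have hx : ∀ i, i < i0 → (f i).1 < x0 := fun i hi => by
      simpa [hi0, hq] using hmono hi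
    have hx' : ∀ i, i0 < i → x0 < (f i).1 := fun i hi => by
      simpa [hi0, hq] using hmono hi
    fin_cases i0
    · -- (q, f1, f2, f3) : slope q (f 1) < slope (f 1) (f 2) for M large
      have hs := hslope 0 1 2 (by decide) (by decide)
      have hqi : f 0 = q := hi0
      rw [hqi] at hs
      have h1 : f 1 ∈ P := hPmem 1 (by decide)
      have h2 : f 2 ∈ P := hPmem 2 (by decide)
      have hkey : ptSlope q (f 1) < ptSlope (f 1) (f 2) := by
        rw [show ptSlope q (f 1) = ((f 1).2 - M) / ((f 1).1 - x0) from rfl,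
          div_lt_iff₀ (by linarith [hx' 1 (by decide)])]
        nlinarith [hM (f 1) h1 (f 1) h1 (f 2) h2]
      linarith
    · have hs := hslope 1 2 3 (by decide) (by decide)
      have hqi : f 1 = q := hi0
      rw [hqi] at hs
      have h2 : f 2 ∈ P := hPmem 2 (by decide)
      have h3 : f 3 ∈ P := hPmem 3 (by decide)
      have hkey : ptSlope q (f 2) < ptSlope (f 2) (f 3) := by
        rw [show ptSlope q (f 2) = ((f 2).2 - M) / ((f 2).1 - x0) from rfl,
          div_lt_iff₀ (by linarith [hx' 2 (by decide)])]
        nlinarith [hM (f 2) h2 (f 2) h2 (f 3) h3]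
      linarith
    · -- (f0, f1, q, f3) : slope (f 0) (f 1) < slope (f 1) q for M large
      have hs := hslope 0 1 2 (by decide) (by decide)
      have hqi : f 2 = q := hi0
      rw [hqi] at hs
      have h0 : f 0 ∈ P := hPmem 0 (by decide)
      have h1 : f 1 ∈ P := hPmem 1 (by decide)
      have hkey : ptSlope (f 0) (f 1) < ptSlope (f 1) q := by
        rw [show ptSlope (f 1) q = (M - (f 1).2) / (x0 - (f 1).1) from rfl,
          lt_div_iff₀ (by linarith [hx 1 (by decide)])]
        nlinarith [hM (f 1) h1 (f 0) h0 (f 1) h1]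
      linarith
    · have hs := hslope 1 2 3 (by decide) (by decide)
      have hqi : f 3 = q := hi0
      rw [hqi] at hs
      have h1 : f 1 ∈ P := hPmem 1 (by decide)
      have h2 : f 2 ∈ P := hPmem 2 (by decide)
      have hkey : ptSlope (f 1) (f 2) < ptSlope (f 2) q := by
        rw [show ptSlope (f 2) q = (M - (f 2).2) / (x0 - (f 2).1) from rfl,
          lt_div_iff₀ (by linarith [hx 2 (by decide)])]
        nlinarith [hM (f 2) h2 (f 1) h1 (f 2) h2]
      linarith

/-- If no triple of `P` entirely to the left of `x0` is a cap and no triple entirely to the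
right is a cap, then a suitably low point below `x0` can be added keeping `P` free. -/
lemma insert_low {P : Finset (ℝ × ℝ)} (hgen : Generic P) (hfree : CupCapFree P 4 4)
    (x0 : ℝ) (hx0 : ∀ p ∈ P, p.1 ≠ x0)
    (hL : ∀ a b c : ℝ × ℝ, a ∈ P → b ∈ P → c ∈ P → a.1 < b.1 → b.1 < c.1 → c.1 < x0 →
      ¬ ptSlope b c < ptSlope a b)
    (hR : ∀ a b c : ℝ × ℝ, a ∈ P → b ∈ P → c ∈ P → x0 < a.1 → a.1 < b.1 → b.1 < c.1 →
      ¬ ptSlope b c < ptSlope a b) :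
    ∃ q ∉ P, Generic (insert q P) ∧ CupCapFree (insert q P) 4 4 := by
  classical
  obtain ⟨M0, hM0⟩ := Finset.exists_le
    ((P ×ˢ P ×ˢ P).image (fun t : (ℝ × ℝ) × (ℝ × ℝ) × (ℝ × ℝ) =>
      -(t.1.2 + ptSlope t.2.1 t.2.2 * (x0 - t.1.1))))
  set M := -M0 - 1 with hMdef
  have hM : ∀ p ∈ P, ∀ a ∈ P, ∀ b ∈ P, M < p.2 + ptSlope a b * (x0 - p.1) := by
    intro p hp a ha b hb
    have : -(p.2 + ptSlope a b * (x0 - p.1)) ≤ M0 := by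
      apply hM0
      exact Finset.mem_image.mpr ⟨(p, a, b), by simp [Finset.mem_product, hp, ha, hb], rfl⟩
    linarith
  have hMp : ∀ p ∈ P, M < p.2 := by
    intro p hp
    have := hM p hp p hp p hp
    simp [ptSlope] at this
    linarith
  set q : ℝ × ℝ := (x0, M) with hq
  have hqP : q ∉ P := fun h => hx0 q h rfl
  have hinj' : Set.InjOn (fun p : ℝ × ℝ => p.1) ↑(insert q P) := by
    intro u hu v hv huv
    simp only [Finset.coe_insert, Set.mem_insert_iff] at hu hv
    rcases hu with rfl | hu <;> rcases hv with rfl | hv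
    · rfl
    · exact absurd ((show v.1 = x0 from by simpa using huv.symm)) (hx0 v hv)
    · exact absurd ((show u.1 = x0 from by simpa using huv)) (hx0 u hu)
    · exact hgen.2 hu hv huv
  have hnc : ∀ (s : Set (ℝ × ℝ)), ∀ a ∈ P, ∀ r ∈ P, a ≠ r →
      q ∈ s → a ∈ s → r ∈ s → ¬ Collinear ℝ s := by
    intro s a ha r hr har hqs has hrs hcol
    have hdet := det_of_collinear_s9 has hqs hrs hcol
    have hra : r.1 - a.1 ≠ 0 := by
      intro hh
      exact har (hgen.2 ha hr (by simp; linarith [sub_eq_zero.mp hh]))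
    have hkey : ptSlope a r * (x0 - a.1) = M - a.2 := by
      rw [ptSlope, div_mul_eq_mul_div, div_eq_iff hra]
      have e1 : q.2 = M := rfl
      have e2 : q.1 = x0 := rfl
      rw [e1, e2] at hdet
      linarith [hdet]
    have h3 := hM a ha a ha r hr
    linarith [hkey, h3]
  have hgen' : Generic (insert q P) := by
    refine ⟨?_, hinj'⟩
    intro p hp r hr s hs h1 h2 h3 hcol
    rcases Finset.mem_insert.mp hp with rfl | hp' <;>
      rcases Finset.mem_insert.mp hr with rfl | hr' <;>
      rcases Finset.mem_insert.mp hs with rfl | hs'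
    · exact h1 rfl
    · exact h1 rfl
    · exact h2 rfl
    · exact hnc _ r hr' s hs' h3 (by simp) (by simp) (by simp) hcol
    · exact h3 rfl
    · exact hnc _ p hp' s hs' h2 (by simp) (by simp) (by simp) hcol
    · exact hnc _ p hp' r hr' h1 (by simp) (by simp) (by simp) hcol
    · exact hgen.1 p hp' r hr' s hs' h1 h2 h3 hcol
  refine ⟨q, hqP, hgen', ?_, ?_⟩
  · -- no 4-cup
    rintro ⟨f, hf, hmono, hslope⟩
    by_cases hex : ∃ i0, f i0 = q
    case neg =>
      refine hfree.1 ⟨f, fun i => ?_, hmono, hslope⟩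
      rcases Finset.mem_insert.mp (hf i) with h | h
      · exact absurd ⟨i, h⟩ hex
      · exact h
    obtain ⟨i0, hi0⟩ := hex
    have hPmem : ∀ i, i ≠ i0 → f i ∈ P := by
      intro i hne
      rcases Finset.mem_insert.mp (hf i) with h | h
      · exact absurd (hmono.injective (show (fun i => (f i).1) i = (fun i => (f i).1) i0 from
          by simp only []; rw [h, hi0])) hne
      · exact h
    have hx : ∀ i, i < i0 → (f i).1 < x0 := fun i hi => by
      simpa [hi0, hq] using hmono hi
    have hx' : ∀ i, i0 < i → x0 < (f i).1 := fun i hi => by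
      simpa [hi0, hq] using hmono hi
    fin_cases i0
    · -- (q, f1, f2, f3) : slope q (f 1) huge positive
      have hqi : f 0 = q := hi0
      have hs := hslope 0 1 2 (by decide) (by decide)
      rw [hqi] at hs
      have h1 : f 1 ∈ P := hPmem 1 (by decide)
      have h2 : f 2 ∈ P := hPmem 2 (by decide)
      have hkey : ptSlope (f 1) (f 2) < ptSlope q (f 1) := by
        rw [show ptSlope q (f 1) = ((f 1).2 - M) / ((f 1).1 - x0) from rfl,
          lt_div_iff₀ (by linarith [hx' 1 (by decide)])]
        nlinarith [hM (f 1) h1 (f 1) h1 (f 2) h2]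
      linarith
    · have hqi : f 1 = q := hi0
      have hs := hslope 1 2 3 (by decide) (by decide)
      rw [hqi] at hs
      have h2 : f 2 ∈ P := hPmem 2 (by decide)
      have h3 : f 3 ∈ P := hPmem 3 (by decide)
      have hkey : ptSlope (f 2) (f 3) < ptSlope q (f 2) := by
        rw [show ptSlope q (f 2) = ((f 2).2 - M) / ((f 2).1 - x0) from rfl,
          lt_div_iff₀ (by linarith [hx' 2 (by decide)])]
        nlinarith [hM (f 2) h2 (f 2) h2 (f 3) h3]
      linarith
    · -- (f0, f1, q, f3) : slope (f 1) q huge negative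
      have hqi : f 2 = q := hi0
      have hs := hslope 0 1 2 (by decide) (by decide)
      rw [hqi] at hs
      have h0 : f 0 ∈ P := hPmem 0 (by decide)
      have h1 : f 1 ∈ P := hPmem 1 (by decide)
      have hkey : ptSlope (f 1) q < ptSlope (f 0) (f 1) := by
        rw [show ptSlope (f 1) q = (M - (f 1).2) / (x0 - (f 1).1) from rfl,
          div_lt_iff₀ (by linarith [hx 1 (by decide)])]
        nlinarith [hM (f 1) h1 (f 0) h0 (f 1) h1]
      linarith
    · have hqi : f 3 = q := hi0
      have hs := hslope 1 2 3 (by decide) (by decide)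
      rw [hqi] at hs
      have h1 : f 1 ∈ P := hPmem 1 (by decide)
      have h2 : f 2 ∈ P := hPmem 2 (by decide)
      have hkey : ptSlope (f 2) q < ptSlope (f 1) (f 2) := by
        rw [show ptSlope (f 2) q = (M - (f 2).2) / (x0 - (f 2).1) from rfl,
          div_lt_iff₀ (by linarith [hx 2 (by decide)])]
        nlinarith [hM (f 2) h2 (f 1) h1 (f 2) h2]
      linarith
  · -- no 4-cap
    rintro ⟨f, hf, hmono, hslope⟩
    by_cases hex : ∃ i0, f i0 = q
    case neg =>
      refine hfree.2 ⟨f, fun i => ?_, hmono, hslope⟩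
      rcases Finset.mem_insert.mp (hf i) with h | h
      · exact absurd ⟨i, h⟩ hex
      · exact h
    obtain ⟨i0, hi0⟩ := hex
    have hPmem : ∀ i, i ≠ i0 → f i ∈ P := by
      intro i hne
      rcases Finset.mem_insert.mp (hf i) with h | h
      · exact absurd (hmono.injective (show (fun i => (f i).1) i = (fun i => (f i).1) i0 from
          by simp only []; rw [h, hi0])) hne
      · exact h
    have hx : ∀ i, i < i0 → (f i).1 < x0 := fun i hi => by
      simpa [hi0, hq] using hmono hi
    have hx' : ∀ i, i0 < i → x0 < (f i).1 := fun i hi => by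
      simpa [hi0, hq] using hmono hi
    fin_cases i0
    · exact hR (f 1) (f 2) (f 3) (hPmem 1 (by decide)) (hPmem 2 (by decide))
        (hPmem 3 (by decide)) (hx' 1 (by decide)) (hmono (by decide)) (hmono (by decide))
        (hslope 1 2 3 (by decide) (by decide))
    · -- f 1 = q : slope (f 0) q is < 0, slope q (f 2) is > 0, cap needs reverse
      have hqi : f 1 = q := hi0
      have hs := hslope 0 1 2 (by decide) (by decide)
      rw [hqi] at hs
      have hl : ptSlope (f 0) q < 0 := by
        rw [show ptSlope (f 0) q = (M - (f 0).2) / (x0 - (f 0).1) from rfl]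
        have h0 : f 0 ∈ P := hPmem 0 (by decide)
        exact div_neg_of_neg_of_pos (by linarith [hMp (f 0) h0]) (by linarith [hx 0 (by decide)])
      have hr : (0:ℝ) < ptSlope q (f 2) := by
        rw [show ptSlope q (f 2) = ((f 2).2 - M) / ((f 2).1 - x0) from rfl]
        have h2 : f 2 ∈ P := hPmem 2 (by decide)
        exact div_pos (by linarith [hMp (f 2) h2]) (by linarith [hx' 2 (by decide)])
      linarith
    · have hqi : f 2 = q := hi0
      have hs := hslope 1 2 3 (by decide) (by decide)
      rw [hqi] at hs
      have hl : ptSlope (f 1) q < 0 := by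
        rw [show ptSlope (f 1) q = (M - (f 1).2) / (x0 - (f 1).1) from rfl]
        have h1 : f 1 ∈ P := hPmem 1 (by decide)
        exact div_neg_of_neg_of_pos (by linarith [hMp (f 1) h1]) (by linarith [hx 1 (by decide)])
      have hr : (0:ℝ) < ptSlope q (f 3) := by
        rw [show ptSlope q (f 3) = ((f 3).2 - M) / ((f 3).1 - x0) from rfl]
        have h3 : f 3 ∈ P := hPmem 3 (by decide)
        exact div_pos (by linarith [hMp (f 3) h3]) (by linarith [hx' 3 (by decide)])
      linarith
    · exact hL (f 0) (f 1) (f 2) (hPmem 0 (by decide)) (hPmem 1 (by decide))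
        (hPmem 2 (by decide)) (hmono (by decide)) (hmono (by decide)) (hx 2 (by decide))
        (hslope 0 1 2 (by decide) (by decide))

lemma extendable {P : Finset (ℝ × ℝ)} (hgen : Generic P) (hfree : CupCapFree P 4 4)
    (hcard : P.card ≤ 5) :
    ∃ q ∉ P, Generic (insert q P) ∧ CupCapFree (insert q P) 4 4 := by
  classical
  obtain ⟨g, hg1, hg2, hg3⟩ := exists_sorted_enum P hgen.2
  by_cases hc2 : P.card ≤ 2
  · -- fewer than 3 points: no triples at all
    obtain ⟨B, hB⟩ := Finset.exists_le (P.image (fun p : ℝ × ℝ => p.1))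
    have hx0 : ∀ p ∈ P, p.1 ≠ B + 1 := by
      intro p hp
      have := hB p.1 (Finset.mem_image_of_mem _ hp)
      linarith
    have htriple : ∀ a b c : ℝ × ℝ, a ∈ P → b ∈ P → c ∈ P →
        a.1 < b.1 → b.1 < c.1 → False := by
      intro a b c ha hb hc h1 h2
      obtain ⟨ia, rfl⟩ := hg3 a ha
      obtain ⟨ib, rfl⟩ := hg3 b hb
      obtain ⟨ic, rfl⟩ := hg3 c hc
      have l1 : ia < ib := hg2.lt_iff_lt.mp h1
      have l2 : ib < ic := hg2.lt_iff_lt.mp h2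
      have := ic.2
      rw [Fin.lt_def] at l1 l2
      omega
    exact insert_high hgen hfree (B + 1) hx0
      (fun a b c ha hb hc h1 h2 _ _ => htriple a b c ha hb hc h1 h2)
      (fun a b c ha hb hc _ h1 h2 _ => htriple a b c ha hb hc h1 h2)
  · by_cases hc4 : P.card ≤ 4
    · -- 3 or 4 points: split 2 / ≤2
      push_neg at hc2
      have h1n : (1 : ℕ) < P.card := by omega
      have h2n : (2 : ℕ) < P.card := by omega
      set i1 : Fin P.card := ⟨1, h1n⟩ with hi1
      set i2 : Fin P.card := ⟨2, h2n⟩ with hi2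
      have hv1 : (i1 : ℕ) = 1 := rfl
      have hv2 : (i2 : ℕ) = 2 := rfl
      set x0 : ℝ := ((g i1).1 + (g i2).1) / 2 with hx0def
      have h12 : (g i1).1 < (g i2).1 := hg2 (by rw [Fin.lt_def]; omega)
      have hlt1 : (g i1).1 < x0 := by rw [hx0def]; linarith
      have hlt2 : x0 < (g i2).1 := by rw [hx0def]; linarith
      have hidxL : ∀ i : Fin P.card, (g i).1 < x0 → (i : ℕ) ≤ 1 := by
        intro i hi
        by_contra hh
        push_neg at hh
        have : i2 ≤ i := by rw [Fin.le_def]; omega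
        have := hg2.monotone this
        linarith
      have hidxR : ∀ i : Fin P.card, x0 < (g i).1 → 2 ≤ (i : ℕ) := by
        intro i hi
        by_contra hh
        push_neg at hh
        have : i ≤ i1 := by rw [Fin.le_def]; omega
        have := hg2.monotone this
        linarith
      have hx0 : ∀ p ∈ P, p.1 ≠ x0 := by
        intro p hp heq
        obtain ⟨i, rfl⟩ := hg3 p hp
        rcases lt_or_ge (i : ℕ) 2 with h | h
        · have : i ≤ i1 := by rw [Fin.le_def]; omega
          have := hg2.monotone this
          linarith
        · have : i2 ≤ i := by rw [Fin.le_def]; omega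
          have := hg2.monotone this
          linarith
      have htriple : ∀ a b c : ℝ × ℝ, a ∈ P → b ∈ P → c ∈ P →
          a.1 < b.1 → b.1 < c.1 → (c.1 < x0 ∨ x0 < a.1) → False := by
        intro a b c ha hb hc h1 h2 hside
        obtain ⟨ia, rfl⟩ := hg3 a ha
        obtain ⟨ib, rfl⟩ := hg3 b hb
        obtain ⟨ic, rfl⟩ := hg3 c hc
        have l1 : ia < ib := hg2.lt_iff_lt.mp h1
        have l2 : ib < ic := hg2.lt_iff_lt.mp h2
        rw [Fin.lt_def] at l1 l2
        rcases hside with hs | hs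
        · have hle : (ic : ℕ) ≤ 1 := hidxL ic hs
          omega
        · have hge : 2 ≤ (ia : ℕ) := hidxR ia hs
          have := ic.2
          omega
      exact insert_high hgen hfree x0 hx0
        (fun a b c ha hb hc h1 h2 h3 _ => htriple a b c ha hb hc h1 h2 (Or.inl h3))
        (fun a b c ha hb hc h3 h1 h2 _ => htriple a b c ha hb hc h1 h2 (Or.inr h3))
    · -- exactly 5 points: split 3 / 2 and use the type of the left triple
      push_neg at hc4
      have hn : P.card = 5 := by omega
      have h0n : (0 : ℕ) < P.card := by omega
      have h1n : (1 : ℕ) < P.card := by omega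
      have h2n : (2 : ℕ) < P.card := by omega
      have h3n : (3 : ℕ) < P.card := by omega
      set i0 : Fin P.card := ⟨0, h0n⟩ with hi0
      set i1 : Fin P.card := ⟨1, h1n⟩ with hi1
      set i2 : Fin P.card := ⟨2, h2n⟩ with hi2
      set i3 : Fin P.card := ⟨3, h3n⟩ with hi3
      have hv0 : (i0 : ℕ) = 0 := rfl
      have hv1 : (i1 : ℕ) = 1 := rfl
      have hv2 : (i2 : ℕ) = 2 := rfl
      have hv3 : (i3 : ℕ) = 3 := rfl
      set x0 : ℝ := ((g i2).1 + (g i3).1) / 2 with hx0def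
      have h23 : (g i2).1 < (g i3).1 := hg2 (by rw [Fin.lt_def]; omega)
      have hlt1 : (g i2).1 < x0 := by rw [hx0def]; linarith
      have hlt2 : x0 < (g i3).1 := by rw [hx0def]; linarith
      have hidxL : ∀ i : Fin P.card, (g i).1 < x0 → (i : ℕ) ≤ 2 := by
        intro i hi
        by_contra hh
        push_neg at hh
        have : i3 ≤ i := by rw [Fin.le_def]; omega
        have := hg2.monotone this
        linarith
      have hidxR : ∀ i : Fin P.card, x0 < (g i).1 → 3 ≤ (i : ℕ) := by
        intro i hi
        by_contra hh
        push_neg at hh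
        have : i ≤ i2 := by rw [Fin.le_def]; omega
        have := hg2.monotone this
        linarith
      have hx0 : ∀ p ∈ P, p.1 ≠ x0 := by
        intro p hp heq
        obtain ⟨i, rfl⟩ := hg3 p hp
        rcases lt_or_ge (i : ℕ) 3 with h | h
        · have : i ≤ i2 := by rw [Fin.le_def]; omega
          have := hg2.monotone this
          linarith
        · have : i3 ≤ i := by rw [Fin.le_def]; omega
          have := hg2.monotone this
          linarith
      -- a left triple must be exactly (g i0, g i1, g i2)
      have hLtriple : ∀ a b c : ℝ × ℝ, a ∈ P → b ∈ P → c ∈ P →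
          a.1 < b.1 → b.1 < c.1 → c.1 < x0 → a = g i0 ∧ b = g i1 ∧ c = g i2 := by
        intro a b c ha hb hc h1 h2 h3
        obtain ⟨ia, rfl⟩ := hg3 a ha
        obtain ⟨ib, rfl⟩ := hg3 b hb
        obtain ⟨ic, rfl⟩ := hg3 c hc
        have l1 : ia < ib := hg2.lt_iff_lt.mp h1
        have l2 : ib < ic := hg2.lt_iff_lt.mp h2
        rw [Fin.lt_def] at l1 l2
        have hle : (ic : ℕ) ≤ 2 := hidxL ic h3
        refine ⟨?_, ?_, ?_⟩ <;> (congr 1; rw [Fin.ext_iff]; omega)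
      have hRtriple : ∀ a b c : ℝ × ℝ, a ∈ P → b ∈ P → c ∈ P →
          x0 < a.1 → a.1 < b.1 → b.1 < c.1 → False := by
        intro a b c ha hb hc h3 h1 h2
        obtain ⟨ia, rfl⟩ := hg3 a ha
        obtain ⟨ib, rfl⟩ := hg3 b hb
        obtain ⟨ic, rfl⟩ := hg3 c hc
        have l1 : ia < ib := hg2.lt_iff_lt.mp h1
        have l2 : ib < ic := hg2.lt_iff_lt.mp h2
        rw [Fin.lt_def] at l1 l2
        have hge : 3 ≤ (ia : ℕ) := hidxR ia h3
        have := ic.2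
        omega
      by_cases hcup : ptSlope (g i0) (g i1) < ptSlope (g i1) (g i2)
      · -- left triple is a cup: insert a low point
        refine insert_low hgen hfree x0 hx0 ?_ ?_
        · intro a b c ha hb hc h1 h2 h3 hcap
          obtain ⟨ea, eb, ec⟩ := hLtriple a b c ha hb hc h1 h2 h3
          rw [ea, eb, ec] at hcap
          exact absurd hcup (not_lt.mpr (le_of_lt hcap))
        · exact fun a b c ha hb hc h3 h1 h2 _ => hRtriple a b c ha hb hc h3 h1 h2
      · -- left triple is not a cup: insert a high point
        refine insert_high hgen hfree x0 hx0 ?_ ?_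
        · intro a b c ha hb hc h1 h2 h3 hcup'
          obtain ⟨ea, eb, ec⟩ := hLtriple a b c ha hb hc h1 h2 h3
          rw [ea, eb, ec] at hcup'
          exact hcup hcup'
        · exact fun a b c ha hb hc h3 h1 h2 _ => hRtriple a b c ha hb hc h3 h1 h2

theorem sat_four_four :
    (∀ P : Finset (ℝ × ℝ), CupCapSat P 4 4 → 6 ≤ P.card) ∧
    (∃ P : Finset (ℝ × ℝ), CupCapSat P 4 4 ∧ P.card = 6) := by
  constructor
  · intro P hsat
    by_contra hlt
    push_neg at hlt
    obtain ⟨q, hq, hgen, hfree⟩ := extendable hsat.1 hsat.2.1 (by omega)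
    rcases hsat.2.2 q hq hgen with h | h
    · exact hfree.1 h
    · exact hfree.2 h
  · refine ⟨Pex, ⟨Pex_generic, Pex_free, ?_⟩, Pex_card⟩
    intro q hq hgen
    have hcard : (insert q Pex).card = 7 := by
      rw [Finset.card_insert_of_notMem hq, Pex_card]
    exact es7 hgen (by omega)
end

section
/- For all integers k, ℓ ≥ 3, sat_c(k, ℓ) ≤ sat_c(k-1, ℓ) + sat_c(k, ℓ-1). -/
-- ## Auxiliary lemmas

lemma slope_med_le {p q r : ℝ × ℝ} (h1 : p.1 < q.1) (h2 : q.1 < r.1) {c : ℝ}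
    (hpq : ptSlope p q ≤ c) (hqr : ptSlope q r ≤ c) : ptSlope p r ≤ c := by
  have d1 : (0:ℝ) < q.1 - p.1 := by linarith
  have d2 : (0:ℝ) < r.1 - q.1 := by linarith
  have e1 := (div_le_iff₀ d1).mp hpq
  have e2 := (div_le_iff₀ d2).mp hqr
  rw [ptSlope, div_le_iff₀ (by linarith : (0:ℝ) < r.1 - p.1)]
  nlinarith

lemma slope_med_ge {p q r : ℝ × ℝ} (h1 : p.1 < q.1) (h2 : q.1 < r.1) {c : ℝ}
    (hpq : c ≤ ptSlope p q) (hqr : c ≤ ptSlope q r) : c ≤ ptSlope p r := by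
  have d1 : (0:ℝ) < q.1 - p.1 := by linarith
  have d2 : (0:ℝ) < r.1 - q.1 := by linarith
  have e1 := (le_div_iff₀ d1).mp hpq
  have e2 := (le_div_iff₀ d2).mp hqr
  rw [ptSlope, le_div_iff₀ (by linarith : (0:ℝ) < r.1 - p.1)]
  nlinarith

lemma slope_med_lt {p q r : ℝ × ℝ} (h1 : p.1 < q.1) (h2 : q.1 < r.1) {c : ℝ}
    (hpq : ptSlope p q < c) (hqr : ptSlope q r < c) : ptSlope p r < c := by
  have d1 : (0:ℝ) < q.1 - p.1 := by linarith
  have d2 : (0:ℝ) < r.1 - q.1 := by linarith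
  have e1 := (div_lt_iff₀ d1).mp hpq
  have e2 := (div_lt_iff₀ d2).mp hqr
  rw [ptSlope, div_lt_iff₀ (by linarith : (0:ℝ) < r.1 - p.1)]
  nlinarith

lemma slope_med_gt {p q r : ℝ × ℝ} (h1 : p.1 < q.1) (h2 : q.1 < r.1) {c : ℝ}
    (hpq : c < ptSlope p q) (hqr : c < ptSlope q r) : c < ptSlope p r := by
  have d1 : (0:ℝ) < q.1 - p.1 := by linarith
  have d2 : (0:ℝ) < r.1 - q.1 := by linarith
  have e1 := (lt_div_iff₀ d1).mp hpq
  have e2 := (lt_div_iff₀ d2).mp hqr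
  rw [ptSlope, lt_div_iff₀ (by linarith : (0:ℝ) < r.1 - p.1)]
  nlinarith

lemma collinear_of_ptSlope_eq {p q r : ℝ × ℝ} (hpq : p.1 ≠ q.1) (hqr : q.1 ≠ r.1)
    (h : ptSlope p q = ptSlope q r) : Collinear ℝ ({p, q, r} : Set (ℝ × ℝ)) := by
  rw [collinear_iff_of_mem (Set.mem_insert p _)]
  refine ⟨q - p, ?_⟩
  intro x hx
  have hq1 : q.1 - p.1 ≠ 0 := sub_ne_zero.mpr (Ne.symm hpq)
  have hr1 : r.1 - q.1 ≠ 0 := sub_ne_zero.mpr (Ne.symm hqr)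
  have key : (r.1 - p.1) * (q.2 - p.2) = (r.2 - p.2) * (q.1 - p.1) := by
    have h' : (q.2 - p.2) * (r.1 - q.1) = (r.2 - q.2) * (q.1 - p.1) := by
      rw [ptSlope, ptSlope, div_eq_div_iff hq1 hr1] at h
      linarith [h]
    nlinarith [h']
  rcases hx with rfl | hx
  · exact ⟨0, by simp [vadd_eq_add]⟩
  rcases hx with rfl | hx
  · exact ⟨1, by simp [vadd_eq_add]⟩
  rcases hx with rfl
  refine ⟨(x.1 - p.1) / (q.1 - p.1), ?_⟩
  have e : ((x.1 - p.1) / (q.1 - p.1)) • (q - p) +ᵥ p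
      = ((x.1 - p.1) / (q.1 - p.1) * (q.1 - p.1) + p.1,
         (x.1 - p.1) / (q.1 - p.1) * (q.2 - p.2) + p.2) := rfl
  rw [e, Prod.ext_iff]
  dsimp only
  constructor
  · field_simp
    ring
  · have h2 : x.2 - p.2 = (x.1 - p.1) * (q.2 - p.2) / (q.1 - p.1) := by
      rw [eq_div_iff hq1]; nlinarith [key]
    rw [div_mul_eq_mul_div]
    linarith [h2]

lemma ptSlope_eq_of_collinear {p q r : ℝ × ℝ} (hpq : p.1 ≠ q.1) (hqr : q.1 ≠ r.1)
    (h : Collinear ℝ ({p, q, r} : Set (ℝ × ℝ))) : ptSlope p q = ptSlope q r := by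
  rw [collinear_iff_of_mem (Set.mem_insert p _)] at h
  obtain ⟨v, hv⟩ := h
  obtain ⟨t1, ht1⟩ := hv q (by simp)
  obtain ⟨t2, ht2⟩ := hv r (by simp)
  have hq1 : q.1 = t1 * v.1 + p.1 := by rw [ht1]; rfl
  have hq2 : q.2 = t1 * v.2 + p.2 := by rw [ht1]; rfl
  have hr1 : r.1 = t2 * v.1 + p.1 := by rw [ht2]; rfl
  have hr2 : r.2 = t2 * v.2 + p.2 := by rw [ht2]; rfl
  have hv1 : v.1 ≠ 0 := by
    intro h0; apply hpq; rw [hq1, h0]; ring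
  have ht1' : t1 ≠ 0 := by
    intro h0; apply hpq; rw [hq1, h0]; ring
  have hd : t2 - t1 ≠ 0 := by
    intro h0
    apply hqr
    have h2 : t2 = t1 := by linarith
    rw [hq1, hr1, h2]
  rw [ptSlope, ptSlope, hq1, hq2, hr1, hr2]
  rw [show t2 * v.2 + p.2 - (t1 * v.2 + p.2) = (t2 - t1) * v.2 by ring,
      show t2 * v.1 + p.1 - (t1 * v.1 + p.1) = (t2 - t1) * v.1 by ring,
      show t1 * v.2 + p.2 - p.2 = t1 * v.2 by ring,
      show t1 * v.1 + p.1 - p.1 = t1 * v.1 by ring,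
      mul_div_mul_left _ _ ht1', mul_div_mul_left _ _ hd]

lemma IsCupSeq.comp {m m' : ℕ} {f : Fin m → ℝ × ℝ} (hf : IsCupSeq f) {g : Fin m' → Fin m}
    (hg : StrictMono g) : IsCupSeq (f ∘ g) :=
  ⟨fun _ _ hij => hf.1 (hg hij), fun _ _ _ hij hjk => hf.2 _ _ _ (hg hij) (hg hjk)⟩

lemma IsCapSeq.comp {m m' : ℕ} {f : Fin m → ℝ × ℝ} (hf : IsCapSeq f) {g : Fin m' → Fin m}
    (hg : StrictMono g) : IsCapSeq (f ∘ g) :=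
  ⟨fun _ _ hij => hf.1 (hg hij), fun _ _ _ hij hjk => hf.2 _ _ _ (hg hij) (hg hjk)⟩

lemma slope_to_last {m : ℕ} {f : Fin m → ℝ × ℝ} (hf : IsCupSeq f) {i j k : Fin m}
    (hij : i < j) (hjk : j < k) : ptSlope (f i) (f k) ≤ ptSlope (f j) (f k) :=
  slope_med_le (hf.1 hij) (hf.1 hjk) (le_of_lt (hf.2 i j k hij hjk)) le_rfl

lemma slope_from_first {m : ℕ} {f : Fin m → ℝ × ℝ} (hf : IsCapSeq f) {i j k : Fin m}
    (hij : i < j) (hjk : j < k) : ptSlope (f i) (f k) ≤ ptSlope (f i) (f j) :=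
  slope_med_le (hf.1 hij) (hf.1 hjk) le_rfl (le_of_lt (hf.2 i j k hij hjk))

lemma cup_of_two {f : Fin 2 → ℝ × ℝ} (hx : (f 0).1 < (f 1).1) : IsCupSeq f := by
  constructor
  · intro i j hij
    fin_cases i <;> fin_cases j <;> simp_all <;> exact absurd hij (by decide)
  · intro i j k hij hjk
    exfalso
    rw [Fin.lt_def] at hij hjk
    have := k.isLt; omega

lemma cap_of_two {f : Fin 2 → ℝ × ℝ} (hx : (f 0).1 < (f 1).1) : IsCapSeq f := by
  constructor
  · intro i j hij
    fin_cases i <;> fin_cases j <;> simp_all <;> exact absurd hij (by decide)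
  · intro i j k hij hjk
    exfalso
    rw [Fin.lt_def] at hij hjk
    have := k.isLt; omega

lemma cup_snoc {m : ℕ} {f : Fin (m + 2) → ℝ × ℝ} (hf : IsCupSeq f) {z : ℝ × ℝ}
    (hx : (f (Fin.last (m + 1))).1 < z.1)
    (hs : ptSlope (f ⟨m, by omega⟩) (f (Fin.last (m + 1))) < ptSlope (f (Fin.last (m + 1))) z) :
    IsCupSeq (Fin.snoc f z) := by
  have hxall : ∀ i : Fin (m + 2), (f i).1 ≤ (f (Fin.last (m + 1))).1 := fun i =>
    hf.1.monotone (Fin.le_last i)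
  have key2 : ∀ i : Fin (m + 2), i < Fin.last (m + 1) →
      ptSlope (f i) (f (Fin.last (m + 1))) < ptSlope (f (Fin.last (m + 1))) z := by
    intro i hi
    refine lt_of_le_of_lt ?_ hs
    rcases eq_or_lt_of_le (show i ≤ ⟨m, by omega⟩ from by
      rw [Fin.le_def]; rw [Fin.lt_def] at hi; simpa using Nat.lt_succ_iff.mp (by simpa using hi)) with h | h
    · rw [h]
    · exact slope_to_last hf h (by rw [Fin.lt_def]; simp)
  constructor
  · intro i j hij
    rcases Fin.eq_castSucc_or_eq_last j with ⟨j', rfl⟩ | rfl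
    · rcases Fin.eq_castSucc_or_eq_last i with ⟨i', rfl⟩ | rfl
      · simp only [Fin.snoc_castSucc]
        exact hf.1 (Fin.castSucc_lt_castSucc_iff.mp hij)
      · exact absurd hij (by rw [Fin.lt_def]; simp)
    · rcases Fin.eq_castSucc_or_eq_last i with ⟨i', rfl⟩ | rfl
      · simp only [Fin.snoc_castSucc, Fin.snoc_last]
        exact lt_of_le_of_lt (hxall i') hx
      · exact absurd hij (lt_irrefl _)
  · intro i j kk hij hjk
    rcases Fin.eq_castSucc_or_eq_last kk with ⟨k', rfl⟩ | rfl
    · obtain ⟨j', rfl⟩ : ∃ j', j = Fin.castSucc j' := by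
        rcases Fin.eq_castSucc_or_eq_last j with h | rfl
        · exact h
        · exact absurd hjk (by rw [Fin.lt_def]; simp)
      obtain ⟨i', rfl⟩ : ∃ i', i = Fin.castSucc i' := by
        rcases Fin.eq_castSucc_or_eq_last i with h | rfl
        · exact h
        · exact absurd hij (by rw [Fin.lt_def]; simp)
      simp only [Fin.snoc_castSucc]
      exact hf.2 _ _ _ (Fin.castSucc_lt_castSucc_iff.mp hij) (Fin.castSucc_lt_castSucc_iff.mp hjk)
    · obtain ⟨j', rfl⟩ : ∃ j', j = Fin.castSucc j' := by
        rcases Fin.eq_castSucc_or_eq_last j with h | rfl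
        · exact h
        · exact absurd hjk (lt_irrefl _)
      obtain ⟨i', rfl⟩ : ∃ i', i = Fin.castSucc i' := by
        rcases Fin.eq_castSucc_or_eq_last i with h | rfl
        · exact h
        · exact absurd (hij.trans hjk) (by rw [Fin.lt_def]; simp)
      simp only [Fin.snoc_castSucc, Fin.snoc_last]
      have hij' : i' < j' := Fin.castSucc_lt_castSucc_iff.mp hij
      rcases eq_or_lt_of_le (Fin.le_last j') with hjl | hjl
      · rw [hjl]
        exact key2 i' (hjl ▸ hij')
      · have h1 : ptSlope (f i') (f j') < ptSlope (f j') (f (Fin.last (m + 1))) :=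
          hf.2 _ _ _ hij' hjl
        have h2 := key2 j' hjl
        exact slope_med_gt (hf.1 hjl) hx h1 (h1.trans h2)

lemma cap_cons {m : ℕ} {f : Fin (m + 2) → ℝ × ℝ} (hf : IsCapSeq f) {w : ℝ × ℝ}
    (hx : w.1 < (f 0).1)
    (hs : ptSlope (f 0) (f 1) < ptSlope w (f 0)) :
    IsCapSeq (Fin.cons w f) := by
  have hxall : ∀ i : Fin (m + 2), (f 0).1 ≤ (f i).1 := fun i => hf.1.monotone (Fin.zero_le i)
  have key2 : ∀ j : Fin (m + 2), 0 < j → ptSlope (f 0) (f j) < ptSlope w (f 0) := by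
    intro j hj
    refine lt_of_le_of_lt ?_ hs
    rcases eq_or_lt_of_le (show (1 : Fin (m+2)) ≤ j from by
      rw [Fin.le_def, Fin.val_one]; rw [Fin.lt_def, Fin.val_zero] at hj; omega) with h | h
    · rw [← h]
    · exact slope_from_first hf (by rw [Fin.lt_def]; simp) h
  constructor
  · intro i j hij
    rcases Fin.eq_zero_or_eq_succ j with rfl | ⟨j', rfl⟩
    · exact absurd hij (Fin.not_lt_zero _)
    · rcases Fin.eq_zero_or_eq_succ i with rfl | ⟨i', rfl⟩
      · simp only [Fin.cons_zero, Fin.cons_succ]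
        exact lt_of_lt_of_le hx (hxall j')
      · simp only [Fin.cons_succ]
        exact hf.1 (Fin.succ_lt_succ_iff.mp hij)
  · intro i j kk hij hjk
    obtain ⟨k', rfl⟩ : ∃ k', kk = Fin.succ k' := by
      rcases Fin.eq_zero_or_eq_succ kk with rfl | h
      · exact absurd (hij.trans hjk) (Fin.not_lt_zero _)
      · exact h
    obtain ⟨j', rfl⟩ : ∃ j', j = Fin.succ j' := by
      rcases Fin.eq_zero_or_eq_succ j with rfl | h
      · exact absurd hij (Fin.not_lt_zero _)
      · exact h
    rcases Fin.eq_zero_or_eq_succ i with rfl | ⟨i', rfl⟩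
    · simp only [Fin.cons_zero, Fin.cons_succ]
      have hjk' : j' < k' := Fin.succ_lt_succ_iff.mp hjk
      rcases Fin.eq_zero_or_eq_succ j' with rfl | ⟨j'', rfl⟩
      · exact key2 k' (by simpa using hjk')
      · have hj0 : (0 : Fin (m+2)) < j''.succ := Fin.succ_pos _
        have h1 : ptSlope (f j''.succ) (f k') < ptSlope (f 0) (f j''.succ) :=
          hf.2 _ _ _ hj0 hjk'
        have h2 := key2 j''.succ hj0
        exact slope_med_gt hx (hf.1 hj0) (h1.trans h2) h1
    · simp only [Fin.cons_succ]
      exact hf.2 _ _ _ (Fin.succ_lt_succ_iff.mp hij) (Fin.succ_lt_succ_iff.mp hjk)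

lemma forall_snoc_mem {α : Type} {m : ℕ} {f : Fin m → α} {z : α} {S : Finset α}
    (hf : ∀ i, f i ∈ S) (hz : z ∈ S) : ∀ i, (Fin.snoc f z : Fin (m+1) → α) i ∈ S := by
  intro i
  rcases Fin.eq_castSucc_or_eq_last i with ⟨i', rfl⟩ | rfl
  · rw [Fin.snoc_castSucc]; exact hf i'
  · rw [Fin.snoc_last]; exact hz

lemma forall_cons_mem {α : Type} {m : ℕ} {f : Fin m → α} {w : α} {S : Finset α}
    (hf : ∀ i, f i ∈ S) (hw : w ∈ S) : ∀ i, (Fin.cons w f : Fin (m+1) → α) i ∈ S := by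
  intro i
  rcases Fin.eq_zero_or_eq_succ i with rfl | ⟨i', rfl⟩
  · rw [Fin.cons_zero]; exact hw
  · rw [Fin.cons_succ]; exact hf i'

-- ### monotonicity
lemma Generic.mono {P Q : Finset (ℝ × ℝ)} (h : Generic P) (hsub : Q ⊆ P) : Generic Q :=
  ⟨fun p hp q hq r hr => h.1 p (hsub hp) q (hsub hq) r (hsub hr),
   h.2.mono (Finset.coe_subset.mpr hsub)⟩

lemma HasCup.mono {P Q : Finset (ℝ × ℝ)} {k : ℕ} (h : HasCup Q k) (hsub : Q ⊆ P) :
    HasCup P k := by obtain ⟨f, hm, hc⟩ := h; exact ⟨f, fun i => hsub (hm i), hc⟩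

lemma HasCap.mono {P Q : Finset (ℝ × ℝ)} {l : ℕ} (h : HasCap Q l) (hsub : Q ⊆ P) :
    HasCap P l := by obtain ⟨f, hm, hc⟩ := h; exact ⟨f, fun i => hsub (hm i), hc⟩

-- ### affine transform
noncomputable def linT (a b c d : ℝ) (p : ℝ × ℝ) : ℝ × ℝ := (a * p.1 + b, c * p.2 + d)

lemma linT_slope (a b c d : ℝ) (p q : ℝ × ℝ) :
    ptSlope (linT a b c d p) (linT a b c d q) = (c / a) * ptSlope p q := by
  show (c * q.2 + d - (c * p.2 + d)) / (a * q.1 + b - (a * p.1 + b)) = _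
  rw [show c * q.2 + d - (c * p.2 + d) = c * (q.2 - p.2) by ring,
      show a * q.1 + b - (a * p.1 + b) = a * (q.1 - p.1) by ring,
      mul_div_mul_comm, ptSlope]

lemma linT_inj {a b c d : ℝ} (ha : a ≠ 0) (hc : c ≠ 0) :
    Function.Injective (linT a b c d) := by
  intro p q h
  rw [linT, linT, Prod.ext_iff] at h
  obtain ⟨h1, h2⟩ := h
  have h1' : a * p.1 + b = a * q.1 + b := h1
  have h2' : c * p.2 + d = c * q.2 + d := h2
  have e1 : p.1 = q.1 :=
    mul_left_cancel₀ ha (by linarith : a * p.1 = a * q.1)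
  have e2 : p.2 = q.2 :=
    mul_left_cancel₀ hc (by linarith : c * p.2 = c * q.2)
  exact Prod.ext e1 e2

lemma linT_comp_inv {a b c d : ℝ} (ha : a ≠ 0) (hc : c ≠ 0) (p : ℝ × ℝ) :
    linT a⁻¹ (-(b / a)) c⁻¹ (-(d / c)) (linT a b c d p) = p := by
  rw [linT, linT, Prod.ext_iff]
  constructor
  · show a⁻¹ * (a * p.1 + b) + -(b / a) = p.1
    field_simp
    ring
  · show c⁻¹ * (c * p.2 + d) + -(d / c) = p.2
    field_simp
    ring

lemma linT_inv_comp {a b c d : ℝ} (ha : a ≠ 0) (hc : c ≠ 0) (p : ℝ × ℝ) :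
    linT a b c d (linT a⁻¹ (-(b / a)) c⁻¹ (-(d / c)) p) = p := by
  rw [linT, linT, Prod.ext_iff]
  constructor
  · show a * (a⁻¹ * p.1 + -(b / a)) + b = p.1
    field_simp
    ring
  · show c * (c⁻¹ * p.2 + -(d / c)) + d = p.2
    field_simp
    ring

lemma image_linT_inv {a b c d : ℝ} (ha : a ≠ 0) (hc : c ≠ 0) (P : Finset (ℝ × ℝ)) :
    (P.image (linT a b c d)).image (linT a⁻¹ (-(b / a)) c⁻¹ (-(d / c))) = P := by
  rw [Finset.image_image]
  have h : P.image (linT a⁻¹ (-(b / a)) c⁻¹ (-(d / c)) ∘ linT a b c d) = P.image id :=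
    Finset.image_congr (fun p _ => linT_comp_inv ha hc p)
  rw [h, Finset.image_id]

lemma linT_cup {a b c d : ℝ} (ha : 0 < a) (hc : 0 < c) {m : ℕ} {f : Fin m → ℝ × ℝ}
    (hf : IsCupSeq f) : IsCupSeq (linT a b c d ∘ f) := by
  constructor
  · intro i j hij
    show a * (f i).1 + b < a * (f j).1 + b
    have := hf.1 hij
    nlinarith
  · intro i j k hij hjk
    simp only [Function.comp_apply, linT_slope]
    exact mul_lt_mul_of_pos_left (hf.2 i j k hij hjk) (div_pos hc ha)

lemma linT_cap {a b c d : ℝ} (ha : 0 < a) (hc : 0 < c) {m : ℕ} {f : Fin m → ℝ × ℝ}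
    (hf : IsCapSeq f) : IsCapSeq (linT a b c d ∘ f) := by
  constructor
  · intro i j hij
    show a * (f i).1 + b < a * (f j).1 + b
    have := hf.1 hij
    nlinarith
  · intro i j k hij hjk
    simp only [Function.comp_apply, linT_slope]
    exact mul_lt_mul_of_pos_left (hf.2 i j k hij hjk) (div_pos hc ha)

lemma linT_hasCup {a b c d : ℝ} (ha : 0 < a) (hc : 0 < c) {P : Finset (ℝ × ℝ)} {k : ℕ}
    (h : HasCup P k) : HasCup (P.image (linT a b c d)) k := by
  obtain ⟨f, hm, hcup⟩ := h
  exact ⟨linT a b c d ∘ f, fun i => Finset.mem_image_of_mem _ (hm i), linT_cup ha hc hcup⟩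

lemma linT_hasCap {a b c d : ℝ} (ha : 0 < a) (hc : 0 < c) {P : Finset (ℝ × ℝ)} {l : ℕ}
    (h : HasCap P l) : HasCap (P.image (linT a b c d)) l := by
  obtain ⟨f, hm, hcap⟩ := h
  exact ⟨linT a b c d ∘ f, fun i => Finset.mem_image_of_mem _ (hm i), linT_cap ha hc hcap⟩

lemma linT_generic {a b c d : ℝ} (ha : 0 < a) (hc : 0 < c) {P : Finset (ℝ × ℝ)}
    (hP : Generic P) : Generic (P.image (linT a b c d)) := by
  have ha' : a ≠ 0 := ne_of_gt ha
  have hc' : c ≠ 0 := ne_of_gt hc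
  have hxne : ∀ p ∈ P, ∀ q ∈ P, p ≠ q → p.1 ≠ q.1 := by
    intro p hp q hq hne he
    exact hne (hP.2 (Finset.mem_coe.mpr hp) (Finset.mem_coe.mpr hq) he)
  constructor
  · intro p' hp' q' hq' r' hr' hpq hpr hqr hcol
    obtain ⟨p, hp, rfl⟩ := Finset.mem_image.mp hp'
    obtain ⟨q, hq, rfl⟩ := Finset.mem_image.mp hq'
    obtain ⟨r, hr, rfl⟩ := Finset.mem_image.mp hr'
    have hpq' : p ≠ q := fun h => hpq (congrArg _ h)
    have hpr' : p ≠ r := fun h => hpr (congrArg _ h)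
    have hqr' : q ≠ r := fun h => hqr (congrArg _ h)
    have hxpq : p.1 ≠ q.1 := hxne p hp q hq hpq'
    have hxqr : q.1 ≠ r.1 := hxne q hq r hr hqr'
    have hxpq' : (linT a b c d p).1 ≠ (linT a b c d q).1 := by
      show a * p.1 + b ≠ a * q.1 + b
      intro h
      exact hxpq (mul_left_cancel₀ ha' (by linarith))
    have hxqr' : (linT a b c d q).1 ≠ (linT a b c d r).1 := by
      show a * q.1 + b ≠ a * r.1 + b
      intro h
      exact hxqr (mul_left_cancel₀ ha' (by linarith))
    have heq := ptSlope_eq_of_collinear hxpq' hxqr' hcol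
    rw [linT_slope, linT_slope] at heq
    have heq' : ptSlope p q = ptSlope q r :=
      mul_left_cancel₀ (div_ne_zero hc' ha') heq
    exact hP.1 p hp q hq r hr hpq' hpr' hqr' (collinear_of_ptSlope_eq hxpq hxqr heq')
  · intro p' hp' q' hq' he
    simp only [Finset.coe_image, Set.mem_image, Finset.mem_coe] at hp' hq'
    obtain ⟨p, hp, rfl⟩ := hp'
    obtain ⟨q, hq, rfl⟩ := hq'
    have : p.1 = q.1 := by
      have : a * p.1 + b = a * q.1 + b := he
      exact mul_left_cancel₀ ha' (by linarith)
    have : p = q := hP.2 (Finset.mem_coe.mpr hp) (Finset.mem_coe.mpr hq) this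
    rw [this]

lemma linT_sat {a b c d : ℝ} (ha : 0 < a) (hc : 0 < c) {P : Finset (ℝ × ℝ)} {k l : ℕ}
    (h : CupCapSat P k l) : CupCapSat (P.image (linT a b c d)) k l := by
  obtain ⟨hgen, ⟨hfc, hfp⟩, hsat⟩ := h
  have ha' : a ≠ 0 := ne_of_gt ha
  have hc' : c ≠ 0 := ne_of_gt hc
  have hai : 0 < a⁻¹ := inv_pos.mpr ha
  have hci : 0 < c⁻¹ := inv_pos.mpr hc
  refine ⟨linT_generic ha hc hgen, ⟨?_, ?_⟩, ?_⟩
  · intro hcup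
    apply hfc
    have := linT_hasCup (b := -(b/a)) (d := -(d/c)) hai hci hcup
    rwa [image_linT_inv ha' hc'] at this
  · intro hcap
    apply hfp
    have := linT_hasCap (b := -(b/a)) (d := -(d/c)) hai hci hcap
    rwa [image_linT_inv ha' hc'] at this
  · intro q hq hgenq
    set Ti := linT a⁻¹ (-(b / a)) c⁻¹ (-(d / c)) with hTi
    have hTiT : ∀ p, Ti (linT a b c d p) = p := linT_comp_inv ha' hc'
    have hTTi : ∀ p, linT a b c d (Ti p) = p := linT_inv_comp ha' hc'
    have hq' : Ti q ∉ P := by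
      intro hmem
      apply hq
      rw [← hTTi q]
      exact Finset.mem_image_of_mem _ hmem
    have hins : insert (Ti q) P = (insert q (P.image (linT a b c d))).image Ti := by
      rw [Finset.image_insert, image_linT_inv ha' hc']
    have hgenq' : Generic (insert (Ti q) P) := by
      rw [hins]
      exact linT_generic hai hci hgenq
    have hins2 : (insert (Ti q) P).image (linT a b c d) = insert q (P.image (linT a b c d)) := by
      rw [Finset.image_insert, hTTi]
    rcases hsat (Ti q) hq' hgenq' with hcup | hcap
    · left
      have := linT_hasCup (b := b) (d := d) ha hc hcup
      rwa [hins2] at this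
    · right
      have := linT_hasCap (b := b) (d := d) ha hc hcap
      rwa [hins2] at this

lemma sat_nonempty {P : Finset (ℝ × ℝ)} {a b : ℕ} (ha : 2 ≤ a) (hb : 2 ≤ b)
    (h : CupCapSat P a b) : P.Nonempty := by
  rw [Finset.nonempty_iff_ne_empty]
  intro hP
  subst hP
  have hgen : Generic (insert ((0:ℝ), (0:ℝ)) (∅ : Finset (ℝ × ℝ))) := by
    constructor
    · intro p hp q hq r hr hpq _ _ _
      simp only [Finset.mem_insert, Finset.notMem_empty, or_false] at hp hq
      exact hpq (hp.trans hq.symm)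
    · intro p hp q hq _
      simp only [Finset.coe_insert, Finset.coe_empty, Set.mem_insert_iff,
        Set.mem_empty_iff_false, or_false] at hp hq
      rw [hp, hq]
  have key : ∀ m : ℕ, 2 ≤ m → ∀ f : Fin m → ℝ × ℝ,
      (∀ i, f i ∈ insert ((0:ℝ), (0:ℝ)) (∅ : Finset (ℝ × ℝ))) →
      ¬ StrictMono (fun i => (f i).1) := by
    intro m hm f hmem hmono
    have h0 : f ⟨0, by omega⟩ = ((0:ℝ), (0:ℝ)) := by
      have := hmem ⟨0, by omega⟩; simpa using this
    have h1 : f ⟨1, by omega⟩ = ((0:ℝ), (0:ℝ)) := by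
      have := hmem ⟨1, by omega⟩; simpa using this
    have := hmono (show (⟨0, by omega⟩ : Fin m) < ⟨1, by omega⟩ from by
      rw [Fin.mk_lt_mk]; omega)
    simp only [h0, h1] at this
    exact lt_irrefl _ this
  rcases h.2.2 ((0:ℝ), (0:ℝ)) (by simp) hgen with ⟨f, hm, hcup⟩ | ⟨f, hm, hcap⟩
  · exact key a ha f hm hcup.1
  · exact key b hb f hm hcap.1

section union
variable {Q₁ Q₂ : Finset (ℝ × ℝ)} {s : ℝ}

lemma no_long_cup {k : ℕ} (hk : 2 ≤ k)
    (hX : ∀ w ∈ Q₁, ∀ z ∈ Q₂, w.1 < z.1)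
    (hs2 : ∀ z ∈ Q₂, ∀ z' ∈ Q₂, ptSlope z z' ≤ s)
    (hcross : ∀ w ∈ Q₁, ∀ z ∈ Q₂, s < ptSlope w z)
    (h1 : ¬ HasCup Q₁ (k - 1)) (h2 : ¬ HasCup Q₂ k) :
    ¬ HasCup (Q₁ ∪ Q₂) k := by
  rintro ⟨f, hm, hcup⟩
  have hdown : ∀ i j : Fin k, i ≤ j → f j ∈ Q₁ → f i ∈ Q₁ := by
    intro i j hij hj
    rcases eq_or_lt_of_le hij with rfl | hij
    · exact hj
    rcases Finset.mem_union.mp (hm i) with h | h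
    · exact h
    · exact absurd (hcup.1 hij) (not_lt.mpr (le_of_lt (hX _ hj _ h)))
  have hup : ∀ i j : Fin k, i ≤ j → f i ∈ Q₂ → f j ∈ Q₂ := by
    intro i j hij hi
    rcases eq_or_lt_of_le hij with rfl | hij
    · exact hi
    rcases Finset.mem_union.mp (hm j) with h | h
    · exact absurd (hcup.1 hij) (not_lt.mpr (le_of_lt (hX _ h _ hi)))
    · exact h
  obtain ⟨K, rfl⟩ : ∃ K, k = K + 2 := ⟨k - 2, by omega⟩
  by_cases hsl : f ⟨K, by omega⟩ ∈ Q₁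
  · apply h1
    refine ⟨f ∘ Fin.castSucc, fun i => hdown _ ⟨K, by omega⟩ ?_ hsl, IsCupSeq.comp hcup Fin.strictMono_castSucc⟩
    rw [Fin.le_def]
    simpa using Nat.lt_succ_iff.mp i.isLt
  · have hsl2 : f ⟨K, by omega⟩ ∈ Q₂ := (Finset.mem_union.mp (hm _)).resolve_left hsl
    by_cases h0 : f 0 ∈ Q₂
    · exact h2 ⟨f, fun i => hup 0 i (Fin.zero_le i) h0, hcup⟩
    · have h0' : f 0 ∈ Q₁ := (Finset.mem_union.mp (hm 0)).resolve_right h0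
      classical
      set F : ℕ → Prop := fun n => ∃ h : n < K + 2, f ⟨n, h⟩ ∈ Q₁ with hF
      set i₀ := Nat.findGreatest F K with hi₀
      have hF0 : F 0 := show ∃ h : 0 < K + 2, f ⟨0, h⟩ ∈ Q₁ from ⟨by omega, h0'⟩
      have hspec : F i₀ := Nat.findGreatest_spec (Nat.zero_le K) hF0
      have hle : i₀ ≤ K := Nat.findGreatest_le K
      have hspec' : ∃ h : i₀ < K + 2, f ⟨i₀, h⟩ ∈ Q₁ := hspec
      have e0 : f ⟨i₀, by omega⟩ ∈ Q₁ := hspec'.elim (fun _ e => e)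
      have hiK : i₀ < K := by
        rcases eq_or_lt_of_le hle with h | h
        · exfalso
          apply hsl
          have he : (⟨K, by omega⟩ : Fin (K + 2)) = ⟨i₀, by omega⟩ := Fin.ext (show K = i₀ by omega)
          rw [he]
          exact e0
        · exact h
      have e1 : f ⟨i₀ + 1, by omega⟩ ∈ Q₂ := by
        refine (Finset.mem_union.mp (hm _)).resolve_left ?_
        intro hmem
        exact Nat.findGreatest_is_greatest (lt_add_one i₀) (by omega)
          (show F (i₀ + 1) from ⟨by omega, hmem⟩)
      have e2 : f ⟨i₀ + 2, by omega⟩ ∈ Q₂ :=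
        hup ⟨i₀ + 1, by omega⟩ ⟨i₀ + 2, by omega⟩ (by rw [Fin.mk_le_mk]; omega) e1
      have htr := hcup.2 ⟨i₀, by omega⟩ ⟨i₀ + 1, by omega⟩ ⟨i₀ + 2, by omega⟩
        (by rw [Fin.mk_lt_mk]; omega) (by rw [Fin.mk_lt_mk]; omega)
      have hb1 := hcross _ e0 _ e1
      have hb2 := hs2 _ e1 _ e2
      linarith

lemma no_long_cap {l : ℕ} (hl : 2 ≤ l)
    (hX : ∀ w ∈ Q₁, ∀ z ∈ Q₂, w.1 < z.1)
    (hs1 : ∀ w ∈ Q₁, ∀ w' ∈ Q₁, ptSlope w w' ≤ s)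
    (hcross : ∀ w ∈ Q₁, ∀ z ∈ Q₂, s < ptSlope w z)
    (h1 : ¬ HasCap Q₁ l) (h2 : ¬ HasCap Q₂ (l - 1)) :
    ¬ HasCap (Q₁ ∪ Q₂) l := by
  rintro ⟨f, hm, hcap⟩
  have hdown : ∀ i j : Fin l, i ≤ j → f j ∈ Q₁ → f i ∈ Q₁ := by
    intro i j hij hj
    rcases eq_or_lt_of_le hij with rfl | hij
    · exact hj
    rcases Finset.mem_union.mp (hm i) with h | h
    · exact h
    · exact absurd (hcap.1 hij) (not_lt.mpr (le_of_lt (hX _ hj _ h)))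
  have hup : ∀ i j : Fin l, i ≤ j → f i ∈ Q₂ → f j ∈ Q₂ := by
    intro i j hij hi
    rcases eq_or_lt_of_le hij with rfl | hij
    · exact hi
    rcases Finset.mem_union.mp (hm j) with h | h
    · exact absurd (hcap.1 hij) (not_lt.mpr (le_of_lt (hX _ h _ hi)))
    · exact h
  obtain ⟨L, rfl⟩ : ∃ L, l = L + 2 := ⟨l - 2, by omega⟩
  by_cases hsnd : f ⟨1, by omega⟩ ∈ Q₂
  · apply h2
    refine ⟨f ∘ Fin.succ, fun i => hup ⟨1, by omega⟩ (Fin.succ i) ?_ hsnd, IsCapSeq.comp hcap (Fin.strictMono_succ)⟩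
    rw [Fin.le_def]
    simp [Fin.val_succ]
  · have hsnd1 : f ⟨1, by omega⟩ ∈ Q₁ := (Finset.mem_union.mp (hm _)).resolve_right hsnd
    by_cases hlast : f (Fin.last (L + 1)) ∈ Q₁
    · exact h1 ⟨f, fun i => hdown i (Fin.last (L + 1)) (Fin.le_last i) hlast, hcap⟩
    · have hlast2 : f (Fin.last (L + 1)) ∈ Q₂ :=
        (Finset.mem_union.mp (hm _)).resolve_left hlast
      classical
      set F : ℕ → Prop := fun n => ∃ h : n < L + 2, f ⟨n, h⟩ ∈ Q₁ with hF
      set i₀ := Nat.findGreatest F (L + 1) with hi₀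
      have hF1 : F 1 := show ∃ h : 1 < L + 2, f ⟨1, h⟩ ∈ Q₁ from ⟨by omega, hsnd1⟩
      have h1le : 1 ≤ i₀ := Nat.le_findGreatest (by omega) hF1
      have hspec : F i₀ := Nat.findGreatest_spec (by omega : 1 ≤ L + 1) hF1
      have hle : i₀ ≤ L + 1 := Nat.findGreatest_le (L + 1)
      have hspec' : ∃ h : i₀ < L + 2, f ⟨i₀, h⟩ ∈ Q₁ := hspec
      have e0 : f ⟨i₀, by omega⟩ ∈ Q₁ := hspec'.elim (fun _ e => e)
      have hiL : i₀ ≤ L := by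
        rcases eq_or_lt_of_le hle with h | h
        · exfalso
          apply hlast
          have : Fin.last (L + 1) = (⟨i₀, by omega⟩ : Fin (L + 2)) := Fin.ext (show L + 1 = i₀ by omega)
          rw [this]
          exact e0
        · omega
      have em : f ⟨i₀ - 1, by omega⟩ ∈ Q₁ :=
        hdown ⟨i₀ - 1, by omega⟩ ⟨i₀, by omega⟩ (by rw [Fin.mk_le_mk]; omega) e0
      have e1 : f ⟨i₀ + 1, by omega⟩ ∈ Q₂ := by
        refine (Finset.mem_union.mp (hm _)).resolve_left ?_
        intro hmem
        exact Nat.findGreatest_is_greatest (lt_add_one i₀) (by omega)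
          (show F (i₀ + 1) from ⟨by omega, hmem⟩)
      have htr := hcap.2 ⟨i₀ - 1, by omega⟩ ⟨i₀, by omega⟩ ⟨i₀ + 1, by omega⟩
        (by rw [Fin.mk_lt_mk]; omega) (by rw [Fin.mk_lt_mk]; omega)
      have hb1 := hcross _ e0 _ e1
      have hb2 := hs1 _ em _ e0
      linarith

lemma no21 (hX : ∀ w ∈ Q₁, ∀ z ∈ Q₂, w.1 < z.1)
    (hs1 : ∀ w ∈ Q₁, ∀ w' ∈ Q₁, ptSlope w w' ≤ s)
    (hcross : ∀ w ∈ Q₁, ∀ z ∈ Q₂, s < ptSlope w z)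
    {u v t : ℝ × ℝ} (hu : u ∈ Q₁) (hv : v ∈ Q₁) (ht : t ∈ Q₂) (hne : u.1 ≠ v.1) :
    ¬ Collinear ℝ ({u, v, t} : Set (ℝ × ℝ)) := by
  intro hcol
  rcases hne.lt_or_gt with h | h
  · have heq := ptSlope_eq_of_collinear (ne_of_lt h) (ne_of_lt (hX v hv t ht)) hcol
    have h1 := hs1 u hu v hv
    have h2 := hcross v hv t ht
    linarith
  · have hcol' : Collinear ℝ ({v, u, t} : Set (ℝ × ℝ)) := by
      refine hcol.subset ?_
      intro x hx
      simp only [Set.mem_insert_iff, Set.mem_singleton_iff] at hx ⊢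
      tauto
    have heq := ptSlope_eq_of_collinear (ne_of_lt h) (ne_of_lt (hX u hu t ht)) hcol'
    have h1 := hs1 v hv u hu
    have h2 := hcross u hu t ht
    linarith

lemma no12 (hX : ∀ w ∈ Q₁, ∀ z ∈ Q₂, w.1 < z.1)
    (hs2 : ∀ z ∈ Q₂, ∀ z' ∈ Q₂, ptSlope z z' ≤ s)
    (hcross : ∀ w ∈ Q₁, ∀ z ∈ Q₂, s < ptSlope w z)
    {u v t : ℝ × ℝ} (hu : u ∈ Q₂) (hv : v ∈ Q₂) (ht : t ∈ Q₁) (hne : u.1 ≠ v.1) :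
    ¬ Collinear ℝ ({u, v, t} : Set (ℝ × ℝ)) := by
  intro hcol
  rcases hne.lt_or_gt with h | h
  · have hcol' : Collinear ℝ ({t, u, v} : Set (ℝ × ℝ)) := by
      refine hcol.subset ?_
      intro x hx
      simp only [Set.mem_insert_iff, Set.mem_singleton_iff] at hx ⊢
      tauto
    have heq := ptSlope_eq_of_collinear (ne_of_lt (hX t ht u hu)) (ne_of_lt h) hcol'
    have h1 := hs2 u hu v hv
    have h2 := hcross t ht u hu
    linarith
  · have hcol' : Collinear ℝ ({t, v, u} : Set (ℝ × ℝ)) := by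
      refine hcol.subset ?_
      intro x hx
      simp only [Set.mem_insert_iff, Set.mem_singleton_iff] at hx ⊢
      tauto
    have heq := ptSlope_eq_of_collinear (ne_of_lt (hX t ht v hv)) (ne_of_lt h) hcol'
    have h1 := hs2 v hv u hu
    have h2 := hcross t ht v hv
    linarith

lemma generic_union
    (hX : ∀ w ∈ Q₁, ∀ z ∈ Q₂, w.1 < z.1)
    (hs1 : ∀ w ∈ Q₁, ∀ w' ∈ Q₁, ptSlope w w' ≤ s)
    (hs2 : ∀ z ∈ Q₂, ∀ z' ∈ Q₂, ptSlope z z' ≤ s)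
    (hcross : ∀ w ∈ Q₁, ∀ z ∈ Q₂, s < ptSlope w z)
    (hg1 : Generic Q₁) (hg2 : Generic Q₂) : Generic (Q₁ ∪ Q₂) := by
  have hinj : Set.InjOn (fun p : ℝ × ℝ => p.1) ↑(Q₁ ∪ Q₂) := by
    intro p hp q hq he
    simp only [Finset.coe_union, Set.mem_union, Finset.mem_coe] at hp hq
    rcases hp with hp | hp <;> rcases hq with hq | hq
    · exact hg1.2 (Finset.mem_coe.mpr hp) (Finset.mem_coe.mpr hq) he
    · exact absurd he (ne_of_lt (hX p hp q hq))
    · exact absurd he.symm (ne_of_lt (hX q hq p hp))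
    · exact hg2.2 (Finset.mem_coe.mpr hp) (Finset.mem_coe.mpr hq) he
  refine ⟨?_, hinj⟩
  intro p hp q hq r hr hpq hpr hqr
  have hxpq : p.1 ≠ q.1 := fun h => hpq (hinj (Finset.mem_coe.mpr hp) (Finset.mem_coe.mpr hq) h)
  have hxpr : p.1 ≠ r.1 := fun h => hpr (hinj (Finset.mem_coe.mpr hp) (Finset.mem_coe.mpr hr) h)
  have hxqr : q.1 ≠ r.1 := fun h => hqr (hinj (Finset.mem_coe.mpr hq) (Finset.mem_coe.mpr hr) h)
  have perm1 : ({p, r, q} : Set (ℝ × ℝ)) ⊆ {p, q, r} := by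
    intro x hx
    simp only [Set.mem_insert_iff, Set.mem_singleton_iff] at hx ⊢
    tauto
  have perm2 : ({q, r, p} : Set (ℝ × ℝ)) ⊆ {p, q, r} := by
    intro x hx
    simp only [Set.mem_insert_iff, Set.mem_singleton_iff] at hx ⊢
    tauto
  rcases Finset.mem_union.mp hp with hp1 | hp1 <;>
    rcases Finset.mem_union.mp hq with hq1 | hq1 <;>
    rcases Finset.mem_union.mp hr with hr1 | hr1
  · exact hg1.1 p hp1 q hq1 r hr1 hpq hpr hqr
  · exact no21 hX hs1 hcross hp1 hq1 hr1 hxpq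
  · intro hcol
    exact no21 hX hs1 hcross hp1 hr1 hq1 hxpr (hcol.subset perm1)
  · intro hcol
    exact no12 hX hs2 hcross hq1 hr1 hp1 hxqr (hcol.subset perm2)
  · intro hcol
    exact no21 hX hs1 hcross hq1 hr1 hp1 hxqr (hcol.subset perm2)
  · intro hcol
    exact no12 hX hs2 hcross hp1 hr1 hq1 hxpr (hcol.subset perm1)
  · exact no12 hX hs2 hcross hp1 hq1 hr1 hxpq
  · exact hg2.1 p hp1 q hq1 r hr1 hpq hpr hqr

end union

lemma coord_bound (P : Finset (ℝ × ℝ)) : ∃ A : ℝ, 1 ≤ A ∧ ∀ p ∈ P, |p.1| < A ∧ |p.2| < A := by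
  obtain ⟨B, hB⟩ := (P.image (fun p => max |p.1| |p.2|)).finite_toSet.bddAbove
  refine ⟨max B 1 + 1, by linarith [le_max_right B 1], ?_⟩
  intro p hp
  have hm : max |p.1| |p.2| ≤ B :=
    hB (Finset.mem_coe.mpr (Finset.mem_image_of_mem _ hp))
  have h1 := le_max_left |p.1| |p.2|
  have h2 := le_max_right |p.1| |p.2|
  have h3 := le_max_left B 1
  constructor <;> linarith

lemma slope_abs_bound (P : Finset (ℝ × ℝ)) :
    ∃ t : ℝ, 1 ≤ t ∧ ∀ p ∈ P, ∀ q ∈ P, |ptSlope p q| < t := by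
  obtain ⟨B, hB⟩ := ((P ×ˢ P).image (fun pq => |ptSlope pq.1 pq.2|)).finite_toSet.bddAbove
  refine ⟨max B 1 + 1, by linarith [le_max_right B 1], ?_⟩
  intro p hp q hq
  have hpq : (p, q) ∈ P ×ˢ P := Finset.mem_product.mpr ⟨hp, hq⟩
  have hm : |ptSlope p q| ≤ B :=
    hB (Finset.mem_coe.mpr (Finset.mem_image_of_mem _ hpq))
  have h3 := le_max_left B 1
  linarith

set_option maxHeartbeats 1000000 in
theorem sat_subadditive (k l : ℕ) (hk : 3 ≤ k) (hl : 3 ≤ l)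
    (P₁ P₂ : Finset (ℝ × ℝ))
    (h₁ : CupCapSat P₁ (k - 1) l) (h₂ : CupCapSat P₂ k (l - 1)) :
    ∃ P : Finset (ℝ × ℝ), CupCapSat P k l ∧ P.card ≤ P₁.card + P₂.card := by
  obtain ⟨K, rfl⟩ : ∃ K, k = K + 3 := ⟨k - 3, by omega⟩
  obtain ⟨L, rfl⟩ : ∃ L, l = L + 3 := ⟨l - 3, by omega⟩
  obtain ⟨A, hA1, hA⟩ := coord_bound P₁
  obtain ⟨s, hs1le, hsP₁⟩ := slope_abs_bound P₁
  obtain ⟨A₂, hA₂1, hA₂⟩ := coord_bound P₂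
  obtain ⟨s₂, hs₂1, hsP₂⟩ := slope_abs_bound P₂
  have hA₂0 : (0:ℝ) < A₂ := by linarith
  have hs₂0 : (0:ℝ) < s₂ := by linarith
  set ε := A₂⁻¹ with hεdef
  set δ := s₂⁻¹ with hδdef
  have hε : 0 < ε := inv_pos.mpr hA₂0
  have hδ : 0 < δ := inv_pos.mpr hs₂0
  have hεδ : 0 < ε * δ := mul_pos hε hδ
  have hεA : ε * A₂ = 1 := inv_mul_cancel₀ (ne_of_gt hA₂0)
  have hδs : δ * s₂ = 1 := inv_mul_cancel₀ (ne_of_gt hs₂0)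
  have hδ1 : δ ≤ 1 := by nlinarith
  set R := A + 2 with hRdef
  set H := (s + 1) * (2 * A + 3) + A + 1 with hHdef
  set T := linT ε R (ε * δ) H with hTdef
  set Q₂ := P₂.image T with hQ₂def
  have hQ₂sat : CupCapSat Q₂ (K + 3) (L + 2) := linT_sat hε hεδ h₂
  have hQ₂x : ∀ z ∈ Q₂, (A + 1 < z.1 ∧ z.1 < A + 3) ∧ (H - 1 < z.2 ∧ z.2 < H + 1) := by
    intro z hz
    obtain ⟨p, hp, rfl⟩ := Finset.mem_image.mp hz
    obtain ⟨hp1, hp2⟩ := hA₂ p hp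
    rw [abs_lt] at hp1 hp2
    have e1 : (T p).1 = ε * p.1 + R := rfl
    have e2 : (T p).2 = ε * δ * p.2 + H := rfl
    rw [e1, e2, hRdef]
    have u1 : ε * p.1 < ε * A₂ := mul_lt_mul_of_pos_left hp1.2 hε
    have u2 : ε * (-A₂) < ε * p.1 := mul_lt_mul_of_pos_left hp1.1 hε
    have u3 : ε * δ * p.2 < ε * δ * A₂ := mul_lt_mul_of_pos_left hp2.2 hεδ
    have u4 : ε * δ * (-A₂) < ε * δ * p.2 := mul_lt_mul_of_pos_left hp2.1 hεδ
    have u5 : ε * δ * A₂ = δ := by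
      rw [show ε * δ * A₂ = δ * (ε * A₂) by ring, hεA, mul_one]
    have u6 : ε * (-A₂) = -1 := by
      rw [show ε * (-A₂) = -(ε * A₂) by ring, hεA]
    have u7 : ε * δ * (-A₂) = -δ := by
      rw [show ε * δ * (-A₂) = -(δ * (ε * A₂)) by ring, hεA, mul_one]
    refine ⟨⟨by linarith, by linarith⟩, ⟨by linarith, by linarith⟩⟩
  have hQ₂slope : ∀ z ∈ Q₂, ∀ z' ∈ Q₂, ptSlope z z' ≤ s := by
    intro z hz z' hz'
    obtain ⟨p, hp, rfl⟩ := Finset.mem_image.mp hz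
    obtain ⟨p', hp', rfl⟩ := Finset.mem_image.mp hz'
    rw [hTdef, linT_slope]
    have hc : ε * δ / ε = δ := by field_simp
    rw [hc]
    have habs := hsP₂ p hp p' hp'
    have h1 : ptSlope p p' ≤ s₂ := le_of_lt (lt_of_le_of_lt (le_abs_self _) habs)
    have h2 : δ * ptSlope p p' ≤ δ * s₂ := mul_le_mul_of_nonneg_left h1 (le_of_lt hδ)
    linarith
  have hP₁slope : ∀ w ∈ P₁, ∀ w' ∈ P₁, ptSlope w w' ≤ s := fun w hw w' hw' =>
    le_of_lt (lt_of_le_of_lt (le_abs_self _) (hsP₁ w hw w' hw'))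
  have hP₁x : ∀ w ∈ P₁, -A < w.1 ∧ w.1 < A ∧ -A < w.2 ∧ w.2 < A := by
    intro w hw
    obtain ⟨u1, u2⟩ := hA w hw
    rw [abs_lt] at u1 u2
    exact ⟨u1.1, u1.2, u2.1, u2.2⟩
  have hX : ∀ w ∈ P₁, ∀ z ∈ Q₂, w.1 < z.1 := by
    intro w hw z hz
    have h1 := (hP₁x w hw).2.1
    have h2 := (hQ₂x z hz).1.1
    linarith
  have hcross : ∀ w ∈ P₁, ∀ z ∈ Q₂, s < ptSlope w z := by
    intro w hw z hz
    obtain ⟨w1, w2, w3, w4⟩ := hP₁x w hw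
    obtain ⟨⟨z1, z2⟩, ⟨z3, z4⟩⟩ := hQ₂x z hz
    have hd : (0:ℝ) < z.1 - w.1 := by linarith
    rw [ptSlope, lt_div_iff₀ hd]
    have h1 : s * (z.1 - w.1) < s * (2 * A + 3) :=
      mul_lt_mul_of_pos_left (by linarith) (by linarith)
    have h2 : (0:ℝ) < 2 * A + 3 := by linarith
    nlinarith
  set P := P₁ ∪ Q₂ with hPdef
  have hs0 : (0:ℝ) < s := by linarith
  have hGen : Generic P := generic_union hX hP₁slope hQ₂slope hcross h₁.1 hQ₂sat.1
  have hfree_cup : ¬ HasCup P (K + 3) :=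
    no_long_cup (by omega) hX hQ₂slope hcross h₁.2.1.1 hQ₂sat.2.1.1
  have hfree_cap : ¬ HasCap P (L + 3) :=
    no_long_cap (by omega) hX hP₁slope hcross h₁.2.1.2 hQ₂sat.2.1.2
  have hP₁ne : P₁.Nonempty := sat_nonempty (by omega) (by omega) h₁
  have hQ₂ne : Q₂.Nonempty := (sat_nonempty (by omega) (by omega) h₂).image T
  refine ⟨P, ⟨hGen, ⟨hfree_cup, hfree_cap⟩, ?_⟩, ?_⟩
  swap
  · calc P.card ≤ P₁.card + Q₂.card := Finset.card_union_le _ _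
    _ ≤ P₁.card + P₂.card := Nat.add_le_add_left Finset.card_image_le _
  intro q hq hgen
  have hq1 : q ∉ P₁ := fun h => hq (Finset.mem_union_left _ h)
  have hq2 : q ∉ Q₂ := fun h => hq (Finset.mem_union_right _ h)
  have hsub1 : insert q P₁ ⊆ insert q P :=
    Finset.insert_subset_insert _ Finset.subset_union_left
  have hsub2 : insert q Q₂ ⊆ insert q P :=
    Finset.insert_subset_insert _ Finset.subset_union_right
  have hgen1 : Generic (insert q P₁) := hgen.mono hsub1
  have hgen2 : Generic (insert q Q₂) := hgen.mono hsub2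
  have hPsub : P ⊆ insert q P := Finset.subset_insert _ _
  have hne3 : ∀ p1 ∈ insert q P, ∀ p2 ∈ insert q P, ∀ p3 ∈ insert q P,
      p1.1 < p2.1 → p2.1 < p3.1 → ptSlope p1 p2 ≠ ptSlope p2 p3 := by
    intro p1 h1 p2 h2 p3 h3 h12 h23 heq
    have hcol := collinear_of_ptSlope_eq (ne_of_lt h12) (ne_of_lt h23) heq
    exact hgen.1 p1 h1 p2 h2 p3 h3
      (fun h => absurd (congrArg Prod.fst h) (ne_of_lt h12))
      (fun h => absurd (congrArg Prod.fst h) (ne_of_lt (h12.trans h23)))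
      (fun h => absurd (congrArg Prod.fst h) (ne_of_lt h23)) hcol
  have hsat1 : HasCup (insert q P₁) (K + 2) ∨ HasCap (insert q P₁) (L + 3) :=
    h₁.2.2 q hq1 hgen1
  have hsat2 : HasCup (insert q Q₂) (K + 3) ∨ HasCap (insert q Q₂) (L + 2) :=
    hQ₂sat.2.2 q hq2 hgen2
  by_cases hqx : q.1 < A + 1
  -- ===== CASE L : q is to the left of Q₂ =====
  · rcases hsat1 with ⟨C, hCm, hCcup⟩ | hcap
    swap
    · exact Or.inr (hcap.mono hsub1)
    have hCmem : ∀ i, C i ∈ insert q P := fun i => hsub1 (hCm i)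
    have hKlt : (⟨K, by omega⟩ : Fin (K + 2)) < Fin.last (K + 1) := by
      rw [Fin.lt_def]
      exact Nat.lt_succ_self K
    have hc1x : (C ⟨K, by omega⟩).1 < (C (Fin.last (K + 1))).1 := hCcup.1 hKlt
    by_cases hc2q : C (Fin.last (K + 1)) = q
    -- L2 : q is the last point of the cup
    · have hc1P : C ⟨K, by omega⟩ ∈ P₁ := by
        rcases Finset.mem_insert.mp (hCm ⟨K, by omega⟩) with h | h
        · exfalso
          rw [h, hc2q] at hc1x
          exact lt_irrefl _ hc1x
        · exact h
      by_cases hz : ∃ z ∈ Q₂, ptSlope (C ⟨K, by omega⟩) q < ptSlope q z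
      · obtain ⟨z, hzQ, hzs⟩ := hz
        left
        refine ⟨Fin.snoc C z,
          forall_snoc_mem hCmem (hPsub (Finset.mem_union_right _ hzQ)), ?_⟩
        apply cup_snoc hCcup
        · rw [hc2q]
          have := (hQ₂x z hzQ).1.1
          linarith
        · rw [hc2q]
          exact hzs
      · push_neg at hz
        rcases hsat2 with hcup | ⟨D, hDm, hDcap⟩
        · exact Or.inl (hcup.mono hsub2)
        have hDmem : ∀ i, D i ∈ insert q P := fun i => hsub2 (hDm i)
        have hDQ : ∀ i, D i ≠ q → D i ∈ Q₂ := fun i h =>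
          (Finset.mem_insert.mp (hDm i)).resolve_left h
        have hq_only0 : ∀ i : Fin (L + 2), D i = q → i = 0 := by
          intro i hiq
          by_contra hi0
          have h0i : (0 : Fin (L + 2)) < i := Fin.pos_iff_ne_zero.mpr hi0
          have hlt : (D 0).1 < q.1 := by
            rw [← hiq]
            exact hDcap.1 h0i
          rcases Finset.mem_insert.mp (hDm 0) with h | h
          · rw [h] at hlt
            exact lt_irrefl _ hlt
          · have := (hQ₂x _ h).1.1
            linarith
        have hD0 : D 0 = q := by
          by_contra hD0
          exact hQ₂sat.2.1.2 ⟨D, fun i => hDQ i (fun h => hD0 (by rw [← hq_only0 i h]; exact h)), hDcap⟩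
        have h01 : (0 : Fin (L + 2)) < 1 := by
          rw [Fin.lt_def, Fin.val_zero, Fin.val_one]
          omega
        have hD1Q : D 1 ∈ Q₂ := hDQ 1 (fun h => by
          have := hq_only0 1 h
          have := congrArg Fin.val this
          rw [Fin.val_one, Fin.val_zero] at this
          omega)
        have hqD1 : q.1 < (D 1).1 := by
          rw [← hD0]
          exact hDcap.1 h01
        have hc1q : (C ⟨K, by omega⟩).1 < q.1 := by rw [← hc2q]; exact hc1x
        have hstrict : ptSlope q (D 1) < ptSlope (C ⟨K, by omega⟩) q := by
          refine lt_of_le_of_ne (hz (D 1) hD1Q) ?_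
          intro h
          exact hne3 (C ⟨K, by omega⟩) (hCmem _) q (Finset.mem_insert_self _ _) (D 1) (hDmem 1)
            hc1q hqD1 h.symm
        right
        refine ⟨Fin.cons (C ⟨K, by omega⟩) D,
          forall_cons_mem hDmem (hPsub (Finset.mem_union_left _ hc1P)), ?_⟩
        apply cap_cons hDcap
        · rw [hD0]; exact hc1q
        · rw [hD0]; exact hstrict
    -- now C (last) ≠ q
    · have hc2P : C (Fin.last (K + 1)) ∈ P₁ :=
        (Finset.mem_insert.mp (hCm _)).resolve_left hc2q
      by_cases hc1q : C ⟨K, by omega⟩ = q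
      -- L3 : q is the second-to-last point of the cup
      · have hqc2 : q.1 < (C (Fin.last (K + 1))).1 := by rw [← hc1q]; exact hc1x
        by_cases hz : ∃ z ∈ Q₂, ptSlope q (C (Fin.last (K + 1))) < ptSlope (C (Fin.last (K + 1))) z
        · obtain ⟨z, hzQ, hzs⟩ := hz
          left
          refine ⟨Fin.snoc C z,
            forall_snoc_mem hCmem (hPsub (Finset.mem_union_right _ hzQ)), ?_⟩
          apply cup_snoc hCcup
          · have := (hQ₂x z hzQ).1.1
            have := (hP₁x _ hc2P).2.1
            linarith
          · rw [hc1q]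
            exact hzs
        · push_neg at hz
          rcases hsat2 with hcup | ⟨D, hDm, hDcap⟩
          · exact Or.inl (hcup.mono hsub2)
          have hDmem : ∀ i, D i ∈ insert q P := fun i => hsub2 (hDm i)
          have hDQ : ∀ i, D i ≠ q → D i ∈ Q₂ := fun i h =>
            (Finset.mem_insert.mp (hDm i)).resolve_left h
          have hq_only0 : ∀ i : Fin (L + 2), D i = q → i = 0 := by
            intro i hiq
            by_contra hi0
            have h0i : (0 : Fin (L + 2)) < i := Fin.pos_iff_ne_zero.mpr hi0
            have hlt : (D 0).1 < q.1 := by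
              rw [← hiq]
              exact hDcap.1 h0i
            rcases Finset.mem_insert.mp (hDm 0) with h | h
            · rw [h] at hlt
              exact lt_irrefl _ hlt
            · have := (hQ₂x _ h).1.1
              linarith
          have hD0 : D 0 = q := by
            by_contra hD0
            exact hQ₂sat.2.1.2 ⟨D, fun i => hDQ i (fun h => hD0 (by rw [← hq_only0 i h]; exact h)), hDcap⟩
          have hDsQ : ∀ i : Fin (L + 1), D i.succ ∈ Q₂ := fun i =>
            hDQ i.succ (fun h => Fin.succ_ne_zero i (hq_only0 _ h))
          -- the cap  q, C(last), D 1, D 2, ..., D (L+1)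
          set v := C (Fin.last (K + 1)) with hvdef
          have hvQ1 : v ∈ P₁ := hc2P
          set tl : Fin (L + 1) → ℝ × ℝ := fun i => D i.succ with htldef
          have htlcap : IsCapSeq tl := hDcap.comp Fin.strictMono_succ
          have hg1cap : IsCapSeq (Fin.cons v tl) := by
            rcases Nat.eq_zero_or_pos L with rfl | hLpos
            · apply cap_of_two
              show v.1 < (tl 0).1
              have := (hQ₂x _ (hDsQ 0)).1.1
              have := (hP₁x _ hvQ1).2.1
              linarith
            · obtain ⟨L', rfl⟩ : ∃ L', L = L' + 1 := ⟨L - 1, by omega⟩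
              apply cap_cons htlcap
              · have := (hQ₂x _ (hDsQ 0)).1.1
                have := (hP₁x _ hvQ1).2.1
                linarith
              · have h1 := hQ₂slope _ (hDsQ 0) _ (hDsQ 1)
                have h2 := hcross _ hvQ1 _ (hDsQ 0)
                linarith
          have hstrict : ptSlope v (tl 0) < ptSlope q v := by
            refine lt_of_le_of_ne (hz (tl 0) (hDsQ 0)) ?_
            intro h
            refine hne3 q (Finset.mem_insert_self _ _) v (hCmem _) (tl 0) (hDmem _)
              hqc2 ?_ h.symm
            have := (hQ₂x _ (hDsQ 0)).1.1
            have := (hP₁x _ hvQ1).2.1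
            linarith
          right
          refine ⟨Fin.cons q (Fin.cons v tl), ?_, ?_⟩
          · refine forall_cons_mem (forall_cons_mem (fun i => hDmem _) (hCmem _))
              (Finset.mem_insert_self _ _)
          · apply cap_cons hg1cap
            · show q.1 < v.1
              exact hqc2
            · have e1 : (Fin.cons v tl : Fin (L + 2) → ℝ × ℝ) 0 = v := rfl
              have e2 : (Fin.cons v tl : Fin (L + 2) → ℝ × ℝ) 1 = tl 0 := by
                rw [show ((1 : Fin (L + 2))) = Fin.succ 0 from (Fin.succ_zero_eq_one).symm,
                  Fin.cons_succ]
              rw [e1, e2]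
              exact hstrict
      -- L1 : the last two points of the cup are in P₁
      · have hc1P : C ⟨K, by omega⟩ ∈ P₁ :=
          (Finset.mem_insert.mp (hCm _)).resolve_left hc1q
        obtain ⟨z, hzQ⟩ := hQ₂ne
        left
        refine ⟨Fin.snoc C z,
          forall_snoc_mem hCmem (hPsub (Finset.mem_union_right _ hzQ)), ?_⟩
        apply cup_snoc hCcup
        · have := (hQ₂x z hzQ).1.1
          have := (hP₁x _ hc2P).2.1
          linarith
        · have h1 := hP₁slope _ hc1P _ hc2P
          have h2 := hcross _ hc2P _ hzQ
          linarith
  -- ===== CASE M : q is to the right of P₁ =====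
  · push_neg at hqx
    rcases hsat2 with hcup | ⟨D, hDm, hDcap⟩
    · exact Or.inl (hcup.mono hsub2)
    have hDmem : ∀ i, D i ∈ insert q P := fun i => hsub2 (hDm i)
    have hDQ : ∀ i, D i ≠ q → D i ∈ Q₂ := fun i h =>
      (Finset.mem_insert.mp (hDm i)).resolve_left h
    have h01 : (0 : Fin (L + 2)) < 1 := by
      rw [Fin.lt_def, Fin.val_zero, Fin.val_one]
      omega
    by_cases hD0q : D 0 = q
    -- M2 : q is the first point of the cap
    · have hD1ne : D 1 ≠ q := by
        intro h
        have h2 : (D 0).1 < (D 1).1 := hDcap.1 h01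
        rw [hD0q, h] at h2
        exact lt_irrefl _ h2
      have hD1Q : D 1 ∈ Q₂ := hDQ 1 hD1ne
      have hqD1 : q.1 < (D 1).1 := by rw [← hD0q]; exact hDcap.1 h01
      by_cases hw : ∃ w ∈ P₁, ptSlope q (D 1) < ptSlope w q
      · obtain ⟨w, hwP, hws⟩ := hw
        right
        refine ⟨Fin.cons w D, forall_cons_mem hDmem (hPsub (Finset.mem_union_left _ hwP)), ?_⟩
        apply cap_cons hDcap
        · rw [hD0q]
          have := (hP₁x w hwP).2.1
          linarith
        · rw [hD0q]
          exact hws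
      · push_neg at hw
        rcases hsat1 with ⟨C, hCm, hCcup⟩ | hcap
        swap
        · exact Or.inr (hcap.mono hsub1)
        have hCmem : ∀ i, C i ∈ insert q P := fun i => hsub1 (hCm i)
        have hKlt : (⟨K, by omega⟩ : Fin (K + 2)) < Fin.last (K + 1) := by
          rw [Fin.lt_def]
          exact Nat.lt_succ_self K
        have hClast : C (Fin.last (K + 1)) = q := by
          by_contra hcl
          have hlastP : C (Fin.last (K + 1)) ∈ P₁ :=
            (Finset.mem_insert.mp (hCm _)).resolve_left hcl
          have hallP : ∀ i, C i ∈ P₁ := by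
            intro i
            rcases Finset.mem_insert.mp (hCm i) with h | h
            · exfalso
              rcases eq_or_lt_of_le (Fin.le_last i) with he | hlt2
              · rw [he] at h
                exact hcl h
              · have hx1 : q.1 < (C (Fin.last (K + 1))).1 := by
                  rw [← h]
                  exact hCcup.1 hlt2
                have := (hP₁x _ hlastP).2.1
                linarith
            · exact h
          exact h₁.2.1.1 ⟨C, hallP, hCcup⟩
        have hCprev : C ⟨K, by omega⟩ ∈ P₁ := by
          rcases Finset.mem_insert.mp (hCm ⟨K, by omega⟩) with h | h
          · exfalso
            have h2 : (C ⟨K, by omega⟩).1 < (C (Fin.last (K + 1))).1 := hCcup.1 hKlt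
            rw [h, hClast] at h2
            exact lt_irrefl _ h2
          · exact h
        left
        refine ⟨Fin.snoc C (D 1),
          forall_snoc_mem hCmem (hPsub (Finset.mem_union_right _ hD1Q)), ?_⟩
        apply cup_snoc hCcup
        · rw [hClast]
          exact hqD1
        · rw [hClast]
          refine lt_of_le_of_ne (hw _ hCprev) ?_
          intro h
          refine hne3 (C ⟨K, by omega⟩) (hCmem _) q (Finset.mem_insert_self _ _)
            (D 1) (hDmem 1) ?_ hqD1 h
          have h2 : (C ⟨K, by omega⟩).1 < (C (Fin.last (K + 1))).1 := hCcup.1 hKlt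
          rw [hClast] at h2
          exact h2
    · have hD0Q : D 0 ∈ Q₂ := hDQ 0 hD0q
      by_cases hD1q : D 1 = q
      -- M3 : q is the second point of the cap
      · have hzq : (D 0).1 < q.1 := by rw [← hD1q]; exact hDcap.1 h01
        by_cases hw : ∃ w ∈ P₁, ptSlope (D 0) q < ptSlope w (D 0)
        · obtain ⟨w, hwP, hws⟩ := hw
          right
          refine ⟨Fin.cons w D, forall_cons_mem hDmem (hPsub (Finset.mem_union_left _ hwP)), ?_⟩
          apply cap_cons hDcap
          · have := (hP₁x w hwP).2.1
            have := (hQ₂x _ hD0Q).1.1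
            linarith
          · rw [hD1q]
            exact hws
        · push_neg at hw
          rcases hsat1 with ⟨C, hCm, hCcup⟩ | hcap
          swap
          · exact Or.inr (hcap.mono hsub1)
          have hCmem : ∀ i, C i ∈ insert q P := fun i => hsub1 (hCm i)
          have hClast : C (Fin.last (K + 1)) = q := by
            by_contra hcl
            have hlastP : C (Fin.last (K + 1)) ∈ P₁ :=
              (Finset.mem_insert.mp (hCm _)).resolve_left hcl
            have hallP : ∀ i, C i ∈ P₁ := by
              intro i
              rcases Finset.mem_insert.mp (hCm i) with h | h
              · exfalso
                rcases eq_or_lt_of_le (Fin.le_last i) with he | hlt2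
                · rw [he] at h
                  exact hcl h
                · have hx1 : q.1 < (C (Fin.last (K + 1))).1 := by
                    rw [← h]
                    exact hCcup.1 hlt2
                  have := (hP₁x _ hlastP).2.1
                  linarith
              · exact h
            exact h₁.2.1.1 ⟨C, hallP, hCcup⟩
          have hCinit : ∀ i : Fin (K + 1), C i.castSucc ∈ P₁ := by
            intro i
            rcases Finset.mem_insert.mp (hCm _) with h | h
            · exfalso
              have hlt2 : i.castSucc < Fin.last (K + 1) := Fin.castSucc_lt_last i
              have h2 : (C i.castSucc).1 < (C (Fin.last (K + 1))).1 := hCcup.1 hlt2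
              rw [h, hClast] at h2
              exact lt_irrefl _ h2
            · exact h
          set g0 : Fin (K + 1) → ℝ × ℝ := fun i => C i.castSucc with hg0def
          have hg0cup : IsCupSeq g0 := hCcup.comp Fin.strictMono_castSucc
          set g1 := (Fin.snoc g0 (D 0) : Fin (K + 2) → ℝ × ℝ) with hg1def
          have hg1cup : IsCupSeq g1 := by
            rcases Nat.eq_zero_or_pos K with rfl | hKpos
            · apply cup_of_two
              show (g1 0).1 < (g1 1).1
              have e1 : g1 0 = g0 0 := by
                rw [hg1def, show (0 : Fin 2) = Fin.castSucc 0 from rfl, Fin.snoc_castSucc]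
              have e2 : g1 1 = D 0 := by
                rw [hg1def, show (1 : Fin 2) = Fin.last 1 from rfl, Fin.snoc_last]
              rw [e1, e2]
              have h3 : g0 0 = C (Fin.castSucc 0) := rfl
              rw [h3]
              have := (hP₁x _ (hCinit 0)).2.1
              have := (hQ₂x _ hD0Q).1.1
              linarith
            · obtain ⟨K', rfl⟩ : ∃ K', K = K' + 1 := ⟨K - 1, by omega⟩
              apply cup_snoc hg0cup
              · show (C (Fin.castSucc (Fin.last (K' + 1)))).1 < (D 0).1
                have := (hP₁x _ (hCinit (Fin.last (K' + 1)))).2.1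
                have := (hQ₂x _ hD0Q).1.1
                linarith
              · show ptSlope (C (Fin.castSucc ⟨K', by omega⟩)) (C (Fin.castSucc (Fin.last (K' + 1)))) <
                  ptSlope (C (Fin.castSucc (Fin.last (K' + 1)))) (D 0)
                have h1 := hP₁slope _ (hCinit ⟨K', by omega⟩) _ (hCinit (Fin.last (K' + 1)))
                have h2 := hcross _ (hCinit (Fin.last (K' + 1))) _ hD0Q
                linarith
          left
          refine ⟨Fin.snoc g1 q, ?_, ?_⟩
          · apply forall_snoc_mem
            · apply forall_snoc_mem
              · exact fun i => hCmem _
              · exact hPsub (Finset.mem_union_right _ hD0Q)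
            · exact Finset.mem_insert_self _ _
          · apply cup_snoc hg1cup
            · have e : g1 (Fin.last (K + 1)) = D 0 := by rw [hg1def, Fin.snoc_last]
              rw [e]
              exact hzq
            · have e : g1 (Fin.last (K + 1)) = D 0 := by rw [hg1def, Fin.snoc_last]
              have e2 : g1 ⟨K, by omega⟩ = C (Fin.castSucc ⟨K, by omega⟩) := by
                rw [hg1def, show (⟨K, by omega⟩ : Fin (K + 2)) = Fin.castSucc ⟨K, by omega⟩ from rfl,
                  Fin.snoc_castSucc]
              rw [e, e2]
              refine lt_of_le_of_ne (hw _ (hCinit ⟨K, by omega⟩)) ?_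
              intro h
              refine hne3 _ (hCmem _) (D 0) (hDmem 0) q (Finset.mem_insert_self _ _) ?_ hzq h
              have := (hP₁x _ (hCinit ⟨K, by omega⟩)).2.1
              have := (hQ₂x _ hD0Q).1.1
              linarith
      -- M1 : the first two points of the cap are in Q₂
      · have hD1Q : D 1 ∈ Q₂ := hDQ 1 hD1q
        obtain ⟨w, hwP⟩ := hP₁ne
        right
        refine ⟨Fin.cons w D, forall_cons_mem hDmem (hPsub (Finset.mem_union_left _ hwP)), ?_⟩
        apply cap_cons hDcap
        · have := (hP₁x w hwP).2.1
          have := (hQ₂x _ hD0Q).1.1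
          linarith
        · have h1 := hQ₂slope _ hD0Q _ hD1Q
          have h2 := hcross _ hwP _ hD0Q
          linarith
end

section
/- For all integers k, ℓ ≥ 4, sat_c(k, ℓ) ≥ 2k + 2ℓ - 14. -/
lemma collinear_triple_iff {p q r : ℝ × ℝ} :
    Collinear ℝ ({p, q, r} : Set (ℝ × ℝ)) ↔
      (q.1 - p.1) * (r.2 - p.2) = (r.1 - p.1) * (q.2 - p.2) := by
  rw [collinear_iff_exists_forall_eq_smul_vadd]
  constructor
  · rintro ⟨p₀, v, h⟩
    obtain ⟨a, ha⟩ := h p (by simp)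
    obtain ⟨b, hb⟩ := h q (by simp)
    obtain ⟨c, hc⟩ := h r (by simp)
    rw [ha, hb, hc]
    simp only [vadd_eq_add, Prod.fst_add, Prod.snd_add, Prod.smul_fst, Prod.smul_snd,
      smul_eq_mul]
    ring
  · intro h
    by_cases hq : q = p
    · refine ⟨p, r - p, fun x hx => ?_⟩
      rcases hx with hx | hx | hx
      · exact ⟨0, by simp [hx]⟩
      · exact ⟨0, by simp [hx, hq]⟩
      · simp only [Set.mem_singleton_iff] at hx
        exact ⟨1, by simp [hx]⟩
    · refine ⟨p, q - p, fun x hx => ?_⟩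
      rcases hx with hx | hx | hx
      · exact ⟨0, by simp [hx]⟩
      · exact ⟨1, by simp [hx]⟩
      · simp only [Set.mem_singleton_iff] at hx
        subst hx
        by_cases h1 : q.1 = p.1
        · have h2 : q.2 ≠ p.2 := fun h2 => hq (Prod.ext h1 h2)
          have hr1 : x.1 = p.1 := by
            have := h
            rw [h1] at this
            simp at this
            rcases this with h' | h'
            · exact by linarith [sub_eq_zero.mp (by linarith : x.1 - p.1 = 0)]
            · exact absurd (by linarith : q.2 = p.2) h2
          refine ⟨(x.2 - p.2) / (q.2 - p.2), ?_⟩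
          apply Prod.ext
          · simp [hr1, h1]
          · simp only [vadd_eq_add, Prod.snd_add, Prod.smul_snd, Prod.snd_sub, smul_eq_mul]
            field_simp
            ring
        · refine ⟨(x.1 - p.1) / (q.1 - p.1), ?_⟩
          have h1' : q.1 - p.1 ≠ 0 := sub_ne_zero.mpr h1
          apply Prod.ext
          · simp only [vadd_eq_add, Prod.fst_add, Prod.smul_fst, Prod.fst_sub, smul_eq_mul]
            field_simp
            ring
          · simp only [vadd_eq_add, Prod.snd_add, Prod.smul_snd, Prod.snd_sub, smul_eq_mul]
            field_simp
            nlinarith [h]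

/-- A bound on all slopes among points of a finite set. -/
lemma slope_bound (P : Finset (ℝ × ℝ)) :
    ∃ M : ℝ, 0 ≤ M ∧ ∀ p ∈ P, ∀ q ∈ P, |ptSlope p q| ≤ M := by
  classical
  obtain ⟨M, hM⟩ := ((P ×ˢ P).image (fun pq => |ptSlope pq.1 pq.2|)).exists_le
  refine ⟨max M 0, le_max_right _ _, fun p hp q hq => ?_⟩
  refine le_trans (hM _ ?_) (le_max_left _ _)
  exact Finset.mem_image.mpr ⟨(p, q), Finset.mem_product.mpr ⟨hp, hq⟩, rfl⟩

/-- Choose a value just to the right of `a` avoiding a finite set of x-coordinates. -/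
lemma gap_lemma (P : Finset (ℝ × ℝ)) (a : ℝ) :
    ∃ x : ℝ, a < x ∧ ∀ p ∈ P, p.1 ≤ a ∨ x < p.1 := by
  classical
  set s := P.filter (fun p => a < p.1) with hs
  by_cases hne : s.Nonempty
  · obtain ⟨p₀, hp₀, hmin⟩ := s.exists_min_image (fun p => p.1) hne
    have hap₀ : a < p₀.1 := (Finset.mem_filter.mp hp₀).2
    refine ⟨(a + p₀.1) / 2, by linarith, fun p hp => ?_⟩
    by_cases hpa : p.1 ≤ a
    · exact Or.inl hpa
    · refine Or.inr ?_
      have : p ∈ s := Finset.mem_filter.mpr ⟨hp, lt_of_not_ge hpa⟩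
      have := hmin p this
      linarith
  · refine ⟨a + 1, by linarith, fun p hp => ?_⟩
    by_cases hpa : p.1 ≤ a
    · exact Or.inl hpa
    · have hmem : p ∈ s := Finset.mem_filter.mpr ⟨hp, lt_of_not_ge hpa⟩
      exact absurd hmem (fun h => hne ⟨p, h⟩)

lemma cupSeq_injective {m : ℕ} {f : Fin m → ℝ × ℝ} (hf : IsCupSeq f) :
    Function.Injective f := fun a b h =>
  hf.1.injective (congrArg Prod.fst h)

lemma capSeq_injective {m : ℕ} {f : Fin m → ℝ × ℝ} (hf : IsCapSeq f) :
    Function.Injective f := fun a b h =>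
  hf.1.injective (congrArg Prod.fst h)

/-- The slope property of the image of a cup sequence. -/
lemma cup_image_prop {m : ℕ} {f : Fin m → ℝ × ℝ} (hf : IsCupSeq f)
    {p q r : ℝ × ℝ} (hp : p ∈ Set.range f) (hq : q ∈ Set.range f) (hr : r ∈ Set.range f)
    (h1 : p.1 < q.1) (h2 : q.1 < r.1) : ptSlope p q < ptSlope q r := by
  obtain ⟨i, rfl⟩ := hp; obtain ⟨j, rfl⟩ := hq; obtain ⟨k, rfl⟩ := hr
  have hij : i < j := by
    by_contra h
    exact absurd (hf.1.monotone (le_of_not_gt h)) (not_le.mpr h1)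
  have hjk : j < k := by
    by_contra h
    exact absurd (hf.1.monotone (le_of_not_gt h)) (not_le.mpr h2)
  exact hf.2 i j k hij hjk

lemma cap_image_prop {m : ℕ} {f : Fin m → ℝ × ℝ} (hf : IsCapSeq f)
    {p q r : ℝ × ℝ} (hp : p ∈ Set.range f) (hq : q ∈ Set.range f) (hr : r ∈ Set.range f)
    (h1 : p.1 < q.1) (h2 : q.1 < r.1) : ptSlope q r < ptSlope p q := by
  obtain ⟨i, rfl⟩ := hp; obtain ⟨j, rfl⟩ := hq; obtain ⟨k, rfl⟩ := hr
  have hij : i < j := by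
    by_contra h
    exact absurd (hf.1.monotone (le_of_not_gt h)) (not_le.mpr h1)
  have hjk : j < k := by
    by_contra h
    exact absurd (hf.1.monotone (le_of_not_gt h)) (not_le.mpr h2)
  exact hf.2 i j k hij hjk

lemma key_insert (P : Finset (ℝ × ℝ)) (k l : ℕ) (hk : 4 ≤ k) (hl : 4 ≤ l)
    (hP : CupCapSat P k l) (x₀ : ℝ) (hx : ∀ p ∈ P, p.1 ≠ x₀) :
    (∃ g : Fin (k-1) → ℝ × ℝ, (∀ j, g j ∈ P) ∧ IsCupSeq g ∧ ∀ j, x₀ < (g j).1) ∨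
    (∃ g : Fin (k-1) → ℝ × ℝ, (∀ j, g j ∈ P) ∧ IsCupSeq g ∧ ∀ j, (g j).1 < x₀) := by
  classical
  obtain ⟨M, hM0, hM⟩ := slope_bound P
  set Y : Finset ℝ :=
    ((P ×ˢ P).image fun ab =>
      ((ab.1.1 - x₀) * ab.2.2 - (ab.2.1 - x₀) * ab.1.2) / (ab.1.1 - ab.2.1)) ∪
    (P.image fun p => p.2 + M * |p.1 - x₀|) with hY
  set y : ℝ := (insert (0:ℝ) Y).max' (Finset.insert_nonempty _ _) + 1 with hy'
  have hy : ∀ z ∈ Y, z < y := fun z hz => by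
    have := Finset.le_max' (insert (0:ℝ) Y) z (Finset.mem_insert_of_mem hz)
    rw [hy']; linarith
  set q : ℝ × ℝ := (x₀, y) with hqdef
  have hq1 : q.1 = x₀ := rfl
  have hq2 : q.2 = y := rfl
  have hqP : q ∉ P := fun h => hx q h rfl
  have hthr : ∀ p ∈ P, p.2 + M * |p.1 - x₀| < y := fun p hp =>
    hy _ (Finset.mem_union_right _ (Finset.mem_image_of_mem _ hp))
  have hsl1 : ∀ p ∈ P, p.1 < x₀ → M < ptSlope p q := by
    intro p hp hpx
    have habs : |p.1 - x₀| = x₀ - p.1 := by rw [abs_of_neg (by linarith), neg_sub]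
    have := hthr p hp
    rw [habs] at this
    have hpos : (0:ℝ) < x₀ - p.1 := by linarith
    rw [ptSlope, hq1, hq2, lt_div_iff₀ hpos]
    linarith
  have hsl2 : ∀ p ∈ P, x₀ < p.1 → ptSlope q p < -M := by
    intro p hp hpx
    have habs : |p.1 - x₀| = p.1 - x₀ := abs_of_pos (by linarith)
    have := hthr p hp
    rw [habs] at this
    have hpos : (0:ℝ) < p.1 - x₀ := by linarith
    rw [ptSlope, hq1, hq2, div_lt_iff₀ hpos]
    nlinarith
  have hinj : Set.InjOn (fun p : ℝ × ℝ => p.1) ↑(insert q P) := by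
    intro a ha b hb hab
    rw [Finset.coe_insert, Set.mem_insert_iff] at ha hb
    rcases ha with rfl | ha <;> rcases hb with rfl | hb
    · rfl
    · exact absurd (hab.symm : b.1 = x₀) (hx b hb)
    · exact absurd (hab : a.1 = x₀) (hx a ha)
    · exact hP.1.2 ha hb hab
  have noncol : ∀ a ∈ P, ∀ b ∈ P, a ≠ b → ¬ Collinear ℝ ({q, a, b} : Set (ℝ × ℝ)) := by
    intro a ha b hb hab hcol
    have hdet := collinear_triple_iff.mp hcol
    simp only [hq1, hq2] at hdet
    have hne : a.1 - b.1 ≠ 0 := sub_ne_zero.mpr (fun h => hab (hP.1.2 ha hb h))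
    have hval : ((a.1 - x₀) * b.2 - (b.1 - x₀) * a.2) / (a.1 - b.1) = y := by
      rw [div_eq_iff hne]; nlinarith [hdet]
    have hmem : ((a.1 - x₀) * b.2 - (b.1 - x₀) * a.2) / (a.1 - b.1) ∈ Y := by
      rw [hY]
      exact Finset.mem_union_left _ (Finset.mem_image.mpr
        ⟨(a, b), Finset.mem_product.mpr ⟨ha, hb⟩, rfl⟩)
    have := hy _ hmem
    rw [hval] at this
    exact lt_irrefl _ this
  have hgen : Generic (insert q P) := by
    refine ⟨?_, hinj⟩
    intro p₁ hp₁ p₂ hp₂ p₃ hp₃ h12 h13 h23 hcol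
    rw [Finset.mem_insert] at hp₁ hp₂ hp₃
    rcases hp₁ with rfl | hp₁
    · rcases hp₂ with rfl | hp₂
      · exact h12 rfl
      · rcases hp₃ with rfl | hp₃
        · exact h13 rfl
        · exact noncol p₂ hp₂ p₃ hp₃ h23 hcol
    · rcases hp₂ with rfl | hp₂
      · rcases hp₃ with rfl | hp₃
        · exact h23 rfl
        · rw [Set.insert_comm] at hcol
          exact noncol p₁ hp₁ p₃ hp₃ h13 hcol
      · rcases hp₃ with rfl | hp₃
        · rw [Set.pair_comm, Set.insert_comm] at hcol
          exact noncol p₁ hp₁ p₂ hp₂ h12 hcol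
        · exact hP.1.1 p₁ hp₁ p₂ hp₂ p₃ hp₃ h12 h13 h23 hcol
  rcases hP.2.2 q hqP hgen with ⟨f, hfP, hfcup⟩ | ⟨f, hfP, hfcap⟩
  · -- cup case
    by_cases hqf : ∃ i, f i = q
    · obtain ⟨i, hi⟩ := hqf
      have hfPj : ∀ j, j ≠ i → f j ∈ P := by
        intro j hj
        rcases Finset.mem_insert.mp (hfP j) with h | h
        · exact absurd (cupSeq_injective hfcup (h.trans hi.symm)) hj
        · exact h
      by_cases hmid : 0 < i.val ∧ i.val + 1 < k
      · exfalso
        set j₁ : Fin k := ⟨i.val - 1, by omega⟩ with hj₁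
        set j₂ : Fin k := ⟨i.val + 1, hmid.2⟩ with hj₂
        have h1 : j₁ < i := by rw [Fin.lt_def]; simp [hj₁]; omega
        have h2 : i < j₂ := by rw [Fin.lt_def]; simp [hj₂]
        have hcup := hfcup.2 j₁ i j₂ h1 h2
        rw [hi] at hcup
        have hj₁P : f j₁ ∈ P := hfPj j₁ (Fin.ne_of_lt h1)
        have hj₂P : f j₂ ∈ P := hfPj j₂ (Fin.ne_of_gt h2)
        have hx₁ : (f j₁).1 < x₀ := by
          have h' : (f j₁).1 < (f i).1 := hfcup.1 h1
          rw [hi] at h'; exact h'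
        have hx₂ : x₀ < (f j₂).1 := by
          have h' : (f i).1 < (f j₂).1 := hfcup.1 h2
          rw [hi] at h'; exact h'
        have hs1 := hsl1 (f j₁) hj₁P hx₁
        have hs2 := hsl2 (f j₂) hj₂P hx₂
        linarith
      · rcases Decidable.not_and_iff_or_not.mp hmid with h0 | hlast
        · -- i = 0 : cup to the right of x₀
          have hi0 : i.val = 0 := by omega
          refine Or.inl ⟨fun j => f ⟨j.val + 1, by omega⟩, ?_, ⟨?_, ?_⟩, ?_⟩
          · intro j
            exact hfPj ⟨j.val + 1, by omega⟩
              (Fin.ne_of_val_ne (show j.val + 1 ≠ i.val by omega))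
          · intro a b hab
            exact hfcup.1 (by rw [Fin.lt_def]; simpa using (Fin.lt_def.mp hab))
          · intro a b c hab hbc
            exact hfcup.2 _ _ _ (by rw [Fin.lt_def]; simpa using (Fin.lt_def.mp hab))
              (by rw [Fin.lt_def]; simpa using (Fin.lt_def.mp hbc))
          · intro j
            have hlt : i < (⟨j.val + 1, by omega⟩ : Fin k) := by
              rw [Fin.lt_def]; exact (show i.val < j.val + 1 by omega)
            have h' : (f i).1 < (f ⟨j.val + 1, by omega⟩).1 := hfcup.1 hlt
            rw [hi] at h'; exact h'
        · -- i = k - 1 : cup to the left of x₀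
          have hik : i.val = k - 1 := by have := i.isLt; omega
          refine Or.inr ⟨fun j => f ⟨j.val, by omega⟩, ?_, ⟨?_, ?_⟩, ?_⟩
          · intro j
            have hjlt := j.isLt
            exact hfPj ⟨j.val, by omega⟩
              (Fin.ne_of_val_ne (show j.val ≠ i.val by omega))
          · intro a b hab
            exact hfcup.1 (by rw [Fin.lt_def]; simpa using (Fin.lt_def.mp hab))
          · intro a b c hab hbc
            exact hfcup.2 _ _ _ (by rw [Fin.lt_def]; simpa using (Fin.lt_def.mp hab))
              (by rw [Fin.lt_def]; simpa using (Fin.lt_def.mp hbc))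
          · intro j
            have hjlt := j.isLt
            have hlt : (⟨j.val, by omega⟩ : Fin k) < i := by
              rw [Fin.lt_def]; exact (show j.val < i.val by omega)
            have h' : (f ⟨j.val, by omega⟩).1 < (f i).1 := hfcup.1 hlt
            rw [hi] at h'; exact h'
    · push_neg at hqf
      have : ∀ i, f i ∈ P := fun i => (Finset.mem_insert.mp (hfP i)).resolve_left (hqf i)
      exact absurd ⟨f, this, hfcup⟩ hP.2.1.1
  · -- cap case : impossible
    exfalso
    by_cases hqf : ∃ i, f i = q
    · obtain ⟨i, hi⟩ := hqf
      have hfPj : ∀ j, j ≠ i → f j ∈ P := by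
        intro j hj
        rcases Finset.mem_insert.mp (hfP j) with h | h
        · exact absurd (capSeq_injective hfcap (h.trans hi.symm)) hj
        · exact h
      rcases Nat.lt_or_ge (i.val + 2) l with h2 | h2
      · set j₁ : Fin l := ⟨i.val + 1, by omega⟩ with hj₁
        set j₂ : Fin l := ⟨i.val + 2, h2⟩ with hj₂
        have hij : i < j₁ := by rw [Fin.lt_def]; simp [hj₁]
        have hjk : j₁ < j₂ := by rw [Fin.lt_def]; simp [hj₁, hj₂]
        have hcap := hfcap.2 i j₁ j₂ hij hjk
        rw [hi] at hcap
        have hj₁P : f j₁ ∈ P := hfPj j₁ (Fin.ne_of_gt hij)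
        have hj₂P : f j₂ ∈ P := hfPj j₂ (Fin.ne_of_gt (hij.trans hjk))
        have hx₁ : x₀ < (f j₁).1 := by
          have h' : (f i).1 < (f j₁).1 := hfcap.1 hij
          rw [hi] at h'; exact h'
        have hs2 := hsl2 (f j₁) hj₁P hx₁
        have hb := abs_le.mp (hM (f j₁) hj₁P (f j₂) hj₂P)
        linarith [hb.1]
      · have hi2 : 2 ≤ i.val := by have := i.isLt; omega
        set j₀ : Fin l := ⟨i.val - 2, by omega⟩ with hj₀
        set j₁ : Fin l := ⟨i.val - 1, by omega⟩ with hj₁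
        have h01 : j₀ < j₁ := by rw [Fin.lt_def]; simp [hj₀, hj₁]; omega
        have h1i : j₁ < i := by rw [Fin.lt_def]; simp [hj₁]; omega
        have hcap := hfcap.2 j₀ j₁ i h01 h1i
        rw [hi] at hcap
        have hj₀P : f j₀ ∈ P := hfPj j₀ (Fin.ne_of_lt (h01.trans h1i))
        have hj₁P : f j₁ ∈ P := hfPj j₁ (Fin.ne_of_lt h1i)
        have hx₁ : (f j₁).1 < x₀ := by
          have h' : (f j₁).1 < (f i).1 := hfcap.1 h1i
          rw [hi] at h'; exact h'
        have hs1 := hsl1 (f j₁) hj₁P hx₁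
        have hb := abs_le.mp (hM (f j₀) hj₀P (f j₁) hj₁P)
        linarith [hb.2]
    · push_neg at hqf
      have : ∀ i, f i ∈ P := fun i => (Finset.mem_insert.mp (hfP i)).resolve_left (hqf i)
      exact absurd ⟨f, this, hfcap⟩ hP.2.1.2

def CupProp (S : Finset (ℝ × ℝ)) : Prop :=
  ∀ p ∈ S, ∀ q ∈ S, ∀ r ∈ S, p.1 < q.1 → q.1 < r.1 → ptSlope p q < ptSlope q r

def CapProp (S : Finset (ℝ × ℝ)) : Prop :=
  ∀ p ∈ S, ∀ q ∈ S, ∀ r ∈ S, p.1 < q.1 → q.1 < r.1 → ptSlope q r < ptSlope p q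

lemma exists_cup (P : Finset (ℝ × ℝ)) (k l : ℕ) (hk : 4 ≤ k) (hl : 4 ≤ l)
    (hP : CupCapSat P k l) :
    ∃ g : Fin (k-1) → ℝ × ℝ, (∀ j, g j ∈ P) ∧ IsCupSeq g := by
  classical
  set x₀ : ℝ := (insert (0:ℝ) (P.image Prod.fst)).min' (Finset.insert_nonempty _ _) - 1
    with hx₀def
  have hx : ∀ p ∈ P, x₀ < p.1 := by
    intro p hp
    have := Finset.min'_le (insert (0:ℝ) (P.image Prod.fst)) p.1
      (Finset.mem_insert_of_mem (Finset.mem_image_of_mem _ hp))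
    rw [hx₀def]; linarith
  rcases key_insert P k l hk hl hP x₀ (fun p hp => ne_of_gt (hx p hp)) with
    ⟨g, h1, h2, _⟩ | ⟨g, h1, h2, h3⟩
  · exact ⟨g, h1, h2⟩
  · exfalso
    have h0 : 0 < k - 1 := by omega
    have := h3 ⟨0, h0⟩
    have := hx _ (h1 ⟨0, h0⟩)
    linarith

lemma two_cups (P : Finset (ℝ × ℝ)) (k l : ℕ) (hk : 4 ≤ k) (hl : 4 ≤ l)
    (hP : CupCapSat P k l) :
    ∃ S₁ S₂ : Finset (ℝ × ℝ), S₁ ⊆ P ∧ S₂ ⊆ P ∧ S₁.card = k - 1 ∧ S₂.card = k - 1 ∧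
      (S₁ ∩ S₂).card ≤ 1 ∧ CupProp S₁ ∧ CupProp S₂ := by
  classical
  have h0 : 0 < k - 1 := by omega
  set F := P.filter (fun p => ∃ g : Fin (k-1) → ℝ × ℝ,
    (∀ j, g j ∈ P) ∧ IsCupSeq g ∧ g ⟨0, h0⟩ = p) with hF
  have hne : F.Nonempty := by
    obtain ⟨g, hgP, hgcup⟩ := exists_cup P k l hk hl hP
    exact ⟨g ⟨0, h0⟩, Finset.mem_filter.mpr ⟨hgP _, g, hgP, hgcup, rfl⟩⟩
  obtain ⟨pA, hpAF, hmax⟩ := F.exists_max_image (fun p => p.1) hne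
  obtain ⟨hpAP, g₁, hg₁P, hg₁cup, hg₁0⟩ := Finset.mem_filter.mp hpAF
  obtain ⟨x₀, hx₀A, hx₀⟩ := gap_lemma P pA.1
  have hx : ∀ p ∈ P, p.1 ≠ x₀ := by
    intro p hp
    rcases hx₀ p hp with h | h
    · exact ne_of_lt (lt_of_le_of_lt h hx₀A)
    · exact ne_of_gt h
  rcases key_insert P k l hk hl hP x₀ hx with
    ⟨g₂, hg₂P, hg₂cup, hg₂x⟩ | ⟨g₂, hg₂P, hg₂cup, hg₂x⟩
  · exfalso
    have hmem : g₂ ⟨0, h0⟩ ∈ F :=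
      Finset.mem_filter.mpr ⟨hg₂P _, g₂, hg₂P, hg₂cup, rfl⟩
    have := hmax _ hmem
    have := hg₂x ⟨0, h0⟩
    linarith
  · refine ⟨Finset.image g₁ Finset.univ, Finset.image g₂ Finset.univ, ?_, ?_, ?_, ?_, ?_, ?_, ?_⟩
    · intro p hp
      obtain ⟨j, _, rfl⟩ := Finset.mem_image.mp hp
      exact hg₁P j
    · intro p hp
      obtain ⟨j, _, rfl⟩ := Finset.mem_image.mp hp
      exact hg₂P j
    · rw [Finset.card_image_of_injective _ (cupSeq_injective hg₁cup),
        Finset.card_univ, Fintype.card_fin]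
    · rw [Finset.card_image_of_injective _ (cupSeq_injective hg₂cup),
        Finset.card_univ, Fintype.card_fin]
    · have hsub : Finset.image g₁ Finset.univ ∩ Finset.image g₂ Finset.univ ⊆ {pA} := by
        intro p hp
        obtain ⟨hp1, hp2⟩ := Finset.mem_inter.mp hp
        obtain ⟨j₁, _, hj₁⟩ := Finset.mem_image.mp hp1
        obtain ⟨j₂, _, hj₂⟩ := Finset.mem_image.mp hp2
        have hge : pA.1 ≤ p.1 := by
          have hle : (⟨0, h0⟩ : Fin (k-1)) ≤ j₁ := by
            rw [Fin.le_def]; exact Nat.zero_le _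
          have := hg₁cup.1.monotone hle
          rw [hg₁0, hj₁] at this
          exact this
        have hpP' : p ∈ P := by rw [← hj₁]; exact hg₁P j₁
        have hle : p.1 ≤ pA.1 := by
          rcases hx₀ p hpP' with h | h
          · exact h
          · exfalso
            have := hg₂x j₂
            rw [hj₂] at this
            linarith
        have hpP : p ∈ P := by rw [← hj₁]; exact hg₁P j₁
        have : p.1 = pA.1 := le_antisymm hle hge
        rw [Finset.mem_singleton]
        exact hP.1.2 (Finset.mem_coe.mpr hpP) (Finset.mem_coe.mpr hpAP) this
      calc (Finset.image g₁ Finset.univ ∩ Finset.image g₂ Finset.univ).card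
          ≤ ({pA} : Finset (ℝ × ℝ)).card := Finset.card_le_card hsub
        _ = 1 := Finset.card_singleton _
    · intro p hp q hq r hr h1 h2
      obtain ⟨a, _, rfl⟩ := Finset.mem_image.mp hp
      obtain ⟨b, _, rfl⟩ := Finset.mem_image.mp hq
      obtain ⟨c, _, rfl⟩ := Finset.mem_image.mp hr
      exact cup_image_prop hg₁cup ⟨a, rfl⟩ ⟨b, rfl⟩ ⟨c, rfl⟩ h1 h2
    · intro p hp q hq r hr h1 h2
      obtain ⟨a, _, rfl⟩ := Finset.mem_image.mp hp
      obtain ⟨b, _, rfl⟩ := Finset.mem_image.mp hq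
      obtain ⟨c, _, rfl⟩ := Finset.mem_image.mp hr
      exact cup_image_prop hg₂cup ⟨a, rfl⟩ ⟨b, rfl⟩ ⟨c, rfl⟩ h1 h2

def flipPt (p : ℝ × ℝ) : ℝ × ℝ := (p.1, -p.2)

lemma flipPt_invol (p : ℝ × ℝ) : flipPt (flipPt p) = p := by
  simp [flipPt]

lemma flipPt_inj : Function.Injective flipPt := by
  intro a b h
  rw [← flipPt_invol a, ← flipPt_invol b, h]

lemma flipPt_slope (p q : ℝ × ℝ) : ptSlope (flipPt p) (flipPt q) = -(ptSlope p q) := by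
  simp only [ptSlope, flipPt]
  rw [← neg_div, neg_sub]
  ring_nf

lemma cup_flip {m : ℕ} {f : Fin m → ℝ × ℝ} (hf : IsCupSeq f) : IsCapSeq (flipPt ∘ f) := by
  refine ⟨hf.1, fun i j k hij hjk => ?_⟩
  simp only [Function.comp_apply, flipPt_slope]
  have := hf.2 i j k hij hjk
  linarith

lemma cap_flip {m : ℕ} {f : Fin m → ℝ × ℝ} (hf : IsCapSeq f) : IsCupSeq (flipPt ∘ f) := by
  refine ⟨hf.1, fun i j k hij hjk => ?_⟩
  simp only [Function.comp_apply, flipPt_slope]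
  have := hf.2 i j k hij hjk
  linarith

lemma flip_image_flip (X : Finset (ℝ × ℝ)) : (X.image flipPt).image flipPt = X := by
  rw [Finset.image_image]
  have : flipPt ∘ flipPt = id := funext flipPt_invol
  rw [this, Finset.image_id]

lemma hasCup_flip {P : Finset (ℝ × ℝ)} {m : ℕ} (h : HasCap P m) :
    HasCup (P.image flipPt) m := by
  obtain ⟨f, hf, hcap⟩ := h
  exact ⟨flipPt ∘ f, fun i => Finset.mem_image_of_mem _ (hf i), cap_flip hcap⟩

lemma hasCap_flip {P : Finset (ℝ × ℝ)} {m : ℕ} (h : HasCup P m) :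
    HasCap (P.image flipPt) m := by
  obtain ⟨f, hf, hcup⟩ := h
  exact ⟨flipPt ∘ f, fun i => Finset.mem_image_of_mem _ (hf i), cup_flip hcup⟩

lemma generic_flip {X : Finset (ℝ × ℝ)} (h : Generic X) : Generic (X.image flipPt) := by
  constructor
  · intro p hp q hq r hr hpq hpr hqr hcol
    obtain ⟨a, ha, rfl⟩ := Finset.mem_image.mp hp
    obtain ⟨b, hb, rfl⟩ := Finset.mem_image.mp hq
    obtain ⟨c, hc, rfl⟩ := Finset.mem_image.mp hr
    have hab : a ≠ b := fun h' => hpq (by rw [h'])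
    have hac : a ≠ c := fun h' => hpr (by rw [h'])
    have hbc : b ≠ c := fun h' => hqr (by rw [h'])
    refine h.1 a ha b hb c hc hab hac hbc ?_
    rw [collinear_triple_iff]
    have hdet := collinear_triple_iff.mp hcol
    simp only [flipPt] at hdet
    nlinarith [hdet]
  · intro p hp q hq hpq
    simp only [Finset.coe_image, Set.mem_image, Finset.mem_coe] at hp hq
    obtain ⟨a, ha, rfl⟩ := hp
    obtain ⟨b, hb, rfl⟩ := hq
    have : a.1 = b.1 := hpq
    have := h.2 (Finset.mem_coe.mpr ha) (Finset.mem_coe.mpr hb) this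
    rw [this]

lemma sat_flip {P : Finset (ℝ × ℝ)} {k l : ℕ} (hP : CupCapSat P k l) :
    CupCapSat (P.image flipPt) l k := by
  refine ⟨generic_flip hP.1, ⟨?_, ?_⟩, ?_⟩
  · intro ⟨f, hf, hcup⟩
    refine hP.2.1.2 ⟨flipPt ∘ f, fun i => ?_, cup_flip hcup⟩
    obtain ⟨a, ha, hfa⟩ := Finset.mem_image.mp (hf i)
    simp only [Function.comp_apply, ← hfa, flipPt_invol]
    exact ha
  · intro ⟨f, hf, hcap⟩
    refine hP.2.1.1 ⟨flipPt ∘ f, fun i => ?_, cap_flip hcap⟩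
    obtain ⟨a, ha, hfa⟩ := Finset.mem_image.mp (hf i)
    simp only [Function.comp_apply, ← hfa, flipPt_invol]
    exact ha
  · intro q hq hgen
    have hq' : flipPt q ∉ P := by
      intro h
      exact hq (by
        have := Finset.mem_image_of_mem flipPt h
        rwa [flipPt_invol] at this)
    have hins : insert q (P.image flipPt) = (insert (flipPt q) P).image flipPt := by
      rw [Finset.image_insert, flipPt_invol]
    have hgen' : Generic (insert (flipPt q) P) := by
      have := generic_flip (hins ▸ hgen)
      rwa [flip_image_flip] at this
    rcases hP.2.2 (flipPt q) hq' hgen' with h | h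
    · exact Or.inr (by rw [hins]; exact hasCap_flip h)
    · exact Or.inl (by rw [hins]; exact hasCup_flip h)

lemma two_caps (P : Finset (ℝ × ℝ)) (k l : ℕ) (hk : 4 ≤ k) (hl : 4 ≤ l)
    (hP : CupCapSat P k l) :
    ∃ T₁ T₂ : Finset (ℝ × ℝ), T₁ ⊆ P ∧ T₂ ⊆ P ∧ T₁.card = l - 1 ∧ T₂.card = l - 1 ∧
      (T₁ ∩ T₂).card ≤ 1 ∧ CapProp T₁ ∧ CapProp T₂ := by
  classical
  obtain ⟨S₁, S₂, h1, h2, c1, c2, hint, cp1, cp2⟩ :=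
    two_cups (P.image flipPt) l k hl hk (sat_flip hP)
  have hsubP : ∀ S : Finset (ℝ × ℝ), S ⊆ P.image flipPt → S.image flipPt ⊆ P := by
    intro S hS
    have := Finset.image_subset_image (f := flipPt) hS
    rwa [flip_image_flip] at this
  have hcap : ∀ S : Finset (ℝ × ℝ), CupProp S → CapProp (S.image flipPt) := by
    intro S hcup p hp q hq r hr hx1 hx2
    obtain ⟨a, ha, rfl⟩ := Finset.mem_image.mp hp
    obtain ⟨b, hb, rfl⟩ := Finset.mem_image.mp hq
    obtain ⟨c, hc, rfl⟩ := Finset.mem_image.mp hr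
    have := hcup a ha b hb c hc hx1 hx2
    rw [flipPt_slope, flipPt_slope]
    linarith
  refine ⟨S₁.image flipPt, S₂.image flipPt, hsubP _ h1, hsubP _ h2, ?_, ?_, ?_,
    hcap _ cp1, hcap _ cp2⟩
  · rw [Finset.card_image_of_injective _ flipPt_inj]; exact c1
  · rw [Finset.card_image_of_injective _ flipPt_inj]; exact c2
  · rw [← Finset.image_inter _ _ flipPt_inj, Finset.card_image_of_injective _ flipPt_inj]
    exact hint

lemma cup_cap_inter {P S T : Finset (ℝ × ℝ)}
    (hgen : Set.InjOn (fun p : ℝ × ℝ => p.1) ↑P) (hS : S ⊆ P) (hT : T ⊆ P)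
    (hcup : CupProp S) (hcap : CapProp T) : (S ∩ T).card ≤ 2 := by
  by_contra hcon
  push_neg at hcon
  obtain ⟨a, ha, b, hb, c, hc, hab, hac, hbc⟩ := Finset.two_lt_card.mp hcon
  have hK : ∀ p q r : ℝ × ℝ, p ∈ S ∩ T → q ∈ S ∩ T → r ∈ S ∩ T →
      p.1 < q.1 → q.1 < r.1 → False := by
    intro p q r hp hq hr h1 h2
    have hpS := (Finset.mem_inter.mp hp).1
    have hqS := (Finset.mem_inter.mp hq).1
    have hrS := (Finset.mem_inter.mp hr).1
    have hpT := (Finset.mem_inter.mp hp).2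
    have hqT := (Finset.mem_inter.mp hq).2
    have hrT := (Finset.mem_inter.mp hr).2
    have := hcup p hpS q hqS r hrS h1 h2
    have := hcap p hpT q hqT r hrT h1 h2
    linarith
  have hxne : ∀ p q : ℝ × ℝ, p ∈ S ∩ T → q ∈ S ∩ T → p ≠ q → p.1 ≠ q.1 := by
    intro p q hp hq hne h
    exact hne (hgen (Finset.mem_coe.mpr (hS (Finset.mem_inter.mp hp).1))
      (Finset.mem_coe.mpr (hS (Finset.mem_inter.mp hq).1)) h)
  rcases Ne.lt_or_gt (hxne a b ha hb hab) with h1 | h1 <;>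
    rcases Ne.lt_or_gt (hxne a c ha hc hac) with h2 | h2 <;>
    rcases Ne.lt_or_gt (hxne b c hb hc hbc) with h3 | h3
  · exact hK a b c ha hb hc h1 h3
  · exact hK a c b ha hc hb h2 h3
  · linarith
  · exact hK c a b hc ha hb h2 h1
  · exact hK b a c hb ha hc h1 h2
  · linarith
  · exact hK b c a hb hc ha h3 h2
  · exact hK c b a hc hb ha h3 h1

theorem sat_lower_bound (k l : ℕ) (hk : 4 ≤ k) (hl : 4 ≤ l)
    (P : Finset (ℝ × ℝ)) (hP : CupCapSat P k l) :
    2 * k + 2 * l - 14 ≤ P.card := by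
  classical
  obtain ⟨S₁, S₂, hS₁, hS₂, cS₁, cS₂, hSint, cupS₁, cupS₂⟩ := two_cups P k l hk hl hP
  obtain ⟨T₁, T₂, hT₁, hT₂, cT₁, cT₂, hTint, capT₁, capT₂⟩ := two_caps P k l hk hl hP
  have h11 := cup_cap_inter hP.1.2 hS₁ hT₁ cupS₁ capT₁
  have h12 := cup_cap_inter hP.1.2 hS₁ hT₂ cupS₁ capT₂
  have h21 := cup_cap_inter hP.1.2 hS₂ hT₁ cupS₂ capT₁
  have h22 := cup_cap_inter hP.1.2 hS₂ hT₂ cupS₂ capT₂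
  have e1 := Finset.card_union_add_card_inter S₁ S₂
  have e2 := Finset.card_union_add_card_inter T₁ T₂
  have e3 := Finset.card_union_add_card_inter (S₁ ∪ S₂) (T₁ ∪ T₂)
  have hsub : (S₁ ∪ S₂) ∩ (T₁ ∪ T₂) ⊆ ((S₁ ∩ T₁) ∪ (S₁ ∩ T₂)) ∪ ((S₂ ∩ T₁) ∪ (S₂ ∩ T₂)) := by
    intro x hx
    simp only [Finset.mem_inter, Finset.mem_union] at hx ⊢
    tauto
  have h8 : ((S₁ ∪ S₂) ∩ (T₁ ∪ T₂)).card ≤ 8 := by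
    refine le_trans (Finset.card_le_card hsub) ?_
    refine le_trans (Finset.card_union_le _ _) ?_
    have := Finset.card_union_le (S₁ ∩ T₁) (S₁ ∩ T₂)
    have := Finset.card_union_le (S₂ ∩ T₁) (S₂ ∩ T₂)
    omega
  have hsubP : (S₁ ∪ S₂) ∪ (T₁ ∪ T₂) ⊆ P := by
    intro x hx
    simp only [Finset.mem_union] at hx
    rcases hx with (h | h) | (h | h)
    exacts [hS₁ h, hS₂ h, hT₁ h, hT₂ h]
  have hcardP := Finset.card_le_card hsubP
  omega
end

section
/- Let s, p_1, ..., p_k, t form a cup (in this x-order) and s, q_1, ..., q_ℓ, t form a cap (in this x-order), with k, ℓ ≥ 0. Then the k+ℓ+2 points s, p_1, ..., p_k, t, q_ℓ, ..., q_1 are in convex position. -/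
/-- A set of planar points is in convex position: every point is a vertex of the convex hull. -/
def ConvexPos (S : Set (ℝ × ℝ)) : Prop :=
  ∀ p ∈ S, p ∉ convexHull ℝ (S \ {p})

-- three-point slope lemma
lemma slope_three {p q r : ℝ × ℝ} (h1 : p.1 < q.1) (h2 : q.1 < r.1)
    (h : ptSlope p q < ptSlope q r) :
    ptSlope p q < ptSlope p r ∧ ptSlope p r < ptSlope q r := by
  have ha : (0:ℝ) < q.1 - p.1 := by linarith
  have hb : (0:ℝ) < r.1 - q.1 := by linarith
  have hc : (0:ℝ) < r.1 - p.1 := by linarith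
  unfold ptSlope at *
  rw [div_lt_div_iff₀ ha hb] at h
  constructor
  · rw [div_lt_div_iff₀ ha hc]; nlinarith
  · rw [div_lt_div_iff₀ hc hb]; nlinarith

lemma slope_mul {p q : ℝ × ℝ} (h : p.1 < q.1) :
    q.2 - p.2 = ptSlope p q * (q.1 - p.1) := by
  unfold ptSlope
  rw [div_mul_cancel₀ _ (sub_ne_zero_of_ne h.ne')]

-- extremality of an interior cup point within the cup
lemma cup_extreme {m : ℕ} {f : Fin m → ℝ × ℝ} (hf : IsCupSeq f) (i : Fin m)
    (h0 : 0 < i.1) (h1 : i.1 + 1 < m) :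
    ∃ μ : ℝ, ∀ j : Fin m, j ≠ i →
      (f i).2 - μ * (f i).1 < (f j).2 - μ * (f j).1 := by
  set a : Fin m := ⟨i.1 - 1, by omega⟩ with ha
  set b : Fin m := ⟨i.1 + 1, by omega⟩ with hb
  have hai : a < i := by simp [Fin.lt_def, ha]; omega
  have hib : i < b := by simp [Fin.lt_def, hb]
  have hsl : ptSlope (f a) (f i) < ptSlope (f i) (f b) := hf.2 a i b hai hib
  refine ⟨(ptSlope (f a) (f i) + ptSlope (f i) (f b)) / 2, ?_⟩
  intro j hj
  rcases hj.lt_or_gt with hji | hij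
  · have hx : (f j).1 < (f i).1 := hf.1 hji
    have hsle : ptSlope (f j) (f i) ≤ ptSlope (f a) (f i) := by
      rcases eq_or_lt_of_le (show j ≤ a by simp [Fin.le_def, ha]; omega) with he | hlt
      · rw [he]
      · have hxa : (f j).1 < (f a).1 := hf.1 hlt
        have hxi : (f a).1 < (f i).1 := hf.1 hai
        exact le_of_lt (slope_three hxa hxi (hf.2 j a i hlt hai)).2
    have hkey := slope_mul hx
    nlinarith [hkey, hx, hsle, hsl]
  · have hx : (f i).1 < (f j).1 := hf.1 hij
    have hsle : ptSlope (f i) (f b) ≤ ptSlope (f i) (f j) := by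
      rcases eq_or_lt_of_le (show b ≤ j by simp [Fin.le_def, hb]; omega) with he | hlt
      · rw [he]
      · have hxb : (f i).1 < (f b).1 := hf.1 hib
        have hxj : (f b).1 < (f j).1 := hf.1 hlt
        exact le_of_lt (slope_three hxb hxj (hf.2 i b j hib hlt)).1
    have hkey := slope_mul hx
    nlinarith [hkey, hx, hsle, hsl]

-- interior cup point lies strictly below the chord joining endpoints
lemma cup_below_chord {n : ℕ} {f : Fin (n + 2) → ℝ × ℝ} (hf : IsCupSeq f)
    (i : Fin (n + 2)) (h0 : 0 < i.1) (h1 : i.1 < n + 1) :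
    (f i).2 < (f 0).2 + ptSlope (f 0) (f (Fin.last (n + 1))) * ((f i).1 - (f 0).1) := by
  have h01 : (0 : Fin (n + 2)) < i := by rw [Fin.lt_def, Fin.val_zero]; omega
  have h1l : i < Fin.last (n + 1) := by simp [Fin.lt_def]; omega
  have hx1 : (f 0).1 < (f i).1 := hf.1 h01
  have hx2 : (f i).1 < (f (Fin.last (n + 1))).1 := hf.1 h1l
  have h := (slope_three hx1 hx2 (hf.2 0 i (Fin.last (n + 1)) h01 h1l)).1
  have hkey := slope_mul hx1
  nlinarith [hkey, hx1, h]

def neg2 (p : ℝ × ℝ) : ℝ × ℝ := (p.1, -p.2)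

lemma ptSlope_neg2 (p q : ℝ × ℝ) : ptSlope (neg2 p) (neg2 q) = -ptSlope p q := by
  unfold ptSlope neg2
  rw [← neg_div]
  ring_nf

lemma cap_to_cup {m : ℕ} {g : Fin m → ℝ × ℝ} (hg : IsCapSeq g) :
    IsCupSeq (fun i => neg2 (g i)) := by
  refine ⟨hg.1, fun i j k hij hjk => ?_⟩
  rw [ptSlope_neg2, ptSlope_neg2]
  have := hg.2 i j k hij hjk
  linarith

-- interior cap point lies strictly above the chord
lemma cap_above_chord {n : ℕ} {g : Fin (n + 2) → ℝ × ℝ} (hg : IsCapSeq g)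
    (i : Fin (n + 2)) (h0 : 0 < i.1) (h1 : i.1 < n + 1) :
    (g 0).2 + ptSlope (g 0) (g (Fin.last (n + 1))) * ((g i).1 - (g 0).1) < (g i).2 := by
  have h := cup_below_chord (cap_to_cup hg) i h0 h1
  simp only [neg2, ptSlope_neg2] at h
  have := ptSlope_neg2 (g 0) (g (Fin.last (n+1)))
  simp only [neg2] at this
  rw [this] at h
  linarith

lemma interp_lt {μ σ sx tx x sy ty y c : ℝ} (h1 : sx < x) (h2 : x < tx)
    (hy : y < sy + σ * (x - sx)) (hty : ty = sy + σ * (tx - sx))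
    (hsc : sy + μ * sx < c) (htc : ty + μ * tx < c) : y + μ * x < c := by
  rcases le_or_gt 0 (σ + μ) with h | h
  · nlinarith [mul_nonneg h (sub_nonneg.2 h2.le)]
  · nlinarith [mul_pos (neg_pos.2 h) (sub_pos.2 h1)]

lemma not_mem_hull_of_sep {S : Set (ℝ × ℝ)} {p : ℝ × ℝ} (a b : ℝ)
    (h : ∀ q ∈ S, q ≠ p → a * q.1 + b * q.2 < a * p.1 + b * p.2) :
    p ∉ convexHull ℝ (S \ {p}) := by
  intro hp
  have hlin : IsLinearMap ℝ (fun z : ℝ × ℝ => a * z.1 + b * z.2) := by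
    constructor
    · intro x y; simp; ring
    · intro c x; simp; ring
  have hsub : S \ {p} ⊆ {w : ℝ × ℝ | a * w.1 + b * w.2 < a * p.1 + b * p.2} :=
    fun q hq => h q hq.1 hq.2
  have h2 : a * p.1 + b * p.2 < a * p.1 + b * p.2 :=
    convexHull_min hsub (convex_halfSpace_lt hlin _) hp
  exact lt_irrefl _ h2

lemma cup_to_cap {m : ℕ} {f : Fin m → ℝ × ℝ} (hf : IsCupSeq f) :
    IsCapSeq (fun i => neg2 (f i)) := by
  refine ⟨hf.1, fun i j k hij hjk => ?_⟩
  rw [ptSlope_neg2, ptSlope_neg2]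
  have := hf.2 i j k hij hjk
  linarith

lemma neg2_inj : Function.Injective neg2 := by
  intro p q h
  unfold neg2 at h
  have h1 := congrArg Prod.fst h
  have h2 := congrArg Prod.snd h
  simp at h1 h2
  exact Prod.ext h1 h2

lemma cup_interior_sep (k l : ℕ) (F : Fin (k + 2) → ℝ × ℝ) (G : Fin (l + 2) → ℝ × ℝ)
    (hF : IsCupSeq F) (hG : IsCapSeq G)
    (hs : F 0 = G 0) (ht : F (Fin.last (k + 1)) = G (Fin.last (l + 1)))
    (i : Fin (k + 2)) (h0 : 0 < i.1) (h1 : i.1 < k + 1) :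
    ∃ μ : ℝ, ∀ q ∈ Set.range F ∪ Set.range G, q ≠ F i →
      (F i).2 - μ * (F i).1 < q.2 - μ * q.1 := by
  obtain ⟨μ, hμ⟩ := cup_extreme hF i h0 (by omega)
  have hFinj : Function.Injective F := fun a b hab => hF.1.injective (congrArg Prod.fst hab)
  have hne0 : (0 : Fin (k + 2)) ≠ i := by
    intro h; have := congrArg Fin.val h; simp at this; omega
  have hnel : Fin.last (k + 1) ≠ i := by
    intro h; have := congrArg Fin.val h; simp [Fin.last] at this; omega
  have hsF := hμ 0 hne0
  have htF := hμ (Fin.last (k + 1)) hnel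
  refine ⟨μ, ?_⟩
  rintro q (⟨j, rfl⟩ | ⟨m, rfl⟩) hq
  · exact hμ j (fun h => hq (congrArg F h))
  · by_cases hm0 : m.1 = 0
    · have hm : m = 0 := Fin.ext hm0
      rw [hm, ← hs]
      exact hsF
    · by_cases hml : m.1 = l + 1
      · have hm : m = Fin.last (l + 1) := Fin.ext hml
        rw [hm, ← ht]
        exact htF
      · have h0m : (0 : Fin (l + 2)) < m := by rw [Fin.lt_def, Fin.val_zero]; omega
        have h1m : m < Fin.last (l + 1) := by simp [Fin.lt_def]; omega
        have habove := cap_above_chord hG m (by omega) (by omega)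
        have hx1 : (G 0).1 < (G m).1 := hG.1 h0m
        have hx2 : (G m).1 < (G (Fin.last (l + 1))).1 := hG.1 h1m
        have hstx : (G 0).1 < (G (Fin.last (l + 1))).1 := lt_trans hx1 hx2
        have hty : (G (Fin.last (l + 1))).2 =
            (G 0).2 + ptSlope (G 0) (G (Fin.last (l + 1))) * ((G (Fin.last (l + 1))).1 - (G 0).1) := by
          have := slope_mul hstx; linarith
        rw [hs] at hsF
        rw [ht] at htF
        have key := interp_lt (μ := μ) (σ := -ptSlope (G 0) (G (Fin.last (l + 1))))
          (sx := (G 0).1) (tx := (G (Fin.last (l + 1))).1) (x := (G m).1)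
          (sy := -(G 0).2) (ty := -(G (Fin.last (l + 1))).2) (y := -(G m).2)
          (c := -((F i).2 - μ * (F i).1)) hx1 hx2
          (by nlinarith [habove]) (by nlinarith [hty]) (by linarith) (by linarith)
        linarith

theorem cup_cap_common_endpoints_convex (k l : ℕ)
    (F : Fin (k + 2) → ℝ × ℝ) (G : Fin (l + 2) → ℝ × ℝ)
    (hF : IsCupSeq F) (hG : IsCapSeq G)
    (hs : F 0 = G 0) (ht : F (Fin.last (k + 1)) = G (Fin.last (l + 1))) :
    ConvexPos (Set.range F ∪ Set.range G) ∧
      (Set.range F ∪ Set.range G).ncard = k + l + 2 := by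
  set S : Set (ℝ × ℝ) := Set.range F ∪ Set.range G with hS
  have hFinj : Function.Injective F := fun a b hab => hF.1.injective (congrArg Prod.fst hab)
  have hGinj : Function.Injective G := fun a b hab => hG.1.injective (congrArg Prod.fst hab)
  -- x-coordinate bounds
  have hxF : ∀ j : Fin (k + 2), j ≠ 0 → (F 0).1 < (F j).1 := by
    intro j hj
    exact hF.1 (show (0 : Fin (k+2)) < j by
      have : j.1 ≠ 0 := fun h => hj (Fin.ext h); rw [Fin.lt_def, Fin.val_zero]; omega)
  have hxG : ∀ m : Fin (l + 2), m ≠ 0 → (G 0).1 < (G m).1 := by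
    intro m hm
    exact hG.1 (show (0 : Fin (l+2)) < m by
      have : m.1 ≠ 0 := fun h => hm (Fin.ext h); rw [Fin.lt_def, Fin.val_zero]; omega)
  have hxF' : ∀ j : Fin (k + 2), j ≠ Fin.last (k+1) → (F j).1 < (F (Fin.last (k+1))).1 := by
    intro j hj
    exact hF.1 (show j < Fin.last (k+1) by
      have : j.1 ≠ k+1 := fun h => hj (Fin.ext h)
      have := j.isLt; simp [Fin.lt_def]; omega)
  have hxG' : ∀ m : Fin (l + 2), m ≠ Fin.last (l+1) → (G m).1 < (G (Fin.last (l+1))).1 := by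
    intro m hm
    exact hG.1 (show m < Fin.last (l+1) by
      have : m.1 ≠ l+1 := fun h => hm (Fin.ext h)
      have := m.isLt; simp [Fin.lt_def]; omega)
  -- separation for the two endpoints
  have hsep_s : ∀ q ∈ S, q ≠ F 0 → (F 0).1 < q.1 := by
    rintro q (⟨j, rfl⟩ | ⟨m, rfl⟩) hq
    · exact hxF j (fun h => hq (by rw [h]))
    · rw [hs]
      exact hxG m (fun h => hq (by rw [h, ← hs]))
  have hsep_t : ∀ q ∈ S, q ≠ F (Fin.last (k+1)) → q.1 < (F (Fin.last (k+1))).1 := by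
    rintro q (⟨j, rfl⟩ | ⟨m, rfl⟩) hq
    · exact hxF' j (fun h => hq (by rw [h]))
    · rw [ht]
      exact hxG' m (fun h => hq (by rw [h, ← ht]))
  have hnotin_s : F 0 ∉ convexHull ℝ (S \ {F 0}) := by
    apply not_mem_hull_of_sep (-1) 0
    intro q hq hq'
    have := hsep_s q hq hq'
    linarith
  have hnotin_t : F (Fin.last (k+1)) ∉ convexHull ℝ (S \ {F (Fin.last (k+1))}) := by
    apply not_mem_hull_of_sep 1 0
    intro q hq hq'
    have := hsep_t q hq hq'
    linarith
  -- separation for interior cup points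
  have hnotin_cup : ∀ i : Fin (k + 2), 0 < i.1 → i.1 < k + 1 →
      F i ∉ convexHull ℝ (S \ {F i}) := by
    intro i h0 h1
    obtain ⟨μ, hμ⟩ := cup_interior_sep k l F G hF hG hs ht i h0 h1
    apply not_mem_hull_of_sep μ (-1)
    intro q hq hq'
    have := hμ q hq hq'
    linarith
  -- separation for interior cap points, via reflection
  have hnotin_cap : ∀ m : Fin (l + 2), 0 < m.1 → m.1 < l + 1 →
      G m ∉ convexHull ℝ (S \ {G m}) := by
    intro m h0 h1
    obtain ⟨μ, hμ⟩ := cup_interior_sep l k (fun i => neg2 (G i)) (fun i => neg2 (F i))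
      (cap_to_cup hG) (cup_to_cap hF) (by simp [hs]) (by simp [ht]) m h0 h1
    apply not_mem_hull_of_sep μ 1
    intro q hq hq'
    have hqmem : neg2 q ∈ Set.range (fun i => neg2 (G i)) ∪ Set.range (fun i => neg2 (F i)) := by
      rcases hq with ⟨j, rfl⟩ | ⟨j, rfl⟩
      · right; exact ⟨j, rfl⟩
      · left; exact ⟨j, rfl⟩
    have := hμ (neg2 q) hqmem (fun h => hq' (neg2_inj h))
    simp only [neg2] at this
    linarith
  constructor
  · -- convex position
    rintro p (⟨i, rfl⟩ | ⟨m, rfl⟩)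
    · by_cases hi0 : i.1 = 0
      · rw [show i = 0 from Fin.ext hi0]; exact hnotin_s
      · by_cases hil : i.1 = k + 1
        · rw [show i = Fin.last (k+1) from Fin.ext hil]; exact hnotin_t
        · exact hnotin_cup i (by omega) (by omega)
    · by_cases hm0 : m.1 = 0
      · rw [show m = 0 from Fin.ext hm0, ← hs]; exact hnotin_s
      · by_cases hml : m.1 = l + 1
        · rw [show m = Fin.last (l+1) from Fin.ext hml, ← ht]; exact hnotin_t
        · exact hnotin_cap m (by omega) (by omega)
  · -- cardinality
    have hinter : Set.range F ∩ Set.range G = {F 0, F (Fin.last (k+1))} := by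
      ext p
      constructor
      · rintro ⟨⟨i, rfl⟩, m, hm⟩
        by_cases hi0 : i.1 = 0
        · rw [show i = 0 from Fin.ext hi0]; simp
        · by_cases hil : i.1 = k + 1
          · rw [show i = Fin.last (k+1) from Fin.ext hil]; simp
          · exfalso
            have hbelow := cup_below_chord hF i (by omega) (by omega)
            have hxs : (F 0).1 < (F i).1 := hxF i (fun h => hi0 (by simp [h]))
            have hxt : (F i).1 < (F (Fin.last (k+1))).1 := hxF' i
              (fun h => hil (by simp [h]))
            have hm0 : m.1 ≠ 0 := by
              intro h
              rw [show m = 0 from Fin.ext h, ← hs] at hm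
              have := congrArg Prod.fst hm
              linarith
            have hml : m.1 ≠ l + 1 := by
              intro h
              rw [show m = Fin.last (l+1) from Fin.ext h, ← ht] at hm
              have := congrArg Prod.fst hm
              linarith
            have habove := cap_above_chord hG m (by omega)
              (by have := m.isLt; omega)
            rw [← hs, ← ht, hm] at habove
            linarith
      · rintro (rfl | rfl)
        · exact ⟨⟨0, rfl⟩, ⟨0, hs.symm⟩⟩
        · exact ⟨⟨Fin.last (k+1), rfl⟩, ⟨Fin.last (l+1), ht.symm⟩⟩
    have hstne : F 0 ≠ F (Fin.last (k+1)) := by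
      intro h
      have := hxF (Fin.last (k+1)) (by intro h'; have := congrArg Fin.val h'; simp [Fin.last] at this)
      rw [← h] at this
      exact lt_irrefl _ this
    have hcF : (Set.range F).ncard = k + 2 := by
      rw [← Set.image_univ, Set.ncard_image_of_injective _ hFinj, Set.ncard_univ]
      simp
    have hcG : (Set.range G).ncard = l + 2 := by
      rw [← Set.image_univ, Set.ncard_image_of_injective _ hGinj, Set.ncard_univ]
      simp
    have hci : (Set.range F ∩ Set.range G).ncard = 2 := by
      rw [hinter]
      exact Set.ncard_pair hstne
    have := Set.ncard_union_add_ncard_inter (Set.range F) (Set.range G)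
      (Set.finite_range F) (Set.finite_range G)
    rw [hS]
    omega
end

section
/- Let C₋ = p_1, ..., p_k be a cup and C₊ = q_1, ..., q_ℓ be a cap (k, ℓ ≥ 2), such that for every 1 ≤ i < j ≤ k the line through p_i, p_j lies strictly below all points of C₊, and for every 1 ≤ i < j ≤ ℓ the line through q_i, q_j lies strictly above all points of C₋. Then the k+ℓ points p_1, ..., p_k, q_ℓ, ..., q_1 are in convex position. -/
/-- The `y`-coordinate at abscissa `x` of the line through `p` and `q`. -/
noncomputable def lineY (p q : ℝ × ℝ) (x : ℝ) : ℝ :=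
  p.2 + (q.2 - p.2) / (q.1 - p.1) * (x - p.1)

namespace CupCapAux

def det3 (a b c : ℝ × ℝ) : ℝ := (b.1 - a.1) * (c.2 - a.2) - (b.2 - a.2) * (c.1 - a.1)

lemma lineY_self (p q : ℝ × ℝ) : lineY p q p.1 = p.2 := by simp [lineY]

lemma lineY_snd (p q : ℝ × ℝ) (h : p.1 ≠ q.1) : lineY p q q.1 = q.2 := by
  have h' : q.1 - p.1 ≠ 0 := sub_ne_zero.mpr (Ne.symm h)
  unfold lineY
  field_simp
  ring

lemma det_pos_above_right {a b c : ℝ × ℝ} (h1 : a.1 < b.1) (h : lineY a b c.1 < c.2) :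
    0 < det3 a b c := by
  have hd : (0:ℝ) < b.1 - a.1 := by linarith
  unfold lineY at h
  rw [div_mul_eq_mul_div, ← lt_sub_iff_add_lt', div_lt_iff₀ hd] at h
  unfold det3; nlinarith [h]

lemma det_pos_above_left {a b c : ℝ × ℝ} (h2 : b.1 < c.1) (h : lineY b c a.1 < a.2) :
    0 < det3 a b c := by
  have hd : (0:ℝ) < c.1 - b.1 := by linarith
  unfold lineY at h
  rw [div_mul_eq_mul_div, ← lt_sub_iff_add_lt', div_lt_iff₀ hd] at h
  unfold det3; nlinarith [h]

lemma det_pos_below_mid {a b c : ℝ × ℝ} (h2 : a.1 < c.1) (h : b.2 < lineY a c b.1) :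
    0 < det3 a b c := by
  have hd : (0:ℝ) < c.1 - a.1 := by linarith
  unfold lineY at h
  rw [div_mul_eq_mul_div, ← sub_lt_iff_lt_add', lt_div_iff₀ hd] at h
  unfold det3; nlinarith [h]

lemma det_neg_below_right {a b c : ℝ × ℝ} (h1 : a.1 < b.1) (h : c.2 < lineY a b c.1) :
    det3 a b c < 0 := by
  have hd : (0:ℝ) < b.1 - a.1 := by linarith
  unfold lineY at h
  rw [div_mul_eq_mul_div, ← sub_lt_iff_lt_add', lt_div_iff₀ hd] at h
  unfold det3; nlinarith [h]

lemma det_neg_below_left {a b c : ℝ × ℝ} (h2 : b.1 < c.1) (h : a.2 < lineY b c a.1) :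
    det3 a b c < 0 := by
  have hd : (0:ℝ) < c.1 - b.1 := by linarith
  unfold lineY at h
  rw [div_mul_eq_mul_div, ← sub_lt_iff_lt_add', lt_div_iff₀ hd] at h
  unfold det3; nlinarith [h]

lemma det_neg_above_mid {a b c : ℝ × ℝ} (h2 : a.1 < c.1) (h : lineY a c b.1 < b.2) :
    det3 a b c < 0 := by
  have hd : (0:ℝ) < c.1 - a.1 := by linarith
  unfold lineY at h
  rw [div_mul_eq_mul_div, ← lt_sub_iff_add_lt', div_lt_iff₀ hd] at h
  unfold det3; nlinarith [h]

lemma slope_lt_of_det_pos {a b c : ℝ × ℝ} (h1 : a.1 < b.1) (h2 : b.1 < c.1)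
    (h : 0 < det3 a b c) : ptSlope a b < ptSlope b c := by
  have hd1 : (0:ℝ) < b.1 - a.1 := by linarith
  have hd2 : (0:ℝ) < c.1 - b.1 := by linarith
  unfold ptSlope
  rw [div_lt_div_iff₀ hd1 hd2]
  unfold det3 at h; nlinarith [h]

lemma slope_lt_of_det_neg {a b c : ℝ × ℝ} (h1 : a.1 < b.1) (h2 : b.1 < c.1)
    (h : det3 a b c < 0) : ptSlope b c < ptSlope a b := by
  have hd1 : (0:ℝ) < b.1 - a.1 := by linarith
  have hd2 : (0:ℝ) < c.1 - b.1 := by linarith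
  unfold ptSlope
  rw [div_lt_div_iff₀ hd2 hd1]
  unfold det3 at h; nlinarith [h]

lemma exists_sep (A B : Finset ℝ) (h : ∀ a ∈ A, ∀ b ∈ B, a < b) :
    ∃ s : ℝ, (∀ a ∈ A, a < s) ∧ (∀ b ∈ B, s < b) := by
  rcases A.eq_empty_or_nonempty with hA | hA
  · rcases B.eq_empty_or_nonempty with hB | hB
    · exact ⟨0, by simp [hA], by simp [hB]⟩
    · exact ⟨B.min' hB - 1, by simp [hA], fun b hb => by linarith [B.min'_le b hb]⟩
  · rcases B.eq_empty_or_nonempty with hB | hB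
    · exact ⟨A.max' hA + 1, fun a ha => by linarith [A.le_max' a ha], by simp [hB]⟩
    · refine ⟨(A.max' hA + B.min' hB) / 2, fun a ha => ?_, fun b hb => ?_⟩
      · have h1 := A.le_max' a ha
        have h2 := h _ (A.max'_mem hA) _ (B.min'_mem hB)
        linarith
      · have h1 := B.min'_le b hb
        have h2 := h _ (A.max'_mem hA) _ (B.min'_mem hB)
        linarith

lemma vertex_up (T : Set (ℝ × ℝ)) (hT : T.Finite) (p : ℝ × ℝ)
    (hx : ∀ q ∈ T, q.1 = p.1 → p.2 < q.2)
    (hs : ∀ q ∈ T, ∀ r ∈ T, q.1 < p.1 → p.1 < r.1 → ptSlope q p < ptSlope p r) :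
    p ∉ convexHull ℝ T := by
  classical
  obtain ⟨s, hA, hB⟩ := exists_sep
      ((hT.toFinset.filter (fun q => q.1 < p.1)).image (fun q => ptSlope q p))
      ((hT.toFinset.filter (fun q => p.1 < q.1)).image (fun q => ptSlope p q))
      (by
        intro x hx' y hy'
        simp only [Finset.mem_image, Finset.mem_filter, Set.Finite.mem_toFinset] at hx' hy'
        obtain ⟨q, ⟨hqT, hq⟩, rfl⟩ := hx'
        obtain ⟨r, ⟨hrT, hr⟩, rfl⟩ := hy'
        exact hs q hqT r hrT hq hr)
  intro hp
  have hlin : IsLinearMap ℝ (fun w : ℝ × ℝ => w.2 - s * w.1) :=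
    ⟨fun a b => by simp only [Prod.fst_add, Prod.snd_add]; ring,
     fun c a => by simp only [Prod.smul_fst, Prod.smul_snd, smul_eq_mul]; ring⟩
  have hsub : T ⊆ {w : ℝ × ℝ | p.2 - s * p.1 < w.2 - s * w.1} := by
    intro q hq
    simp only [Set.mem_setOf_eq]
    rcases lt_trichotomy q.1 p.1 with h | h | h
    · have h1 : ptSlope q p < s := hA _ (Finset.mem_image_of_mem _
        (Finset.mem_filter.mpr ⟨hT.mem_toFinset.mpr hq, h⟩))
      rw [ptSlope, div_lt_iff₀ (by linarith : (0:ℝ) < p.1 - q.1)] at h1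
      nlinarith [h1]
    · have h2 := hx q hq h
      rw [h]; linarith
    · have h1 : s < ptSlope p q := hB _ (Finset.mem_image_of_mem _
        (Finset.mem_filter.mpr ⟨hT.mem_toFinset.mpr hq, h⟩))
      rw [ptSlope, lt_div_iff₀ (by linarith : (0:ℝ) < q.1 - p.1)] at h1
      nlinarith [h1]
  have hmem := convexHull_min hsub (convex_halfSpace_gt hlin _) hp
  simp at hmem

lemma vertex_down (T : Set (ℝ × ℝ)) (hT : T.Finite) (p : ℝ × ℝ)
    (hx : ∀ q ∈ T, q.1 = p.1 → q.2 < p.2)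
    (hs : ∀ q ∈ T, ∀ r ∈ T, q.1 < p.1 → p.1 < r.1 → ptSlope p r < ptSlope q p) :
    p ∉ convexHull ℝ T := by
  classical
  obtain ⟨s, hA, hB⟩ := exists_sep
      ((hT.toFinset.filter (fun q => p.1 < q.1)).image (fun q => ptSlope p q))
      ((hT.toFinset.filter (fun q => q.1 < p.1)).image (fun q => ptSlope q p))
      (by
        intro x hx' y hy'
        simp only [Finset.mem_image, Finset.mem_filter, Set.Finite.mem_toFinset] at hx' hy'
        obtain ⟨r, ⟨hrT, hr⟩, rfl⟩ := hx'
        obtain ⟨q, ⟨hqT, hq⟩, rfl⟩ := hy'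
        exact hs q hqT r hrT hq hr)
  intro hp
  have hlin : IsLinearMap ℝ (fun w : ℝ × ℝ => s * w.1 - w.2) :=
    ⟨fun a b => by simp only [Prod.fst_add, Prod.snd_add]; ring,
     fun c a => by simp only [Prod.smul_fst, Prod.smul_snd, smul_eq_mul]; ring⟩
  have hsub : T ⊆ {w : ℝ × ℝ | s * p.1 - p.2 < s * w.1 - w.2} := by
    intro q hq
    simp only [Set.mem_setOf_eq]
    rcases lt_trichotomy q.1 p.1 with h | h | h
    · have h1 : s < ptSlope q p := hB _ (Finset.mem_image_of_mem _
        (Finset.mem_filter.mpr ⟨hT.mem_toFinset.mpr hq, h⟩))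
      rw [ptSlope, lt_div_iff₀ (by linarith : (0:ℝ) < p.1 - q.1)] at h1
      nlinarith [h1]
    · have h2 := hx q hq h
      rw [h]; linarith
    · have h1 : ptSlope p q < s := hA _ (Finset.mem_image_of_mem _
        (Finset.mem_filter.mpr ⟨hT.mem_toFinset.mpr hq, h⟩))
      rw [ptSlope, div_lt_iff₀ (by linarith : (0:ℝ) < q.1 - p.1)] at h1
      nlinarith [h1]
  have hmem := convexHull_min hsub (convex_halfSpace_gt hlin _) hp
  simp at hmem

end CupCapAux

open CupCapAux

theorem cup_cap_separated_convex (k l : ℕ) (hk : 2 ≤ k) (hl : 2 ≤ l)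
    (f : Fin k → ℝ × ℝ) (g : Fin l → ℝ × ℝ)
    (hf : IsCupSeq f) (hg : IsCapSeq g)
    (hbelow : ∀ i j : Fin k, i < j → ∀ a : Fin l, lineY (f i) (f j) (g a).1 < (g a).2)
    (habove : ∀ i j : Fin l, i < j → ∀ a : Fin k, (f a).2 < lineY (g i) (g j) (f a).1) :
    ConvexPos (Set.range f ∪ Set.range g) ∧
      (Set.range f ∪ Set.range g).ncard = k + l := by
  classical
  have hfx := hf.1
  have hgx := hg.1
  have hfinj : Function.Injective f := fun a b h => hfx.injective (congrArg Prod.fst h)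
  have hginj : Function.Injective g := fun a b h => hgx.injective (congrArg Prod.fst h)
  have key2 : ∀ (a : Fin k) (b : Fin l), (f a).1 = (g b).1 → (f a).2 < (g b).2 := by
    intro a b hxeq
    obtain ⟨j, hj⟩ := Fintype.exists_ne_of_one_lt_card
      (by simpa using (by omega : 1 < l)) b
    rcases hj.lt_or_gt with hjb | hbj
    · have h := habove j b hjb a
      rwa [hxeq, lineY_snd _ _ (ne_of_lt (hgx hjb))] at h
    · have h := habove b j hbj a
      rwa [hxeq, lineY_self] at h
  have hdisj : ∀ (a : Fin k) (c : Fin l), f a ≠ g c := by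
    intro a c h
    have h2 := key2 a c (congrArg Prod.fst h)
    rw [h] at h2
    exact lt_irrefl _ h2
  constructor
  · intro p hp
    have hTfin : ((Set.range f ∪ Set.range g) \ {p}).Finite :=
      ((Set.finite_range f).union (Set.finite_range g)).diff
    rcases hp with ⟨a, rfl⟩ | ⟨b, rfl⟩
    · apply vertex_up _ hTfin
      · rintro q ⟨hqS, hqne⟩ hxq
        rcases hqS with ⟨i, rfl⟩ | ⟨c, rfl⟩
        · cases hfx.injective hxq
          simp at hqne
        · exact key2 a c hxq.symm
      · rintro q ⟨hqS, -⟩ r ⟨hrS, -⟩ hq hr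
        rcases hqS with ⟨i, rfl⟩ | ⟨c, rfl⟩ <;> rcases hrS with ⟨j, rfl⟩ | ⟨c', rfl⟩
        · exact hf.2 i a j (hfx.lt_iff_lt.mp hq) (hfx.lt_iff_lt.mp hr)
        · exact slope_lt_of_det_pos hq hr
            (det_pos_above_right hq (hbelow i a (hfx.lt_iff_lt.mp hq) c'))
        · exact slope_lt_of_det_pos hq hr
            (det_pos_above_left hr (hbelow a j (hfx.lt_iff_lt.mp hr) c))
        · exact slope_lt_of_det_pos hq hr
            (det_pos_below_mid (lt_trans hq hr)
              (habove c c' (hgx.lt_iff_lt.mp (lt_trans hq hr)) a))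
    · apply vertex_down _ hTfin
      · rintro q ⟨hqS, hqne⟩ hxq
        rcases hqS with ⟨c, rfl⟩ | ⟨i, rfl⟩
        · exact key2 c b hxq
        · cases hgx.injective hxq
          simp at hqne
      · rintro q ⟨hqS, -⟩ r ⟨hrS, -⟩ hq hr
        rcases hqS with ⟨c, rfl⟩ | ⟨i, rfl⟩ <;> rcases hrS with ⟨c', rfl⟩ | ⟨j, rfl⟩
        · exact slope_lt_of_det_neg hq hr
            (det_neg_above_mid (lt_trans hq hr)
              (hbelow c c' (hfx.lt_iff_lt.mp (lt_trans hq hr)) b))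
        · exact slope_lt_of_det_neg hq hr
            (det_neg_below_left hr (habove b j (hgx.lt_iff_lt.mp hr) c))
        · exact slope_lt_of_det_neg hq hr
            (det_neg_below_right hq (habove i b (hgx.lt_iff_lt.mp hq) c'))
        · exact hg.2 i b j (hgx.lt_iff_lt.mp hq) (hgx.lt_iff_lt.mp hr)
  · have hdisjset : Disjoint (Set.range f) (Set.range g) := by
      rw [Set.disjoint_left]
      rintro p ⟨a, rfl⟩ ⟨c, hc⟩
      exact hdisj a c hc.symm
    rw [Set.ncard_union_eq hdisjset (Set.finite_range f) (Set.finite_range g),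
        ← Set.image_univ, ← Set.image_univ,
        Set.ncard_image_of_injective _ hfinj, Set.ncard_image_of_injective _ hginj,
        Set.ncard_univ, Set.ncard_univ, Nat.card_eq_fintype_card, Nat.card_eq_fintype_card,
        Fintype.card_fin, Fintype.card_fin]
end
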